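/- arXiv:1705.04212 — 13 statements merged into one kernel-verified Lean document; each statement's English description precedes it below -/
import Mathlib

section
/- Domination lemma for dominating bundles: in any execution of a pixep satisfying requirements (R1), (R2), (R3), no agent can afford any bundle that dominates their allocated bundle. -/
open Finset

lemma seq_const_aux {m n : ℕ} (seq : Fin m → Fin n) (a : Fin m)
    (d : ℕ) : ∀ (b : Fin m), b.val = a.val + d →
    (∀ (j : ℕ) (hj : j + 1 < m), a.val ≤ j → j + 1 ≤ b.val →
      seq ⟨j, Nat.lt_of_succ_lt hj⟩ = seq ⟨j + 1, hj⟩) →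
    seq a = seq b := by
  induction d with
  | zero => intro b hb _; congr 1; exact Fin.ext hb.symm
  | succ d ih =>
      intro b hb h
      have hb' : a.val + d < m := by omega
      have ih' := ih ⟨a.val + d, hb'⟩ rfl
        (fun j hj h1 h2 => h j hj h1 (by simp only [] at h2; omega))
      have hlast := h (a.val + d) (by omega) (by omega) (by omega)
      rw [ih']
      have e2 : b = ⟨a.val + d + 1, by omega⟩ := Fin.ext (show b.val = a.val + d + 1 by omega)
      rw [e2]; exact hlast

lemma price_strict {m n : ℕ} (seq : Fin m → Fin n) (price : Fin m → ℝ)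
    (R2a : ∀ k l : Fin m, k ≤ l → price l ≤ price k)
    (R2b : ∀ (k : ℕ) (h : k + 1 < m),
      seq ⟨k, Nat.lt_of_succ_lt h⟩ ≠ seq ⟨k + 1, h⟩ →
      price ⟨k + 1, h⟩ < price ⟨k, Nat.lt_of_succ_lt h⟩)
    (a b : Fin m) (hab : a < b) (hne : seq a ≠ seq b) :
    price b < price a := by
  by_cases hall : ∀ (j : ℕ) (hj : j + 1 < m), a.val ≤ j → j + 1 ≤ b.val →
      seq ⟨j, Nat.lt_of_succ_lt hj⟩ = seq ⟨j + 1, hj⟩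
  · exact absurd (seq_const_aux seq a (b.val - a.val) b (by omega) hall) hne
  · push_neg at hall
    obtain ⟨j, hj, h1, h2, h3⟩ := hall
    have s1 : price b ≤ price ⟨j + 1, hj⟩ := R2a _ _ (by simp [Fin.le_def]; omega)
    have s2 : price ⟨j, Nat.lt_of_succ_lt hj⟩ ≤ price a := R2a _ _ (by simp [Fin.le_def]; omega)
    have := R2b j hj h3
    linarith

/-- **Domination lemma for dominating bundles.**
A pixep over `m` positions assigns to each position an agent (`seq`) and a price
(`price`).  Items are identified with positions via the execution.  Agent `i`'s
allocated bundle is the set of positions where `i` picks.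
(R1): the prices at agent `i`'s positions sum to the income `t i`.
(R2): prices are weakly decreasing, and strictly decreasing whenever two
consecutive positions belong to different agents.
(R3): the last price strictly exceeds the income of any agent not in the sequence.
If a bundle `Y` dominates agent `i`'s bundle (i.e. `Y ≠ Xᵢ` and there is an
injection `f : Xᵢ → Y` with `f k` weakly earlier than `k`), then agent `i`
cannot afford `Y`: its total price exceeds `t i`. -/
theorem cannot_afford_dominating_bundle
    (m n : ℕ) (hm : 0 < m)
    (seq : Fin m → Fin n) (price : Fin m → ℝ) (t : Fin n → ℝ)
    (hppos : ∀ k, 0 < price k)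
    -- (R1)
    (R1 : ∀ i : Fin n, (∃ k, seq k = i) →
      ∑ k ∈ Finset.univ.filter (fun k => seq k = i), price k = t i)
    -- (R2)
    (R2a : ∀ k l : Fin m, k ≤ l → price l ≤ price k)
    (R2b : ∀ (k : ℕ) (h : k + 1 < m),
      seq ⟨k, Nat.lt_of_succ_lt h⟩ ≠ seq ⟨k + 1, h⟩ →
      price ⟨k + 1, h⟩ < price ⟨k, Nat.lt_of_succ_lt h⟩)
    -- (R3)
    (R3 : ∀ i : Fin n, (∀ k, seq k ≠ i) → t i < price ⟨m - 1, by omega⟩)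
    (i : Fin n) (Y : Finset (Fin m))
    (hY : Y ≠ Finset.univ.filter (fun k => seq k = i))
    (f : Fin m → Fin m)
    (hinj : Set.InjOn f ↑(Finset.univ.filter (fun k => seq k = i)))
    (hfY : ∀ k ∈ Finset.univ.filter (fun k => seq k = i), f k ∈ Y)
    (hfe : ∀ k ∈ Finset.univ.filter (fun k => seq k = i), f k ≤ k) :
    t i < ∑ k ∈ Y, price k := by
  set X := Finset.univ.filter (fun k => seq k = i) with hX
  by_cases hXe : X = ∅
  · -- agent i does not appear
    have hnoseq : ∀ k, seq k ≠ i := by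
      intro k hk
      have : k ∈ X := by simp [hX, hk]
      simp [hXe] at this
    have hti := R3 i hnoseq
    have hYne : Y.Nonempty := by
      rcases Y.eq_empty_or_nonempty with h | h
      · exact absurd (h.trans hXe.symm) hY
      · exact h
    obtain ⟨y, hy⟩ := hYne
    have h1 : price ⟨m - 1, by omega⟩ ≤ price y :=
      R2a y ⟨m - 1, by omega⟩ (by simp [Fin.le_def]; omega)
    have h2 : price y ≤ ∑ k ∈ Y, price k :=
      Finset.single_le_sum (fun k _ => (hppos k).le) hy
    linarith
  · -- agent i appears
    have hXne : X.Nonempty := Finset.nonempty_of_ne_empty hXe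
    obtain ⟨k0, hk0⟩ := hXne
    have hk0' : seq k0 = i := by simpa [hX] using hk0
    have hti : ∑ k ∈ X, price k = t i := R1 i ⟨k0, hk0'⟩
    have hle : ∀ k ∈ X, price k ≤ price (f k) := fun k hk => R2a (f k) k (hfe k hk)
    have himg : ∑ y ∈ X.image f, price y = ∑ k ∈ X, price (f k) :=
      Finset.sum_image (fun x hx y hy h => hinj (by simpa using hx) (by simpa using hy) h)
    have hsub : X.image f ⊆ Y := by
      intro y hy
      obtain ⟨k, hk, rfl⟩ := Finset.mem_image.mp hy
      exact hfY k hk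
    by_cases hYS : X.image f = Y
    · -- the image equals Y; find y ∈ Y \ X
      have hcard : (X.image f).card = X.card :=
        Finset.card_image_of_injOn hinj
      have hYX : ∃ y ∈ Y, y ∉ X := by
        by_contra h
        push_neg at h
        have hYsub : Y ⊆ X := h
        have : Y = X := Finset.eq_of_subset_of_card_le hYsub (by rw [← hYS, hcard])
        exact hY this
      obtain ⟨y, hyY, hyX⟩ := hYX
      have hyS : y ∈ X.image f := hYS ▸ hyY
      obtain ⟨k, hkX, hfk⟩ := Finset.mem_image.mp hyS
      have hfkX : f k ∉ X := hfk ▸ hyX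
      have hfklt : f k < k := lt_of_le_of_ne (hfe k hkX) (fun h => hfkX (by rw [h]; exact hkX))
      have hseqk : seq k = i := by simpa [hX] using hkX
      have hseqfk : seq (f k) ≠ i := by
        intro h
        exact hfkX (by simp [hX, h])
      have hstrict : price k < price (f k) :=
        price_strict seq price R2a R2b (f k) k hfklt (by rw [hseqk]; exact hseqfk)
      have : ∑ k ∈ X, price k < ∑ k ∈ X, price (f k) :=
        Finset.sum_lt_sum hle ⟨k, hkX, hstrict⟩
      rw [← hti, ← hYS, himg]
      exact this
    · -- proper subset: some y ∈ Y \ image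
      have hproper : ∃ y ∈ Y, y ∉ X.image f := by
        by_contra h
        push_neg at h
        exact hYS (Finset.Subset.antisymm hsub h)
      obtain ⟨y, hyY, hyS⟩ := hproper
      have h1 : ∑ y ∈ X.image f, price y < ∑ k ∈ Y, price k :=
        Finset.sum_lt_sum_of_subset hsub hyY hyS (hppos y) (fun j _ _ => (hppos j).le)
      have h2 : ∑ k ∈ X, price k ≤ ∑ k ∈ X, price (f k) := Finset.sum_le_sum hle
      rw [← hti]
      rw [himg] at h1
      linarith
end

section
/- Domination lemma for dominated bundles: if in a pixep all the turns of agent i form a single contiguous block of positions, then in any subgame-perfect execution agent i strictly prefers their allocated bundle to every bundle dominated by it. -/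
open Finset

lemma card_filter_ico_aux (m a b : ℕ) (hb : b ≤ m) :
    ((Finset.univ.filter fun q : Fin m => a ≤ q.val ∧ q.val < b)).card = b - a := by
  rw [← Nat.card_Ico]
  apply Finset.card_bij (fun q _ => q.val)
  · intro q hq
    simp only [Finset.mem_filter, Finset.mem_univ, true_and] at hq
    simpa [Finset.mem_Ico] using hq
  · intro q1 h1 q2 h2 h
    exact Fin.val_injective h
  · intro j hj
    simp only [Finset.mem_Ico] at hj
    exact ⟨⟨j, lt_of_lt_of_le hj.2 hb⟩, by simp [hj.1, hj.2], rfl⟩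

/-- **Domination lemma for dominated bundles.**
Positions are `Fin m`; `seq p` is the agent picking at position `p`; the
execution is a permutation `σ` sending each position to the item picked there.
Agent `i`'s turns form a contiguous block `[s, s+k)`, and (subgame-perfect
behaviour) agent `i`'s bundle `Xi` is the `≻ᵢ`-best `k`-element subset of the
items remaining at position `s` (the items picked at positions `≥ s`).
Then agent `i` strictly prefers `Xi` to every bundle `Z ≠ Xi` dominated by it,
i.e. every `Z` admitting an injection `f : Z → Xi` with `f z` picked weakly
earlier than `z`.  Here `pref i A B` means agent `i` strictly prefers `A` to
`B`; preferences are transitive, asymmetric, total and monotone. -/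
theorem prefers_bundle_to_dominated_bundles
    (m n : ℕ) (seq : Fin m → Fin n) (σ : Equiv.Perm (Fin m))
    (pref : Fin n → Finset (Fin m) → Finset (Fin m) → Prop)
    (htrans : ∀ i, Transitive (pref i))
    (hasymm : ∀ i A B, pref i A B → ¬ pref i B A)
    (htotal : ∀ i (A B : Finset (Fin m)), A ≠ B → pref i A B ∨ pref i B A)
    (hmono : ∀ i (A B : Finset (Fin m)), A ⊂ B → pref i B A)
    (i : Fin n) (s k : ℕ)
    -- agent i's turns are exactly the contiguous block of positions [s, s+k)
    (hcontig : Finset.univ.filter (fun q => seq q = i) =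
      Finset.univ.filter (fun q : Fin m => s ≤ q.val ∧ q.val < s + k))
    (Xi : Finset (Fin m))
    (hXi : Xi = (Finset.univ.filter (fun q => seq q = i)).image σ)
    -- subgame-perfect behaviour: Xi is i's best k-subset of the remaining items
    (hbest : ∀ S ⊆ (Finset.univ.filter (fun q : Fin m => s ≤ q.val)).image σ,
      S.card = k → S ≠ Xi → pref i Xi S)
    (Z : Finset (Fin m)) (hZ : Z ≠ Xi)
    (f : Fin m → Fin m)
    (hinj : Set.InjOn f ↑Z)
    (hfX : ∀ z ∈ Z, f z ∈ Xi)
    (hfe : ∀ z ∈ Z, (σ.symm (f z) : Fin m) ≤ σ.symm z) :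
    pref i Xi Z := by
  set R := (Finset.univ.filter (fun q : Fin m => s ≤ q.val)).image σ with hR
  have hZR : Z ⊆ R := by
    intro z hz
    have h1 : f z ∈ Xi := hfX z hz
    have h2 : σ.symm (f z) ∈ Finset.univ.filter (fun q => seq q = i) := by
      rw [hXi] at h1
      obtain ⟨q, hq, hq2⟩ := Finset.mem_image.mp h1
      have : σ.symm (f z) = q := by rw [← hq2]; simp
      rwa [this]
    rw [hcontig] at h2
    have hs : s ≤ (σ.symm (f z)).val := (Finset.mem_filter.mp h2).2.1
    have hsz : s ≤ (σ.symm z).val := le_trans hs (hfe z hz)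
    exact Finset.mem_image.mpr ⟨σ.symm z,
      Finset.mem_filter.mpr ⟨Finset.mem_univ _, hsz⟩, σ.apply_symm_apply z⟩
  by_cases hm : m ≤ s + k
  · have hXR : Xi = R := by
      rw [hXi, hcontig, hR]
      congr 1
      ext q
      simp only [Finset.mem_filter, Finset.mem_univ, true_and]
      exact ⟨fun h => h.1, fun h => ⟨h, lt_of_lt_of_le q.isLt hm⟩⟩
    exact hmono i Z Xi (ssubset_of_subset_of_ne (hXR ▸ hZR) hZ)
  · push_neg at hm
    have hcardXi : Xi.card = k := by
      rw [hXi, hcontig, Finset.card_image_of_injective _ σ.injective,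
        card_filter_ico_aux m s (s + k) (le_of_lt hm)]
      omega
    have hcardZ : Z.card ≤ k := by
      have h1 : (Z.image f).card = Z.card := Finset.card_image_of_injOn hinj
      have h2 : Z.image f ⊆ Xi := by
        intro x hx
        obtain ⟨z, hz, rfl⟩ := Finset.mem_image.mp hx
        exact hfX z hz
      calc Z.card = (Z.image f).card := h1.symm
        _ ≤ Xi.card := Finset.card_le_card h2
        _ = k := hcardXi
    have hcardR : k ≤ R.card := by
      rw [hR, Finset.card_image_of_injective _ σ.injective]
      have : (Finset.univ.filter fun q : Fin m => s ≤ q.val) =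
          (Finset.univ.filter fun q : Fin m => s ≤ q.val ∧ q.val < m) := by
        ext q; simp [q.isLt]
      rw [this, card_filter_ico_aux m s m le_rfl]
      omega
    obtain ⟨S, hZS, hSR, hScard⟩ :=
      Finset.exists_subsuperset_card_eq hZR hcardZ hcardR
    by_cases hSXi : S = Xi
    · exact hmono i Z Xi (ssubset_of_subset_of_ne (hSXi ▸ hZS) hZ)
    · have h1 := hbest S hSR hScard hSXi
      rcases eq_or_ne Z S with h | h
      · rwa [h]
      · exact htrans i h1 (hmono i Z S (ssubset_of_subset_of_ne hZS h))
end

section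
/- For 3 items and agents with incomes a > b > c > all other incomes and a > 3b, the pixep AAA with prices a−2b−2ε, b+ε, b+ε (for sufficiently small ε > 0) implements a competitive equilibrium: giving Alice all three items at these prices satisfies both CE conditions for all strict monotone preferences. -/
open Finset

/-- `r A B` means bundle `A` is strictly preferred to bundle `B`.
The preference is transitive, asymmetric, total (strict) and monotone. -/
def StrictMonoPref {m : ℕ} (r : Finset (Fin m) → Finset (Fin m) → Prop) : Prop :=
  (∀ A B C, r A B → r B C → r A C) ∧
  (∀ A B, r A B → ¬ r B A) ∧
  (∀ A B : Finset (Fin m), A ≠ B → r A B ∨ r B A) ∧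
  (∀ A B : Finset (Fin m), A ⊂ B → r B A)

/-- Competitive equilibrium: positive prices, the bundles partition all items,
every agent with a non-empty bundle pays exactly their income, and every agent
either strictly prefers their own bundle to, or cannot afford, any other bundle. -/
def IsCE {m n : ℕ} (t : Fin n → ℝ)
    (pref : Fin n → Finset (Fin m) → Finset (Fin m) → Prop)
    (p : Fin m → ℝ) (X : Fin n → Finset (Fin m)) : Prop :=
  (∀ k, 0 < p k) ∧
  (∀ i j, i ≠ j → Disjoint (X i) (X j)) ∧
  (Finset.univ.biUnion X = Finset.univ) ∧
  (∀ i, X i ≠ ∅ → ∑ k ∈ X i, p k = t i) ∧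
  (∀ i (Y : Finset (Fin m)), Y ≠ X i → pref i (X i) Y ∨ t i < ∑ k ∈ Y, p k)

/-- **Pixep AAA with three items.** Incomes: `t 0 = a` is the largest,
`t 1 = b` the second largest, all incomes positive and `a > 3b`.
Then for sufficiently small `ε > 0`, giving all three items to Alice (agent 0)
at prices `a - 2b - 2ε, b + ε, b + ε` is a competitive equilibrium for all
strict monotone preferences. -/
theorem pixep_AAA_implements_CE (n : ℕ) (t : Fin (n + 2) → ℝ)
    (hpos : ∀ i, 0 < t i)
    (hb : ∀ i, i ≠ 0 → t i ≤ t 1)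
    (hdist : ∀ i, i ≠ 0 → i ≠ 1 → t i < t 1)
    (h3b : t 0 > 3 * t 1) :
    ∃ ε > 0, ∀ pref : Fin (n + 2) → Finset (Fin 3) → Finset (Fin 3) → Prop,
      (∀ i, StrictMonoPref (pref i)) →
      IsCE t pref
        (fun k => if k = 0 then t 0 - 2 * t 1 - 2 * ε else t 1 + ε)
        (fun i => if i = 0 then Finset.univ else ∅) := by
  have hb0 : 0 < t 1 := hpos 1
  refine ⟨(t 0 - 3 * t 1) / 4, by linarith, ?_⟩
  intro pref hpref
  set ε := (t 0 - 3 * t 1) / 4 with hε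
  have hεpos : 0 < ε := by rw [hε]; linarith
  have hp0 : t 1 < t 0 - 2 * t 1 - 2 * ε := by rw [hε]; linarith
  refine ⟨?_, ?_, ?_, ?_, ?_⟩
  · intro k; dsimp only; split <;> linarith
  · intro i j hij; dsimp only
    by_cases h1 : i = 0 <;> by_cases h2 : j = 0 <;> simp_all
  · ext k
    simp only [Finset.mem_biUnion, Finset.mem_univ, iff_true]
    refine ⟨0, ?_, ?_⟩ <;> simp
  · intro i hi
    by_cases h : i = 0
    · subst h
      have h1 : (1 : Fin 3) ≠ 0 := by decide
      have h2 : (2 : Fin 3) ≠ 0 := by decide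
      simp only [reduceIte, Fin.sum_univ_three, if_neg h1, if_neg h2]
      ring
    · simp [h] at hi
  · intro i Y hY
    by_cases h : i = 0
    · subst h
      simp only [if_pos rfl] at hY ⊢
      left
      exact (hpref 0).2.2.2 Y Finset.univ (Finset.ssubset_univ_iff.mpr hY)
    · simp only [if_neg h] at hY ⊢
      right
      have hti : t i ≤ t 1 := hb i h
      obtain ⟨k, hk⟩ := Finset.nonempty_iff_ne_empty.mpr hY
      have hle : (if k = 0 then t 0 - 2 * t 1 - 2 * ε else t 1 + ε) ≤
          ∑ j ∈ Y, (if j = 0 then t 0 - 2 * t 1 - 2 * ε else t 1 + ε) := by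
        apply Finset.single_le_sum (fun j _ => ?_) hk
        split <;> linarith
      have hgt : t 1 < (if k = 0 then t 0 - 2 * t 1 - 2 * ε else t 1 + ε) := by
        split <;> linarith
      linarith
end

section
/- For 3 items and agents with incomes a > b > c > all other incomes and a < b + c, the pixep ABC with prices a, b, c implements a competitive equilibrium: the allocation where Alice picks her favorite item, Bob picks his favorite remaining item, and Carl gets the last item, with prices a, b, c respectively, is a competitive equilibrium for all strict monotone preferences. -/
open Finset

/-!
Price Alice's item at `a`, Bob's at `b` and Carl's at `c`. Of two distinct items at most one is
priced `c`, so every bundle of two or more items costs at least `b + c > a`, and nobody can afford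
it. Any other agent has income below `c` and affords nothing. Among single items, Alice holds her
favourite; Bob can afford only his own item and Carl's, and chose his own; Carl can afford only his
own. The empty bundle loses to every nonempty one by monotonicity.
-/

section Prices

variable {α : Type*} [DecidableEq α] {iA iB iC : α} {a b c : ℝ}

def abcPrice (iA iB : α) (a b c : ℝ) (k : α) : ℝ :=
  if k = iA then a else if k = iB then b else c

@[simp] lemma abcPrice_first : abcPrice iA iB a b c iA = a := if_pos rfl

lemma abcPrice_second (hAB : iA ≠ iB) : abcPrice iA iB a b c iB = b := by
  simp [abcPrice, hAB.symm]

lemma abcPrice_third (hAC : iA ≠ iC) (hBC : iB ≠ iC) : abcPrice iA iB a b c iC = c := by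
  simp [abcPrice, hAC.symm, hBC.symm]

lemma le_abcPrice (hcb : c < b) (hba : b < a) (k : α) : c ≤ abcPrice iA iB a b c k := by
  unfold abcPrice; split_ifs <;> linarith

lemma abcPrice_pos (hc : 0 < c) (hcb : c < b) (hba : b < a) (k : α) : 0 < abcPrice iA iB a b c k :=
  hc.trans_le (le_abcPrice hcb hba k)

lemma le_abcPrice_of_ne (hba : b < a) (hcover : ∀ k, k = iA ∨ k = iB ∨ k = iC) {k : α}
    (hk : k ≠ iC) : b ≤ abcPrice iA iB a b c k := by
  unfold abcPrice
  split_ifs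
  · exact hba.le
  · exact le_rfl
  · rcases hcover k with h | h | h <;> contradiction

lemma add_le_sum_abcPrice (hc : 0 < c) (hcb : c < b) (hba : b < a)
    (hcover : ∀ k, k = iA ∨ k = iB ∨ k = iC) {Y : Finset α} (hY : Y.Nontrivial) :
    b + c ≤ ∑ k ∈ Y, abcPrice iA iB a b c k := by
  obtain ⟨j, hj, k, hk, hjk⟩ := hY
  wlog hjC : j ≠ iC generalizing j k
  · exact this k hk j hj hjk.symm (by rintro rfl; exact hjk (not_not.mp hjC))
  calc b + c ≤ abcPrice iA iB a b c j + abcPrice iA iB a b c k :=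
        add_le_add (le_abcPrice_of_ne hba hcover hjC) (le_abcPrice hcb hba k)
    _ = ∑ i ∈ {j, k}, abcPrice iA iB a b c i := (sum_pair hjk).symm
    _ ≤ ∑ i ∈ Y, abcPrice iA iB a b c i :=
        sum_le_sum_of_subset_of_nonneg (insert_subset hj (singleton_subset_iff.mpr hk))
          fun i _ _ => (abcPrice_pos hc hcb hba i).le

end Prices

lemma fin_three_pairwise_ne_of_insert_eq_univ {a b c : Fin 3}
    (h : ({a, b, c} : Finset (Fin 3)) = univ) : a ≠ b ∧ a ≠ c ∧ b ≠ c := by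
  revert a b c; decide

lemma StrictMonoPref.prefers_or_lt_sum {m : ℕ} {r : Finset (Fin m) → Finset (Fin m) → Prop}
    (hr : StrictMonoPref r) {p : Fin m → ℝ} {w : ℝ} {X Y : Finset (Fin m)} (hYX : Y ≠ X)
    (hpair : ∀ Y : Finset (Fin m), Y.Nontrivial → w < ∑ k ∈ Y, p k)
    (hsingle : ∀ j, {j} ≠ X → r X {j} ∨ w < p j) :
    r X Y ∨ w < ∑ k ∈ Y, p k := by
  rcases Y.eq_empty_or_nonempty with rfl | hY
  · exact .inl (hr.2.2.2 ∅ X (empty_ssubset.mpr (nonempty_iff_ne_empty.mpr hYX.symm)))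
  rcases hY.exists_eq_singleton_or_nontrivial with ⟨j, rfl⟩ | hY
  · simpa using hsingle j hYX
  · exact .inr (hpair Y hY)

section Allocation

variable {ι α : Type*} [DecidableEq ι] {alice bob carl : ι} {iA iB iC : α}

def abcAlloc (alice bob carl : ι) (iA iB iC : α) (i : ι) : Finset α :=
  if i = alice then {iA} else if i = bob then {iB} else if i = carl then {iC} else ∅

@[simp] lemma abcAlloc_first : abcAlloc alice bob carl iA iB iC alice = {iA} := if_pos rfl

lemma abcAlloc_second (hab : alice ≠ bob) : abcAlloc alice bob carl iA iB iC bob = {iB} := by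
  simp [abcAlloc, hab.symm]

lemma abcAlloc_third (hac : alice ≠ carl) (hbc : bob ≠ carl) :
    abcAlloc alice bob carl iA iB iC carl = {iC} := by
  simp [abcAlloc, hac.symm, hbc.symm]

lemma abcAlloc_of_ne {i : ι} (ha : i ≠ alice) (hb : i ≠ bob) (hc : i ≠ carl) :
    abcAlloc alice bob carl iA iB iC i = ∅ := by
  simp [abcAlloc, ha, hb, hc]

lemma abcAlloc_disjoint (hAB : iA ≠ iB) (hAC : iA ≠ iC) (hBC : iB ≠ iC) {i j : ι} (hij : i ≠ j) :
    Disjoint (abcAlloc alice bob carl iA iB iC i) (abcAlloc alice bob carl iA iB iC j) := by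
  unfold abcAlloc
  split_ifs <;> simp_all [hAB.symm, hAC.symm, hBC.symm]

lemma biUnion_abcAlloc [Fintype ι] [Fintype α] [DecidableEq α]
    (hab : alice ≠ bob) (hac : alice ≠ carl) (hbc : bob ≠ carl)
    (hcover : ∀ k, k = iA ∨ k = iB ∨ k = iC) :
    univ.biUnion (abcAlloc alice bob carl iA iB iC) = univ := by
  refine eq_univ_iff_forall.mpr fun k => mem_biUnion.mpr ?_
  rcases hcover k with rfl | rfl | rfl
  · exact ⟨alice, mem_univ _, by simp⟩
  · exact ⟨bob, mem_univ _, by simp [abcAlloc_second hab]⟩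
  · exact ⟨carl, mem_univ _, by simp [abcAlloc_third hac hbc]⟩

lemma sum_abcPrice_abcAlloc [DecidableEq α] {t : ι → ℝ}
    (hab : alice ≠ bob) (hac : alice ≠ carl) (hbc : bob ≠ carl)
    (hAB : iA ≠ iB) (hAC : iA ≠ iC) (hBC : iB ≠ iC) {i : ι}
    (hi : abcAlloc alice bob carl iA iB iC i ≠ ∅) :
    ∑ k ∈ abcAlloc alice bob carl iA iB iC i, abcPrice iA iB (t alice) (t bob) (t carl) k =
      t i := by
  by_cases ha : i = alice
  · subst ha; simp
  by_cases hb : i = bob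
  · subst hb; simp [abcAlloc_second hab, abcPrice_second hAB]
  by_cases hc : i = carl
  · subst hc; simp [abcAlloc_third hac hbc, abcPrice_third hAC hBC]
  exact absurd (abcAlloc_of_ne ha hb hc) hi

end Allocation

lemma abcAlloc_prefers_or_unaffordable {ι : Type*} [DecidableEq ι] {m : ℕ} {t : ι → ℝ}
    {pref : ι → Finset (Fin m) → Finset (Fin m) → Prop} (hpref : ∀ i, StrictMonoPref (pref i))
    {alice bob carl : ι} (hab : alice ≠ bob) (hac : alice ≠ carl) (hbc : bob ≠ carl)
    {iA iB iC : Fin m} (hcover : ∀ k, k = iA ∨ k = iB ∨ k = iC)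
    (hc : 0 < t carl) (hcb : t carl < t bob) (hba : t bob < t alice)
    (hsum : t alice < t bob + t carl)
    (hrest : ∀ i, i ≠ alice → i ≠ bob → i ≠ carl → t i < t carl)
    (hAfav : ∀ j, j ≠ iA → pref alice {iA} {j}) (hBfav : pref bob {iB} {iC})
    (i : ι) (Y : Finset (Fin m)) (hY : Y ≠ abcAlloc alice bob carl iA iB iC i) :
    pref i (abcAlloc alice bob carl iA iB iC i) Y ∨
      t i < ∑ k ∈ Y, abcPrice iA iB (t alice) (t bob) (t carl) k := by
  have hpair : ∀ w ≤ t alice, ∀ Y : Finset (Fin m), Y.Nontrivial →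
      w < ∑ k ∈ Y, abcPrice iA iB (t alice) (t bob) (t carl) k := fun w hw Y hY => by
    linarith [add_le_sum_abcPrice hc hcb hba hcover hY]
  by_cases ha : i = alice
  · subst ha
    rw [abcAlloc_first] at hY ⊢
    exact (hpref i).prefers_or_lt_sum hY (hpair _ le_rfl) fun j hj =>
      .inl (hAfav j fun h => hj (h ▸ rfl))
  by_cases hb : i = bob
  · subst hb
    rw [abcAlloc_second hab] at hY ⊢
    refine (hpref i).prefers_or_lt_sum hY (hpair _ hba.le) fun j hj => ?_
    rcases hcover j with rfl | rfl | rfl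
    · exact .inr (by simpa using hba)
    · exact absurd rfl hj
    · exact .inl hBfav
  by_cases hc' : i = carl
  · subst hc'
    rw [abcAlloc_third hac hbc] at hY ⊢
    exact (hpref i).prefers_or_lt_sum hY (hpair _ (hcb.trans hba).le) fun j hj =>
      .inr (hcb.trans_le (le_abcPrice_of_ne hba hcover fun h => hj (h ▸ rfl)))
  · rw [abcAlloc_of_ne ha hb hc'] at hY ⊢
    have hti := hrest i ha hb hc'
    exact (hpref i).prefers_or_lt_sum hY (hpair _ (by linarith)) fun j _ =>
      .inr (hti.trans_le (le_abcPrice hcb hba j))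

/-- **Pixep ABC with three items.** Incomes: `t 0 = a > t 1 = b > t 2 = c` are
the three largest incomes, all positive, and `a < b + c`.  If Alice (agent 0)
picks her favourite item `iA`, Bob (agent 1) his favourite remaining item `iB`,
and Carl (agent 2) gets the last item `iC`, then this allocation with prices
`a, b, c` is a competitive equilibrium, for all strict monotone preferences. -/
theorem pixep_ABC_implements_CE (n : ℕ) (t : Fin (n + 3) → ℝ)
    (hpos : ∀ i, 0 < t i)
    (hab : t 0 > t 1) (hbc : t 1 > t 2)
    (hrest : ∀ i, i ≠ 0 → i ≠ 1 → i ≠ 2 → t i < t 2)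
    (hsum : t 0 < t 1 + t 2)
    (pref : Fin (n + 3) → Finset (Fin 3) → Finset (Fin 3) → Prop)
    (hpref : ∀ i, StrictMonoPref (pref i))
    (iA iB iC : Fin 3)
    (hdistinct : ({iA, iB, iC} : Finset (Fin 3)) = Finset.univ)
    -- Alice picks her favourite item
    (hAfav : ∀ j : Fin 3, j ≠ iA → pref 0 {iA} {j})
    -- Bob picks his favourite remaining item
    (hBfav : pref 1 {iB} {iC}) :
    IsCE t pref
      (fun k => if k = iA then t 0 else if k = iB then t 1 else t 2)
      (fun i => if i = 0 then {iA} else if i = 1 then {iB}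
        else if i = 2 then {iC} else ∅) := by
  obtain ⟨hAB, hAC, hBC⟩ := fin_three_pairwise_ne_of_insert_eq_univ hdistinct
  have hcover : ∀ k : Fin 3, k = iA ∨ k = iB ∨ k = iC := fun k => by
    simpa [← hdistinct] using mem_univ k
  obtain ⟨h01, h02, h12⟩ :
      (0 : Fin (n + 3)) ≠ 1 ∧ (0 : Fin (n + 3)) ≠ 2 ∧ (1 : Fin (n + 3)) ≠ 2 := by
    simp [Fin.ext_iff, Nat.mod_eq_of_lt (show 2 < n + 3 by omega)]
  exact ⟨abcPrice_pos (hpos 2) hbc hab, fun _ _ => abcAlloc_disjoint hAB hAC hBC,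
    biUnion_abcAlloc h01 h02 h12 hcover, fun _ => sum_abcPrice_abcAlloc h01 h02 h12 hAB hAC hBC,
    abcAlloc_prefers_or_unaffordable hpref h01 h02 h12 hcover (hpos 2) hbc hab hsum hrest
      hAfav hBfav⟩
end

section
/- For 3 items and incomes a > b > c > all other incomes with a > b + c, there exists a subgame-perfect equilibrium of the picking sequence ABA, with prices a−c−ε, b, c+ε for small ε > 0, whose resulting allocation and prices form a competitive equilibrium; in particular Alice can always pick so that her final pair is weakly better than the pair consisting of the two items picked after her first pick. -/
open Finset

lemma triple_univ (i1 i2 i3 : Fin 3) (h12 : i1 ≠ i2) (h13 : i1 ≠ i3) (h23 : i2 ≠ i3) :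
    ({i1, i2, i3} : Finset (Fin 3)) = Finset.univ := by
  apply Finset.eq_univ_of_card
  rw [Finset.card_insert_of_notMem (by simp [h12, h13]),
    Finset.card_insert_of_notMem (by simp [h23]), Finset.card_singleton]
  simp

lemma ce_aux (n : ℕ) (t : Fin (n + 3) → ℝ) (ε : ℝ)
    (hb : 0 < t 1) (hc : 0 < t 2)
    (hle : ∀ i : Fin (n + 3), i ≠ 0 → i ≠ 1 → t i ≤ t 2)
    (hε : 0 < ε) (hε1 : ε < t 1 - t 2) (hε2 : ε < t 0 - t 1 - t 2)
    (pref : Fin (n + 3) → Finset (Fin 3) → Finset (Fin 3) → Prop)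
    (hpref : ∀ i, StrictMonoPref (pref i))
    (i1 i2 i3 : Fin 3) (h12 : i1 ≠ i2) (h13 : i1 ≠ i3) (h23 : i2 ≠ i3)
    (hB : pref 1 {i2} {i3}) (hA : pref 0 {i1, i3} {i2, i3}) :
    IsCE t pref
      (fun k => if k = i1 then t 0 - t 2 - ε else if k = i2 then t 1 else t 2 + ε)
      (fun i => if i = 0 then {i1, i3} else if i = 1 then {i2} else ∅) := by
  obtain ⟨htr0, has0, hto0, hmo0⟩ := hpref 0
  obtain ⟨htr1, has1, hto1, hmo1⟩ := hpref 1
  set p : Fin 3 → ℝ :=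
    fun k => if k = i1 then t 0 - t 2 - ε else if k = i2 then t 1 else t 2 + ε with hp
  set X : Fin (n + 3) → Finset (Fin 3) :=
    fun i => if i = 0 then {i1, i3} else if i = 1 then {i2} else ∅ with hX
  have huniv := triple_univ i1 i2 i3 h12 h13 h23
  have hk3 : ∀ k : Fin 3, k = i1 ∨ k = i2 ∨ k = i3 := by
    intro k
    have : k ∈ ({i1, i2, i3} : Finset (Fin 3)) := huniv ▸ Finset.mem_univ k
    simpa using this
  have hp1 : p i1 = t 0 - t 2 - ε := by simp [hp]
  have hp2 : p i2 = t 1 := by simp [hp, h12.symm]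
  have hp3 : p i3 = t 2 + ε := by simp [hp, h13.symm, h23.symm]
  have hplow : ∀ k, t 2 < p k := by
    intro k
    rcases hk3 k with h | h | h <;> subst h <;>
      first
      | (rw [hp1]; linarith)
      | (rw [hp2]; linarith)
      | (rw [hp3]; linarith)
  have hppos : ∀ k, 0 < p k := fun k => lt_trans hc (hplow k)
  have hsub : ∀ (S Y : Finset (Fin 3)), S ⊆ Y → ∑ k ∈ S, p k ≤ ∑ k ∈ Y, p k :=
    fun S Y h => Finset.sum_le_sum_of_subset_of_nonneg h (fun k _ _ => (hppos k).le)
  have hd : Disjoint ({i1, i3} : Finset (Fin 3)) {i2} := by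
    rw [Finset.disjoint_singleton_right]
    simp only [Finset.mem_insert, Finset.mem_singleton]
    rintro (h | h)
    · exact h12 h.symm
    · exact h23 h
  have h10 : (1 : Fin (n + 3)) ≠ 0 := by
    simp [Fin.ext_iff]
  have hX0 : X 0 = {i1, i3} := by simp [hX]
  have hX1 : X 1 = {i2} := by simp [hX, h10]
  have hXo : ∀ a : Fin (n + 3), a ≠ 0 → a ≠ 1 → X a = ∅ := by
    intro a h0 h1; simp [hX, h0, h1]
  refine ⟨hppos, ?_, ?_, ?_, ?_⟩
  · -- disjointness
    intro i j hij
    rcases eq_or_ne i 0 with hi0 | hi0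
    · rcases eq_or_ne j 1 with hj1 | hj1
      · rw [hi0, hj1, hX0, hX1]; exact hd
      · rw [hi0] at hij
        rw [hXo j (Ne.symm hij) hj1]; exact Finset.disjoint_empty_right _
    · rcases eq_or_ne i 1 with hi1 | hi1
      · rcases eq_or_ne j 0 with hj0 | hj0
        · rw [hi1, hj0, hX1, hX0]; exact hd.symm
        · rw [hi1] at hij
          rw [hXo j hj0 (Ne.symm hij)]; exact Finset.disjoint_empty_right _
      · rw [hXo i hi0 hi1]; exact Finset.disjoint_empty_left _
  · -- biUnion = univ
    rw [Finset.eq_univ_iff_forall]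
    intro k
    rw [Finset.mem_biUnion]
    rcases hk3 k with h | h | h
    · exact ⟨0, Finset.mem_univ _, by rw [hX0]; simp [h]⟩
    · exact ⟨1, Finset.mem_univ _, by rw [hX1]; simp [h]⟩
    · exact ⟨0, Finset.mem_univ _, by rw [hX0]; simp [h]⟩
  · -- budgets
    intro i hne
    by_cases hi0 : i = 0
    · subst hi0
      rw [hX0, Finset.sum_pair h13, hp1, hp3]
      ring
    · by_cases hi1 : i = 1
      · subst hi1
        rw [hX1, Finset.sum_singleton, hp2]
      · exact absurd (hXo i hi0 hi1) hne
  · -- optimality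
    intro i Y hY
    by_cases hi0 : i = 0
    · subst hi0
      rw [hX0] at hY ⊢
      by_cases h2Y : i2 ∈ Y
      · by_cases h1Y : i1 ∈ Y
        · right
          have hs : ({i1, i2} : Finset (Fin 3)) ⊆ Y := by
            intro k hk
            simp only [Finset.mem_insert, Finset.mem_singleton] at hk
            rcases hk with h | h <;> subst h <;> assumption
          have := hsub _ _ hs
          rw [Finset.sum_pair h12, hp1, hp2] at this
          linarith
        · left
          by_cases h3Y : i3 ∈ Y
          · have hYeq : Y = {i2, i3} := by
              ext k
              simp only [Finset.mem_insert, Finset.mem_singleton]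
              constructor
              · intro hk
                rcases hk3 k with h | h | h
                · exact absurd (h ▸ hk) h1Y
                · exact Or.inl h
                · exact Or.inr h
              · rintro (h | h) <;> subst h <;> assumption
            rw [hYeq]; exact hA
          · have hYeq : Y = {i2} := by
              ext k
              simp only [Finset.mem_singleton]
              constructor
              · intro hk
                rcases hk3 k with h | h | h
                · exact absurd (h ▸ hk) h1Y
                · exact h
                · exact absurd (h ▸ hk) h3Y
              · rintro h; subst h; assumption
            rw [hYeq]
            exact htr0 _ _ _ hA (hmo0 _ _ ⟨by simp, by
              intro hss
              have : i3 ∈ ({i2} : Finset (Fin 3)) := hss (by simp)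
              simp at this
              exact h23 this.symm⟩)
      · left
        apply hmo0
        constructor
        · intro k hk
          rcases hk3 k with h | h | h
          · simp [h]
          · exact absurd (h ▸ hk) h2Y
          · simp [h]
        · intro hss
          exact hY (Finset.Subset.antisymm (by
            intro k hk
            rcases hk3 k with h | h | h
            · simp [h]
            · exact absurd (h ▸ hk) h2Y
            · simp [h]) hss)
    · by_cases hi1 : i = 1
      · subst hi1
        rw [hX1] at hY ⊢
        by_cases h1Y : i1 ∈ Y
        · right
          have := hsub {i1} Y (by simpa using h1Y)
          rw [Finset.sum_singleton, hp1] at this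
          linarith
        · by_cases h2Y : i2 ∈ Y
          · right
            by_cases h3Y : i3 ∈ Y
            · have hs : ({i2, i3} : Finset (Fin 3)) ⊆ Y := by
                intro k hk
                simp only [Finset.mem_insert, Finset.mem_singleton] at hk
                rcases hk with h | h <;> subst h <;> assumption
              have := hsub _ _ hs
              rw [Finset.sum_pair h23, hp2, hp3] at this
              linarith
            · exfalso
              apply hY
              ext k
              simp only [Finset.mem_singleton]
              constructor
              · intro hk
                rcases hk3 k with h | h | h
                · exact absurd (h ▸ hk) h1Y
                · exact h
                · exact absurd (h ▸ hk) h3Y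
              · rintro h; subst h; assumption
          · left
            by_cases h3Y : i3 ∈ Y
            · have hYeq : Y = {i3} := by
                ext k
                simp only [Finset.mem_singleton]
                constructor
                · intro hk
                  rcases hk3 k with h | h | h
                  · exact absurd (h ▸ hk) h1Y
                  · exact absurd (h ▸ hk) h2Y
                  · exact h
                · rintro h; subst h; assumption
              rw [hYeq]; exact hB
            · have hYeq : Y = ∅ := by
                ext k
                simp only [Finset.notMem_empty, iff_false]
                intro hk
                rcases hk3 k with h | h | h
                · exact h1Y (h ▸ hk)
                · exact h2Y (h ▸ hk)
                · exact h3Y (h ▸ hk)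
              rw [hYeq]
              exact hmo1 _ _ (by simp)
      · right
        rw [hXo i hi0 hi1] at hY
        obtain ⟨k, hk⟩ := Finset.nonempty_iff_ne_empty.mpr hY
        have h1 := hsub {k} Y (by simpa using hk)
        rw [Finset.sum_singleton] at h1
        have h2 := hplow k
        have h3 := hle i hi0 hi1
        linarith
/-- **Pixep ABA with three items.** Incomes: `t 0 = a > t 1 = b > t 2 = c` are
the three largest incomes, all positive, and `a > b + c`.  For sufficiently
small `ε > 0` and any strict monotone preferences, there is a subgame-perfect
play of the sequence ABA — Alice picks `i1`, Bob picks his best remaining item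
`i2`, Alice gets the last item `i3` — whose allocation with prices
`a - c - ε, b, c + ε` is a competitive equilibrium; moreover Alice's final pair
`{i1, i3}` is better for her than the pair `{i2, i3}` of the two items picked
after her first pick. -/
theorem pixep_ABA_implements_CE (n : ℕ) (t : Fin (n + 3) → ℝ)
    (hpos : ∀ i, 0 < t i)
    (hab : t 0 > t 1) (hbc : t 1 > t 2)
    (hrest : ∀ i, i ≠ 0 → i ≠ 1 → i ≠ 2 → t i < t 2)
    (hsum : t 0 > t 1 + t 2) :
    ∃ ε > 0, ∀ pref : Fin (n + 3) → Finset (Fin 3) → Finset (Fin 3) → Prop,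
      (∀ i, StrictMonoPref (pref i)) →
      ∃ i1 i2 i3 : Fin 3,
        ({i1, i2, i3} : Finset (Fin 3)) = Finset.univ ∧
        -- Bob picks his best item among the two remaining after Alice's first pick
        pref 1 {i2} {i3} ∧
        -- Alice's final pair is better than the pair of the two later-picked items
        pref 0 {i1, i3} {i2, i3} ∧
        IsCE t pref
          (fun k => if k = i1 then t 0 - t 2 - ε else if k = i2 then t 1 else t 2 + ε)
          (fun i => if i = 0 then {i1, i3} else if i = 1 then {i2} else ∅) := by
  have hb : 0 < t 1 := hpos 1
  have hc : 0 < t 2 := hpos 2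
  have hm : 0 < min (t 1 - t 2) (t 0 - t 1 - t 2) :=
    lt_min (by linarith) (by linarith)
  have hml := min_le_left (t 1 - t 2) (t 0 - t 1 - t 2)
  have hmr := min_le_right (t 1 - t 2) (t 0 - t 1 - t 2)
  refine ⟨min (t 1 - t 2) (t 0 - t 1 - t 2) / 2, by linarith, ?_⟩
  set ε := min (t 1 - t 2) (t 0 - t 1 - t 2) / 2 with hεdef
  have hε : 0 < ε := by linarith
  have hε1 : ε < t 1 - t 2 := by rw [hεdef]; linarith
  have hε2 : ε < t 0 - t 1 - t 2 := by rw [hεdef]; linarith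
  have hle : ∀ i : Fin (n + 3), i ≠ 0 → i ≠ 1 → t i ≤ t 2 := by
    intro i h0 h1
    by_cases h2 : i = 2
    · rw [h2]
    · exact (hrest i h0 h1 h2).le
  intro pref hpref
  obtain ⟨htr1, has1, hto1, hmo1⟩ := hpref 1
  obtain ⟨htr0, has0, hto0, hmo0⟩ := hpref 0
  -- order the three singletons according to Bob's preference
  have hsort : ∃ x y z : Fin 3, x ≠ y ∧ x ≠ z ∧ y ≠ z ∧
      pref 1 {x} {y} ∧ pref 1 {y} {z} := by
    rcases hto1 {0} {1} (by decide) with h01 | h01 <;>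
      rcases hto1 {1} {2} (by decide) with h12 | h12 <;>
      rcases hto1 {0} {2} (by decide) with h02 | h02
    · exact ⟨0, 1, 2, by decide, by decide, by decide, h01, h12⟩
    · exact absurd (htr1 _ _ _ h01 h12) (has1 _ _ h02)
    · exact ⟨0, 2, 1, by decide, by decide, by decide, h02, h12⟩
    · exact ⟨2, 0, 1, by decide, by decide, by decide, h02, h01⟩
    · exact ⟨1, 0, 2, by decide, by decide, by decide, h01, h02⟩
    · exact ⟨1, 2, 0, by decide, by decide, by decide, h12, h02⟩
    · exact absurd (htr1 _ _ _ h12 h01) (has1 _ _ h02)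
    · exact ⟨2, 1, 0, by decide, by decide, by decide, h12, h01⟩
  obtain ⟨x, y, z, hxy, hxz, hyz, hrxy, hryz⟩ := hsort
  have hrxz : pref 1 {x} {z} := htr1 _ _ _ hrxy hryz
  have hne : ({x, z} : Finset (Fin 3)) ≠ {y, z} := by
    intro h
    have hx : x ∈ ({y, z} : Finset (Fin 3)) := h ▸ (by simp)
    simp only [Finset.mem_insert, Finset.mem_singleton] at hx
    rcases hx with h' | h'
    · exact hxy h'
    · exact hxz h'
  rcases hto0 _ _ hne with hA | hA
  · exact ⟨x, y, z, triple_univ _ _ _ hxy hxz hyz, hryz, hA,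
      ce_aux n t ε hb hc hle hε hε1 hε2 pref hpref x y z hxy hxz hyz hryz hA⟩
  · exact ⟨y, x, z, triple_univ _ _ _ hxy.symm hyz hxz, hrxz, hA,
      ce_aux n t ε hb hc hle hε hε1 hε2 pref hpref y x z hxy.symm hyz hxz hrxz hA⟩
end

section
/- With 3 items and any number of agents with distinct incomes a > b > c > ... such that a ≠ b + c, a competitive equilibrium exists: if a > b + c use the pixep ABA with prices a−c−ε, b, c+ε, and if a < b + c use the pixep ABC with prices a, b, c. Hence CEFAI exists for 3 items. -/
open Finset

/-!
If `a < b + c`, price the three items at the three top incomes `a`, `b`, `c`: no income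
reaches the price of two items, so agent 0 takes his favourite item at price `a`, agent 1 his
favourite among the other two at price `b`, and agent 2 the last one at price `c`.
If `a > b + c`, let `w` be agent 1's least preferred item and `u`, `v` the other two, labelled so
that agent 0 prefers `{u, w}` to `{v, w}`. With prices `a - c - ε`, `b`, `c + ε` on `u`, `v`, `w`
(`ε > 0` small) agent 0 buys `{u, w}`, since the only bundles he cannot afford are those
containing `u` and `v`, and agent 1 buys `v`, since `u` is too expensive for him.
In both cases the remaining agents are poorer than every item.
-/

theorem exists_forall_rel_of_strictTotal {α : Type*} [Finite α] {r : α → α → Prop}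
    (htrans : ∀ a b c, r a b → r b c → r a c) (hasymm : ∀ a b, r a b → ¬ r b a)
    (htotal : ∀ a b, a ≠ b → r a b ∨ r b a) {s : Set α} (hs : s.Nonempty) :
    ∃ a ∈ s, ∀ b ∈ s, b ≠ a → r a b := by
  have : IsTrans α r := ⟨htrans⟩
  have : Std.Irrefl r := ⟨fun a h => hasymm a a h h⟩
  obtain ⟨a, ha, hmin⟩ := (Finite.wellFounded_of_trans_of_irrefl r).has_min s hs
  exact ⟨a, ha, fun b hb hba => (htotal a b (Ne.symm hba)).resolve_right (hmin b hb)⟩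

section Demand

variable {m : ℕ} {r : Finset (Fin m) → Finset (Fin m) → Prop} {p : Fin m → ℝ} {t : ℝ}

def IsDemanded (r : Finset (Fin m) → Finset (Fin m) → Prop) (p : Fin m → ℝ) (t : ℝ)
    (B : Finset (Fin m)) : Prop :=
  ∀ Y, Y ≠ B → r B Y ∨ t < ∑ k ∈ Y, p k

theorem StrictMonoPref.rel_of_subset (hr : StrictMonoPref r) {B C Y : Finset (Fin m)}
    (hBC : r B C) (hYC : Y ⊆ C) : r B Y := by
  rcases hYC.eq_or_ssubset with rfl | hYC
  · exact hBC
  · exact hr.1 _ _ _ hBC (hr.2.2.2 _ _ hYC)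

theorem StrictMonoPref.exists_best_singleton (hr : StrictMonoPref r) {s : Finset (Fin m)}
    (hs : s.Nonempty) : ∃ x ∈ s, ∀ y ∈ s, y ≠ x → r {x} {y} :=
  exists_forall_rel_of_strictTotal (r := fun x y => r {x} {y}) (fun _ _ _ => hr.1 _ _ _)
    (fun _ _ => hr.2.1 _ _) (fun _ _ h => hr.2.2.1 _ _ (singleton_inj.not.2 h)) hs

theorem StrictMonoPref.exists_worst_singleton (hr : StrictMonoPref r) {s : Finset (Fin m)}
    (hs : s.Nonempty) : ∃ x ∈ s, ∀ y ∈ s, y ≠ x → r {y} {x} :=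
  exists_forall_rel_of_strictTotal (r := fun x y => r {y} {x})
    (fun _ _ _ h h' => hr.1 _ _ _ h' h) (fun _ _ => hr.2.1 _ _)
    (fun _ _ h => (hr.2.2.1 _ _ (singleton_inj.not.2 h)).symm) hs

theorem isDemanded_of_affordable_subset (hr : StrictMonoPref r) {B : Finset (Fin m)}
    (h : ∀ Y, ∑ k ∈ Y, p k ≤ t → Y ⊆ B ∨ ∃ C, r B C ∧ Y ⊆ C) : IsDemanded r p t B := by
  intro Y hY
  by_contra! hnot
  rcases h Y hnot.2 with hYB | ⟨C, hBC, hYC⟩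
  · exact hnot.1 (hr.2.2.2 _ _ (hYB.ssubset_of_ne hY))
  · exact hnot.1 (hr.rel_of_subset hBC hYC)

theorem isDemanded_empty (hp : ∀ k, 0 ≤ p k) (ht : ∀ k, t < p k) : IsDemanded r p t ∅ := by
  intro Y hY
  obtain ⟨k, hk⟩ := nonempty_iff_ne_empty.2 hY
  exact Or.inr ((ht k).trans_le (single_le_sum (fun j _ => hp j) hk))

theorem lt_sum_of_one_lt_card {α : Type*} {p : α → ℝ} {Y : Finset α} (hp : ∀ k, 0 ≤ p k)
    (hpair : ∀ y z, y ≠ z → t < p y + p z) (hY : 1 < #Y) : t < ∑ k ∈ Y, p k := by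
  classical
  obtain ⟨y, hy, z, hz, hyz⟩ := one_lt_card.1 hY
  calc t < p y + p z := hpair y z hyz
    _ = ∑ k ∈ {y, z}, p k := (sum_pair hyz).symm
    _ ≤ ∑ k ∈ Y, p k :=
      sum_le_sum_of_subset_of_nonneg (insert_subset hy (singleton_subset_iff.2 hz))
        fun k _ _ => hp k

theorem isDemanded_singleton (hr : StrictMonoPref r) (hp : ∀ k, 0 ≤ p k) {x : Fin m}
    (hpair : ∀ y z, y ≠ z → t < p y + p z) (hsingle : ∀ y, y ≠ x → p y ≤ t → r {x} {y}) :
    IsDemanded r p t {x} := by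
  refine isDemanded_of_affordable_subset hr fun Y hY => ?_
  have hcard : #Y ≤ 1 := not_lt.1 fun h => (lt_sum_of_one_lt_card hp hpair h).not_ge hY
  rcases Y.eq_empty_or_nonempty with rfl | ⟨y, hy⟩
  · exact Or.inl (empty_subset _)
  obtain rfl : Y = {y} :=
    eq_singleton_iff_unique_mem.2 ⟨hy, fun z hz => card_le_one.1 hcard z hz y hy⟩
  by_cases hyx : y = x
  · exact Or.inl (hyx ▸ subset_rfl)
  · exact Or.inr ⟨{y}, hsingle y hyx (by simpa using hY), subset_rfl⟩

end Demand

section Allocation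

variable {m n : ℕ}

def alloc3 (B₀ B₁ B₂ : Finset (Fin m)) (i : Fin (n + 3)) : Finset (Fin m) :=
  if i = 0 then B₀ else if i = 1 then B₁ else if i = 2 then B₂ else ∅

variable (B₀ B₁ B₂ : Finset (Fin m))

theorem alloc3_zero : alloc3 B₀ B₁ B₂ (0 : Fin (n + 3)) = B₀ := if_pos rfl

theorem alloc3_one : alloc3 B₀ B₁ B₂ (1 : Fin (n + 3)) = B₁ := by simp [alloc3]

theorem alloc3_two : alloc3 B₀ B₁ B₂ (2 : Fin (n + 3)) = B₂ := by
  simp [alloc3, Fin.ext_iff, Nat.mod_eq_of_lt]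

theorem alloc3_cases (i : Fin (n + 3)) :
    (i = 0 ∧ alloc3 B₀ B₁ B₂ i = B₀) ∨ (i = 1 ∧ alloc3 B₀ B₁ B₂ i = B₁) ∨
      (i = 2 ∧ alloc3 B₀ B₁ B₂ i = B₂) ∨ (i ≠ 0 ∧ i ≠ 1 ∧ i ≠ 2 ∧ alloc3 B₀ B₁ B₂ i = ∅) := by
  by_cases h0 : i = 0
  · exact Or.inl ⟨h0, h0 ▸ alloc3_zero ..⟩
  by_cases h1 : i = 1
  · exact Or.inr <| Or.inl ⟨h1, h1 ▸ alloc3_one ..⟩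
  by_cases h2 : i = 2
  · exact Or.inr <| Or.inr <| Or.inl ⟨h2, h2 ▸ alloc3_two ..⟩
  · exact Or.inr <| Or.inr <| Or.inr ⟨h0, h1, h2, by simp [alloc3, h0, h1, h2]⟩

variable {B₀ B₁ B₂}

theorem isCE_alloc3 {t : Fin (n + 3) → ℝ}
    {pref : Fin (n + 3) → Finset (Fin m) → Finset (Fin m) → Prop} {p : Fin m → ℝ}
    (hp : ∀ k, 0 < p k)
    (h₀₁ : Disjoint B₀ B₁) (h₀₂ : Disjoint B₀ B₂) (h₁₂ : Disjoint B₁ B₂)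
    (hcover : B₀ ∪ B₁ ∪ B₂ = univ)
    (hcost₀ : B₀ ≠ ∅ → ∑ k ∈ B₀, p k = t 0) (hcost₁ : B₁ ≠ ∅ → ∑ k ∈ B₁, p k = t 1)
    (hcost₂ : B₂ ≠ ∅ → ∑ k ∈ B₂, p k = t 2)
    (hd₀ : IsDemanded (pref 0) p (t 0) B₀) (hd₁ : IsDemanded (pref 1) p (t 1) B₁)
    (hd₂ : IsDemanded (pref 2) p (t 2) B₂)
    (hrest : ∀ i, i ≠ 0 → i ≠ 1 → i ≠ 2 → IsDemanded (pref i) p (t i) ∅) :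
    IsCE t pref p (alloc3 B₀ B₁ B₂) := by
  refine ⟨hp, fun i j hij => ?_, eq_univ_iff_forall.2 fun k => ?_, fun i hi => ?_, fun i => ?_⟩
  · rcases alloc3_cases B₀ B₁ B₂ i with ⟨rfl, hi⟩ | ⟨rfl, hi⟩ | ⟨rfl, hi⟩ | ⟨-, -, -, hi⟩ <;>
    rcases alloc3_cases B₀ B₁ B₂ j with ⟨rfl, hj⟩ | ⟨rfl, hj⟩ | ⟨rfl, hj⟩ | ⟨-, -, -, hj⟩ <;>
    simp_all [disjoint_comm]
  · have hk : k ∈ B₀ ∪ B₁ ∪ B₂ := hcover ▸ mem_univ k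
    simp only [mem_union] at hk
    rw [mem_biUnion]
    rcases hk with (hk | hk) | hk
    exacts [⟨0, mem_univ _, by rwa [alloc3_zero]⟩, ⟨1, mem_univ _, by rwa [alloc3_one]⟩,
      ⟨2, mem_univ _, by rwa [alloc3_two]⟩]
  · rcases alloc3_cases B₀ B₁ B₂ i with ⟨rfl, hi'⟩ | ⟨rfl, hi'⟩ | ⟨rfl, hi'⟩ | ⟨-, -, -, hi'⟩ <;>
      rw [hi'] at hi ⊢
    exacts [hcost₀ hi, hcost₁ hi, hcost₂ hi, absurd rfl hi]
  · rcases alloc3_cases B₀ B₁ B₂ i with ⟨rfl, hi⟩ | ⟨rfl, hi⟩ | ⟨rfl, hi⟩ | ⟨h0, h1, h2, hi⟩ <;>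
      rw [hi]
    exacts [hd₀, hd₁, hd₂, hrest i h0 h1 h2]

end Allocation

theorem fin3_eq_or_eq_or_eq {u v w : Fin 3} (huv : u ≠ v) (huw : u ≠ w) (hvw : v ≠ w)
    (x : Fin 3) : x = u ∨ x = v ∨ x = w := by
  revert u v w x; decide

theorem fin3_exists_ne_ne (u v : Fin 3) : ∃ w, u ≠ w ∧ v ≠ w := by
  revert u v; decide

theorem isDemanded_pair_of_fin3 {r : Finset (Fin 3) → Finset (Fin 3) → Prop} {p : Fin 3 → ℝ}
    {t : ℝ} (hr : StrictMonoPref r) (hp : ∀ k, 0 ≤ p k) {u v w : Fin 3} (huv : u ≠ v)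
    (huw : u ≠ w) (hvw : v ≠ w) (hcost : t < p u + p v) (h : r {u, w} {v, w}) :
    IsDemanded r p t {u, w} := by
  have hcases := fin3_eq_or_eq_or_eq huv huw hvw
  refine isDemanded_of_affordable_subset hr fun Y hY => ?_
  by_cases hvY : v ∈ Y
  · by_cases huY : u ∈ Y
    · have : p u + p v ≤ ∑ k ∈ Y, p k := by
        rw [← sum_pair huv]
        exact sum_le_sum_of_subset_of_nonneg (insert_subset huY (singleton_subset_iff.2 hvY))
          fun k _ _ => hp k
      linarith
    · refine Or.inr ⟨{v, w}, h, fun x hx => ?_⟩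
      rcases hcases x with rfl | rfl | rfl <;> simp_all
  · refine Or.inl fun x hx => ?_
    rcases hcases x with rfl | rfl | rfl <;> simp_all

section ThreeItems

variable {n : ℕ} {t : Fin (n + 3) → ℝ}
  {pref : Fin (n + 3) → Finset (Fin 3) → Finset (Fin 3) → Prop}

theorem exists_isCE_of_lt_add (hpref : ∀ i, StrictMonoPref (pref i)) (hc : 0 < t 2)
    (hbc : t 2 < t 1) (hab : t 1 < t 0) (hlt : t 0 < t 1 + t 2)
    (hrest : ∀ i, i ≠ 0 → i ≠ 1 → i ≠ 2 → t i < t 2)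
    {u v w : Fin 3} (huv : u ≠ v) (huw : u ≠ w) (hvw : v ≠ w)
    (hu : ∀ y, y ≠ u → pref 0 {u} {y}) (hv : pref 1 {v} {w}) :
    ∃ p X, IsCE t pref p X := by
  have hcases := fin3_eq_or_eq_or_eq huv huw hvw
  set p : Fin 3 → ℝ := fun k => if k = u then t 0 else if k = v then t 1 else t 2
  have hpu : p u = t 0 := if_pos rfl
  have hpv : p v = t 1 := by simp [p, huv.symm]
  have hpw : p w = t 2 := by simp [p, huw.symm, hvw.symm]
  have hp_ge : ∀ k, t 2 ≤ p k := by
    intro k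
    rcases hcases k with rfl | rfl | rfl <;> linarith
  have hp : ∀ k, 0 ≤ p k := fun k => hc.le.trans (hp_ge k)
  have hpair : ∀ y z, y ≠ z → t 0 < p y + p z := by
    intro y z hyz
    rcases hcases y with rfl | rfl | rfl <;> rcases hcases z with rfl | rfl | rfl <;>
      first | exact absurd rfl hyz | linarith
  refine ⟨p, alloc3 {u} {v} {w}, isCE_alloc3 (fun k => hc.trans_le (hp_ge k))
    (by simpa using huv) (by simpa using huw) (by simpa using hvw) ?_
    (fun _ => by simp [hpu]) (fun _ => by simp [hpv]) (fun _ => by simp [hpw])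
    (isDemanded_singleton (hpref 0) hp hpair fun y hy _ => hu y hy)
    (isDemanded_singleton (hpref 1) hp (fun y z h => hab.trans (hpair y z h)) fun y hy hyb => ?_)
    (isDemanded_singleton (hpref 2) hp (fun y z h => (hbc.trans hab).trans (hpair y z h))
      fun y hy hyc => ?_)
    fun i h0 h1 h2 => isDemanded_empty hp fun k => (hrest i h0 h1 h2).trans_le (hp_ge k)⟩
  · ext x
    rcases hcases x with rfl | rfl | rfl <;> simp
  · rcases hcases y with rfl | rfl | rfl
    · linarith
    · exact absurd rfl hy
    · exact hv
  · exfalso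
    rcases hcases y with rfl | rfl | rfl
    · linarith
    · linarith
    · exact hy rfl

theorem exists_isCE_of_add_lt (hpref : ∀ i, StrictMonoPref (pref i)) (hc : 0 < t 2)
    (hbc : t 2 < t 1) (hgt : t 1 + t 2 < t 0) (hrest : ∀ i, i ≠ 0 → i ≠ 1 → i ≠ 2 → t i < t 2)
    {u v w : Fin 3} (huv : u ≠ v) (huw : u ≠ w) (hvw : v ≠ w)
    (hu : pref 0 {u, w} {v, w}) (hv : pref 1 {v} {w}) :
    ∃ p X, IsCE t pref p X := by
  have hcases := fin3_eq_or_eq_or_eq huv huw hvw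
  -- `ε < b - c`: agent 1 can afford `w` and agent 0 cannot afford `{u, v}`;
  -- `ε < a - b - c`: agent 1 cannot afford `u`.
  obtain ⟨ε, hε, hε'⟩ := exists_between (lt_min (sub_pos.2 hbc) (sub_pos.2 hgt))
  obtain ⟨hεb, hεa⟩ := lt_min_iff.1 hε'
  set p : Fin 3 → ℝ := fun k => if k = u then t 0 - t 2 - ε else if k = v then t 1 else t 2 + ε
  have hpu : p u = t 0 - t 2 - ε := if_pos rfl
  have hpv : p v = t 1 := by simp [p, huv.symm]
  have hpw : p w = t 2 + ε := by simp [p, huw.symm, hvw.symm]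
  have hp_gt : ∀ k, t 2 < p k := by
    intro k
    rcases hcases k with rfl | rfl | rfl <;> linarith
  have hp : ∀ k, 0 ≤ p k := fun k => hc.le.trans (hp_gt k).le
  have hpair : ∀ y z, y ≠ z → t 1 < p y + p z := by
    intro y z hyz
    rcases hcases y with rfl | rfl | rfl <;> rcases hcases z with rfl | rfl | rfl <;>
      first | exact absurd rfl hyz | linarith
  refine ⟨p, alloc3 {u, w} {v} ∅, isCE_alloc3 (fun k => hc.trans (hp_gt k))
    (by simp [huv.symm, hvw]) (disjoint_empty_right _) (disjoint_empty_right _) ?_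
    (fun _ => by rw [sum_pair huw, hpu, hpw]; ring) (fun _ => by simp [hpv]) (absurd rfl)
    (isDemanded_pair_of_fin3 (hpref 0) hp huv huw hvw (by linarith) hu)
    (isDemanded_singleton (hpref 1) hp hpair fun y hy hyb => ?_)
    (isDemanded_empty hp hp_gt)
    fun i h0 h1 h2 => isDemanded_empty hp fun k => (hrest i h0 h1 h2).trans (hp_gt k)⟩
  · ext x
    rcases hcases x with rfl | rfl | rfl <;> simp
  · rcases hcases y with rfl | rfl | rfl
    · linarith
    · exact absurd rfl hy
    · exact hv

end ThreeItems

theorem CEFAI_three_items_general (n : ℕ) (t : Fin (n + 3) → ℝ)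
    (hpos : ∀ i, 0 < t i)
    (hab : t 0 > t 1) (hbc : t 1 > t 2)
    (hrest : ∀ i, i ≠ 0 → i ≠ 1 → i ≠ 2 → t i < t 2)
    (hne : t 0 ≠ t 1 + t 2)
    (pref : Fin (n + 3) → Finset (Fin 3) → Finset (Fin 3) → Prop)
    (hpref : ∀ i, StrictMonoPref (pref i)) :
    ∃ (p : Fin 3 → ℝ) (X : Fin (n + 3) → Finset (Fin 3)), IsCE t pref p X := by
  rcases hne.lt_or_gt with hlt | hgt
  · obtain ⟨u, -, hu⟩ := (hpref 0).exists_best_singleton univ_nonempty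
    obtain ⟨x, hux, -⟩ := fin3_exists_ne_ne u u
    obtain ⟨v, hv, hv_best⟩ :=
      (hpref 1).exists_best_singleton ⟨x, mem_erase.2 ⟨hux.symm, mem_univ x⟩⟩
    have huv : u ≠ v := (ne_of_mem_erase hv).symm
    obtain ⟨w, huw, hvw⟩ := fin3_exists_ne_ne u v
    exact exists_isCE_of_lt_add hpref (hpos 2) hbc hab hlt hrest huv huw hvw
      (fun y => hu y (mem_univ y)) (hv_best w (mem_erase.2 ⟨huw.symm, mem_univ w⟩) hvw.symm)
  · obtain ⟨w, -, hw⟩ := (hpref 1).exists_worst_singleton univ_nonempty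
    obtain ⟨u, hwu, -⟩ := fin3_exists_ne_ne w w
    obtain ⟨v, huv, hwv⟩ := fin3_exists_ne_ne u w
    have hbundles : ({u, w} : Finset (Fin 3)) ≠ {v, w} := fun h => by
      have := h ▸ mem_insert_self u {w}
      simp [huv, hwu.symm] at this
    rcases (hpref 0).2.2.1 _ _ hbundles with h | h
    · exact exists_isCE_of_add_lt hpref (hpos 2) hbc hgt hrest huv hwu.symm hwv.symm h
        (hw v (mem_univ v) hwv.symm)
    · exact exists_isCE_of_add_lt hpref (hpos 2) hbc hgt hrest huv.symm hwv.symm hwu.symm h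
        (hw u (mem_univ u) hwu.symm)

/-- **CEFAI for three items.** With three items and any number of agents having
distinct positive incomes `t 0 > t 1 > t 2 > (all other incomes)` such that
`t 0 ≠ t 1 + t 2`, a competitive equilibrium exists for every profile of strict
monotone preferences. -/
theorem CEFAI_three_items (n : ℕ) (t : Fin (n + 3) → ℝ)
    (hpos : ∀ i, 0 < t i)
    (hinj : Function.Injective t)
    (hab : t 0 > t 1) (hbc : t 1 > t 2)
    (hrest : ∀ i, i ≠ 0 → i ≠ 1 → i ≠ 2 → t i < t 2)
    (hne : t 0 ≠ t 1 + t 2)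
    (pref : Fin (n + 3) → Finset (Fin 3) → Finset (Fin 3) → Prop)
    (hpref : ∀ i, StrictMonoPref (pref i)) :
    ∃ (p : Fin 3 → ℝ) (X : Fin (n + 3) → Finset (Fin 3)), IsCE t pref p X :=
  CEFAI_three_items_general n t hpos hab hbc hrest hne pref hpref
end

section
/- Non-existence of CE with 4 items and 4 agents: for incomes satisfying 2b > 2c > b+d > a > c+d > 2d > b > c > d, and the specified preferences of Alice, Bob, Carl (Dana arbitrary), no competitive equilibrium exists. -/
open Finset

namespace FourItemsFourAgents

/-- Item names. -/
def w : Fin 4 := 0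
def x : Fin 4 := 1
def y : Fin 4 := 2
def z : Fin 4 := 3

/-- **Non-existence of CE with 4 items and 4 agents.**
Agents Alice (0), Bob (1), Carl (2), Dana (3) with incomes `a, b, c, d`
satisfying `2b > 2c > b + d > a > c + d > 2d > b > c > d > 0`, and strict
monotone preferences containing
Alice: `xy ≻ w ≻ xz ≻ yz ≻ x ≻ y ≻ z`,
Bob: `w ≻ z ≻ x ≻ y` (singletons),
Carl: `x ≻ y ≻ w ≻ z` (singletons),
Dana arbitrary.  Then no competitive equilibrium exists. -/
theorem no_CE_four_items_four_agents
    (a b c d : ℝ)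
    (h1 : 2 * b > 2 * c) (h2 : 2 * c > b + d) (h3 : b + d > a)
    (h4 : a > c + d) (h5 : c + d > 2 * d) (h6 : 2 * d > b)
    (h7 : b > c) (h8 : c > d) (h9 : d > 0)
    (pref : Fin 4 → Finset (Fin 4) → Finset (Fin 4) → Prop)
    (hpref : ∀ i, StrictMonoPref (pref i))
    -- Alice
    (hA1 : pref 0 {x, y} {w}) (hA2 : pref 0 {w} {x, z})
    (hA3 : pref 0 {x, z} {y, z}) (hA4 : pref 0 {y, z} {x})
    (hA5 : pref 0 {x} {y}) (hA6 : pref 0 {y} {z})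
    -- Bob
    (hB1 : pref 1 {w} {z}) (hB2 : pref 1 {z} {x}) (hB3 : pref 1 {x} {y})
    -- Carl
    (hC1 : pref 2 {x} {y}) (hC2 : pref 2 {y} {w}) (hC3 : pref 2 {w} {z}) :
    ¬ ∃ (p : Fin 4 → ℝ) (X : Fin 4 → Finset (Fin 4)),
        IsCE ![a, b, c, d] pref p X := by
  rintro ⟨p, X, hpos, hdisj, hcover, hbudget, hopt⟩
  have ptrans : ∀ i A B C, pref i A B → pref i B C → pref i A C := fun i => (hpref i).1
  have pasym : ∀ i A B, pref i A B → ¬ pref i B A := fun i => (hpref i).2.1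
  have pmono : ∀ i A B, A ⊂ B → pref i B A := fun i => (hpref i).2.2.2
  have ta : (![a,b,c,d] : Fin 4 → ℝ) 0 = a := rfl
  have tb : (![a,b,c,d] : Fin 4 → ℝ) 1 = b := rfl
  have tc : (![a,b,c,d] : Fin 4 → ℝ) 2 = c := rfl
  have td : (![a,b,c,d] : Fin 4 → ℝ) 3 = d := rfl
  have ha4 : ∀ i : Fin 4, i = 0 ∨ i = 1 ∨ i = 2 ∨ i = 3 := by decide
  have hc4 : ∀ k : Fin 4, k = w ∨ k = x ∨ k = y ∨ k = z := by decide
  have key : ∀ i Y, pref i Y (X i) → (![a,b,c,d] : Fin 4 → ℝ) i < ∑ k ∈ Y, p k := by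
    intro i Y hp
    have hne : Y ≠ X i := by rintro rfl; exact pasym i _ _ hp hp
    rcases hopt i Y hne with h | h
    · exact absurd hp (pasym i _ _ h)
    · exact h
  have keyA : ∀ Y, pref 0 Y (X 0) → a < ∑ k ∈ Y, p k := by
    intro Y hp; have := key 0 Y hp; rwa [ta] at this
  have keyB : ∀ Y, pref 1 Y (X 1) → b < ∑ k ∈ Y, p k := by
    intro Y hp; have := key 1 Y hp; rwa [tb] at this
  have keyC : ∀ Y, pref 2 Y (X 2) → c < ∑ k ∈ Y, p k := by
    intro Y hp; have := key 2 Y hp; rwa [tc] at this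
  have sumX : ∀ i k, k ∈ X i → ∑ j ∈ X i, p j = (![a,b,c,d] : Fin 4 → ℝ) i := by
    intro i k hk
    exact hbudget i (by rintro h; rw [h] at hk; exact absurd hk (by simp))
  have memle : ∀ i k, k ∈ X i → p k ≤ ∑ j ∈ X i, p j :=
    fun i k hk => Finset.single_le_sum (fun j _ => (hpos j).le) hk
  have pairle : ∀ i k l, k ∈ X i → l ∈ X i → k ≠ l → p k + p l ≤ ∑ j ∈ X i, p j := by
    intro i k l hk hl hkl
    have hsub : ({k, l} : Finset (Fin 4)) ⊆ X i := by
      intro j hj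
      rcases Finset.mem_insert.mp hj with rfl | hj
      · exact hk
      · rw [Finset.mem_singleton.mp hj]; exact hl
    calc p k + p l = ∑ j ∈ ({k, l} : Finset (Fin 4)), p j := (Finset.sum_pair hkl).symm
      _ ≤ ∑ j ∈ X i, p j :=
          Finset.sum_le_sum_of_subset_of_nonneg hsub (fun j _ _ => (hpos j).le)
  have owner : ∀ k : Fin 4, ∃ i, k ∈ X i := by
    intro k
    have hk : k ∈ Finset.univ.biUnion X := by rw [hcover]; exact Finset.mem_univ k
    simpa using hk
  have keyE : ∀ i, X i = ∅ → ∀ k, (![a,b,c,d] : Fin 4 → ℝ) i < p k := by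
    intro i hi k
    have h1 : pref i {k} (X i) := by
      rw [hi]
      exact pmono i ∅ {k} (Finset.empty_ssubset.mpr (Finset.singleton_nonempty k))
    have := key i {k} h1
    simpa using this
  -- Alice's derived preferences
  have pwx : pref 0 {w} {x} := ptrans 0 _ _ _ (ptrans 0 _ _ _ hA2 hA3) hA4
  have pwy : pref 0 {w} {y} := ptrans 0 _ _ _ pwx hA5
  have pwz : pref 0 {w} {z} := ptrans 0 _ _ _ pwy hA6
  have pwyz : pref 0 {w} {y, z} := ptrans 0 _ _ _ hA2 hA3
  -- Bob's derived preferences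
  have pbzy : pref 1 {z} {y} := ptrans 1 _ _ _ hB2 hB3
  -- Carl's derived preferences
  have pcxw : pref 2 {x} {w} := ptrans 2 _ _ _ hC1 hC2
  have pcxz : pref 2 {x} {z} := ptrans 2 _ _ _ pcxw hC3
  have pcyz : pref 2 {y} {z} := ptrans 2 _ _ _ hC2 hC3
  -- Bob's bundle is nonempty
  have hX1ne : X 1 ≠ ∅ := by
    intro h1
    have hpb : ∀ k, b < p k := fun k => by have := keyE 1 h1 k; rwa [tb] at this
    have hin0 : ∀ k : Fin 4, k ∈ X 0 := by
      intro k
      obtain ⟨i, hi⟩ := owner k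
      have hle := memle i k hi
      have hs := sumX i k hi
      rcases ha4 i with rfl | rfl | rfl | rfl
      · exact hi
      · rw [h1] at hi; exact absurd hi (by simp)
      · rw [tc] at hs; have := hpb k; linarith
      · rw [td] at hs; have := hpb k; linarith
    have hs0 := sumX 0 w (hin0 w)
    rw [ta] at hs0
    have hp2 := pairle 0 w x (hin0 w) (hin0 x) (by decide)
    have hb1 := hpb w
    have hb2 := hpb x
    linarith
  -- Carl's bundle is nonempty
  have hX2ne : X 2 ≠ ∅ := by
    intro h2
    have hpc : ∀ k, c < p k := fun k => by have := keyE 2 h2 k; rwa [tc] at this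
    have tmax : ∀ i : Fin 4, (![a,b,c,d] : Fin 4 → ℝ) i ≤ a := by
      intro i
      rcases ha4 i with rfl | rfl | rfl | rfl
      · rw [ta]
      · rw [tb]; linarith
      · rw [tc]; linarith
      · rw [td]; linarith
    have hin01 : ∀ k : Fin 4, k ∈ X 0 ∨ k ∈ X 1 := by
      intro k
      obtain ⟨i, hi⟩ := owner k
      have hle := memle i k hi
      have hs := sumX i k hi
      rcases ha4 i with rfl | rfl | rfl | rfl
      · exact Or.inl hi
      · exact Or.inr hi
      · rw [h2] at hi; exact absurd hi (by simp)
      · rw [td] at hs; have := hpc k; linarith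
    have contra : ∀ i k l, k ∈ X i → l ∈ X i → k ≠ l → False := by
      intro i k l hk hl hkl
      have hp := pairle i k l hk hl hkl
      have hs := sumX i k hk
      have hm := tmax i
      have h1 := hpc k
      have h2 := hpc l
      linarith
    rcases hin01 w with hw | hw <;> rcases hin01 x with hx | hx <;>
      rcases hin01 y with hy | hy <;>
      first
        | exact contra 0 w x hw hx (by decide)
        | exact contra 0 w y hw hy (by decide)
        | exact contra 0 x y hx hy (by decide)
        | exact contra 1 w x hw hx (by decide)
        | exact contra 1 w y hw hy (by decide)
        | exact contra 1 x y hx hy (by decide)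
  -- Alice's bundle is nonempty
  have hX0ne : X 0 ≠ ∅ := by
    intro h0
    have hpa : ∀ k, a < p k := fun k => by have := keyE 0 h0 k; rwa [ta] at this
    obtain ⟨i, hi⟩ := owner w
    have hle := memle i w hi
    have hs := sumX i w hi
    have hw := hpa w
    rcases ha4 i with rfl | rfl | rfl | rfl
    · rw [h0] at hi; exact absurd hi (by simp)
    · rw [tb] at hs; linarith
    · rw [tc] at hs; linarith
    · rw [td] at hs; linarith
  -- cardinalities
  have hcards : (X 0).card + (X 1).card + (X 2).card + (X 3).card = 4 := by
    have h := Finset.card_biUnion (s := (Finset.univ : Finset (Fin 4))) (t := X)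
      (fun i _ j _ hij => hdisj i j hij)
    rw [hcover] at h
    simp [Fin.sum_univ_four] at h
    omega
  have cpos : ∀ i, X i ≠ ∅ → 1 ≤ (X i).card :=
    fun i h => Finset.card_pos.mpr (Finset.nonempty_iff_ne_empty.mpr h)
  by_cases h3e : X 3 = ∅
  · -- Case A: Dana's bundle empty
    have hpd : ∀ k, d < p k := fun k => by have := keyE 3 h3e k; rwa [td] at this
    have hsmall : ∀ i : Fin 4, i ≠ 0 → (X i).card ≤ 1 := by
      intro i hi0
      by_contra hgt
      obtain ⟨k, hk, l, hl, hkl⟩ := Finset.one_lt_card.mp (Nat.lt_of_not_le hgt)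
      have hp := pairle i k l hk hl hkl
      have hs := sumX i k hk
      have h1 := hpd k
      have h2 := hpd l
      rcases ha4 i with rfl | rfl | rfl | rfl
      · exact hi0 rfl
      · rw [tb] at hs; linarith
      · rw [tc] at hs; linarith
      · rw [td] at hs; linarith
    have h1c : (X 1).card = 1 := le_antisymm (hsmall 1 (by decide)) (cpos 1 hX1ne)
    have h2c : (X 2).card = 1 := le_antisymm (hsmall 2 (by decide)) (cpos 2 hX2ne)
    have h3c : (X 3).card = 0 := by rw [h3e]; simp
    have h0c : (X 0).card = 2 := by omega
    obtain ⟨kB, hXB⟩ := Finset.card_eq_one.mp h1c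
    obtain ⟨kC, hXC⟩ := Finset.card_eq_one.mp h2c
    have pB : p kB = b := by
      have h := sumX 1 kB (by rw [hXB]; exact Finset.mem_singleton_self kB)
      rwa [hXB, Finset.sum_singleton, tb] at h
    have pC : p kC = c := by
      have h := sumX 2 kC (by rw [hXC]; exact Finset.mem_singleton_self kC)
      rwa [hXC, Finset.sum_singleton, tc] at h
    have hBC : kB ≠ kC := by
      intro h
      have hd := hdisj 1 2 (by decide)
      rw [hXB, hXC, h] at hd
      simp at hd
    have hin0 : ∀ k : Fin 4, k ≠ kB → k ≠ kC → k ∈ X 0 := by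
      intro k hkB hkC
      obtain ⟨i, hi⟩ := owner k
      rcases ha4 i with rfl | rfl | rfl | rfl
      · exact hi
      · rw [hXB, Finset.mem_singleton] at hi; exact absurd hi hkB
      · rw [hXC, Finset.mem_singleton] at hi; exact absurd hi hkC
      · rw [h3e] at hi; exact absurd hi (by simp)
    have eq0 : ∀ k l : Fin 4, k ∈ X 0 → l ∈ X 0 → k ≠ l → X 0 = {k, l} := by
      intro k l hk hl hkl
      have hsub : ({k, l} : Finset (Fin 4)) ⊆ X 0 := by
        intro j hj
        rcases Finset.mem_insert.mp hj with rfl | hj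
        · exact hk
        · rw [Finset.mem_singleton.mp hj]; exact hl
      exact (Finset.eq_of_subset_of_card_le hsub
        (by rw [h0c, Finset.card_pair hkl])).symm
    have pair0 : ∀ k l : Fin 4, k ∈ X 0 → l ∈ X 0 → k ≠ l → p k + p l = a := by
      intro k l hk hl hkl
      have h := sumX 0 k hk
      rwa [eq0 k l hk hl hkl, Finset.sum_pair hkl, ta] at h
    rcases hc4 kB with rfl | rfl | rfl | rfl <;> rcases hc4 kC with rfl | rfl | rfl | rfl
    · exact hBC rfl
    · -- Bob w, Carl x, Alice {y,z}
      have hy0 := hin0 y (by decide) (by decide)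
      have hz0 := hin0 z (by decide) (by decide)
      have hX0 := eq0 y z hy0 hz0 (by decide)
      have hk := keyA {w} (by rw [hX0]; exact pwyz)
      rw [Finset.sum_singleton] at hk
      linarith [pB]
    · -- Bob w, Carl y, Alice {x,z}
      have hx0 := hin0 x (by decide) (by decide)
      have hz0 := hin0 z (by decide) (by decide)
      have hX0 := eq0 x z hx0 hz0 (by decide)
      have hk := keyA {w} (by rw [hX0]; exact hA2)
      rw [Finset.sum_singleton] at hk
      linarith [pB]
    · -- Bob w, Carl z, Alice {x,y}
      have hx0 := hin0 x (by decide) (by decide)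
      have hy0 := hin0 y (by decide) (by decide)
      have hpa := pair0 x y hx0 hy0 (by decide)
      have hk1 := keyC {x} (by rw [hXC]; exact pcxz)
      have hk2 := keyC {y} (by rw [hXC]; exact pcyz)
      rw [Finset.sum_singleton] at hk1 hk2
      linarith
    · -- Bob x, Carl w, Alice {y,z}
      have hy0 := hin0 y (by decide) (by decide)
      have hz0 := hin0 z (by decide) (by decide)
      have hX0 := eq0 y z hy0 hz0 (by decide)
      have hk := keyA {w} (by rw [hX0]; exact pwyz)
      rw [Finset.sum_singleton] at hk
      linarith [pC]
    · exact hBC rfl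
    · -- Bob x, Carl y, Alice {w,z}
      have hw0 := hin0 w (by decide) (by decide)
      have hz0 := hin0 z (by decide) (by decide)
      have hpa := pair0 w z hw0 hz0 (by decide)
      have hk := keyB {z} (by rw [hXB]; exact hB2)
      rw [Finset.sum_singleton] at hk
      have := hpd w
      linarith
    · -- Bob x, Carl z, Alice {w,y}
      have hw0 := hin0 w (by decide) (by decide)
      have hy0 := hin0 y (by decide) (by decide)
      have hpa := pair0 w y hw0 hy0 (by decide)
      have hk1 := keyC {w} (by rw [hXC]; exact hC3)
      have hk2 := keyC {y} (by rw [hXC]; exact pcyz)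
      rw [Finset.sum_singleton] at hk1 hk2
      linarith
    · -- Bob y, Carl w, Alice {x,z}
      have hx0 := hin0 x (by decide) (by decide)
      have hz0 := hin0 z (by decide) (by decide)
      have hX0 := eq0 x z hx0 hz0 (by decide)
      have hk := keyA {w} (by rw [hX0]; exact hA2)
      rw [Finset.sum_singleton] at hk
      linarith [pC]
    · -- Bob y, Carl x, Alice {w,z}
      have hw0 := hin0 w (by decide) (by decide)
      have hz0 := hin0 z (by decide) (by decide)
      have hpa := pair0 w z hw0 hz0 (by decide)
      have hk := keyB {z} (by rw [hXB]; exact pbzy)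
      rw [Finset.sum_singleton] at hk
      have := hpd w
      linarith
    · exact hBC rfl
    · -- Bob y, Carl z, Alice {w,x}
      have hk := keyB {z} (by rw [hXB]; exact pbzy)
      rw [Finset.sum_singleton] at hk
      linarith [pC]
    · -- Bob z, Carl w, Alice {x,y}
      have hx0 := hin0 x (by decide) (by decide)
      have hy0 := hin0 y (by decide) (by decide)
      have hpa := pair0 x y hx0 hy0 (by decide)
      have hk1 := keyC {x} (by rw [hXC]; exact pcxw)
      have hk2 := keyC {y} (by rw [hXC]; exact hC2)
      rw [Finset.sum_singleton] at hk1 hk2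
      linarith
    · -- Bob z, Carl x, Alice {w,y}
      have hw0 := hin0 w (by decide) (by decide)
      have hy0 := hin0 y (by decide) (by decide)
      have hpa := pair0 w y hw0 hy0 (by decide)
      have hk := keyB {w} (by rw [hXB]; exact hB1)
      rw [Finset.sum_singleton] at hk
      have := hpd y
      linarith
    · -- Bob z, Carl y, Alice {w,x}
      have hw0 := hin0 w (by decide) (by decide)
      have hx0 := hin0 x (by decide) (by decide)
      have hpa := pair0 w x hw0 hx0 (by decide)
      have hk1 := keyB {w} (by rw [hXB]; exact hB1)
      have hk2 := keyC {x} (by rw [hXC]; exact hC1)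
      rw [Finset.sum_singleton] at hk1 hk2
      linarith
    · exact hBC rfl
  · -- Case B: all four bundles nonempty, hence all singletons
    have h0c : (X 0).card = 1 := by
      have := cpos 0 hX0ne; have := cpos 1 hX1ne; have := cpos 2 hX2ne
      have := cpos 3 h3e; omega
    have h1c : (X 1).card = 1 := by
      have := cpos 0 hX0ne; have := cpos 1 hX1ne; have := cpos 2 hX2ne
      have := cpos 3 h3e; omega
    have h2c : (X 2).card = 1 := by
      have := cpos 0 hX0ne; have := cpos 1 hX1ne; have := cpos 2 hX2ne
      have := cpos 3 h3e; omega
    have h3c : (X 3).card = 1 := by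
      have := cpos 0 hX0ne; have := cpos 1 hX1ne; have := cpos 2 hX2ne
      have := cpos 3 h3e; omega
    obtain ⟨kA, hXA⟩ := Finset.card_eq_one.mp h0c
    obtain ⟨kB, hXB⟩ := Finset.card_eq_one.mp h1c
    obtain ⟨kC, hXC⟩ := Finset.card_eq_one.mp h2c
    obtain ⟨kD, hXD⟩ := Finset.card_eq_one.mp h3c
    have pA : p kA = a := by
      have h := sumX 0 kA (by rw [hXA]; exact Finset.mem_singleton_self kA)
      rwa [hXA, Finset.sum_singleton, ta] at h
    have pB : p kB = b := by
      have h := sumX 1 kB (by rw [hXB]; exact Finset.mem_singleton_self kB)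
      rwa [hXB, Finset.sum_singleton, tb] at h
    have pC : p kC = c := by
      have h := sumX 2 kC (by rw [hXC]; exact Finset.mem_singleton_self kC)
      rwa [hXC, Finset.sum_singleton, tc] at h
    have pD : p kD = d := by
      have h := sumX 3 kD (by rw [hXD]; exact Finset.mem_singleton_self kD)
      rwa [hXD, Finset.sum_singleton, td] at h
    rcases hc4 kA with rfl | rfl | rfl | rfl
    · -- Alice holds w
      rcases hc4 kC with rfl | rfl | rfl | rfl
      · -- Carl holds w : conflict with Alice
        exact Finset.disjoint_left.mp (hdisj 0 2 (by decide))
          (by rw [hXA]; exact Finset.mem_singleton_self w)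
          (by rw [hXC]; exact Finset.mem_singleton_self w)
      · -- Carl holds x (price c)
        obtain ⟨j, hj⟩ := owner y
        rcases ha4 j with rfl | rfl | rfl | rfl
        · rw [hXA, Finset.mem_singleton] at hj; exact absurd hj (by decide)
        · -- Bob holds y, so z must be Dana's
          rw [hXB, Finset.mem_singleton] at hj
          obtain ⟨j', hz⟩ := owner z
          rcases ha4 j' with rfl | rfl | rfl | rfl
          · rw [hXA, Finset.mem_singleton] at hz; exact absurd hz (by decide)
          · rw [hXB, Finset.mem_singleton, ← hj] at hz; exact absurd hz (by decide)
          · rw [hXC, Finset.mem_singleton] at hz; exact absurd hz (by decide)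
          · rw [hXD, Finset.mem_singleton] at hz
            have hk := keyB {z} (by rw [hXB, ← hj]; exact pbzy)
            rw [Finset.sum_singleton] at hk
            rw [← hz] at pD
            linarith
        · rw [hXC, Finset.mem_singleton] at hj; exact absurd hj (by decide)
        · -- Dana holds y (price d); Alice can afford {x,y}
          rw [hXD, Finset.mem_singleton] at hj
          have hk := keyA {x, y} (by rw [hXA]; exact hA1)
          rw [Finset.sum_pair (by decide)] at hk
          rw [← hj] at pD
          linarith
      · -- Carl holds y (price c); Carl prefers x
        have hk := keyC {x} (by rw [hXC]; exact hC1)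
        rw [Finset.sum_singleton] at hk
        obtain ⟨j, hj⟩ := owner x
        rcases ha4 j with rfl | rfl | rfl | rfl
        · rw [hXA, Finset.mem_singleton] at hj; exact absurd hj (by decide)
        · -- Bob holds x; Bob prefers z, and z must be Dana's
          rw [hXB, Finset.mem_singleton] at hj
          obtain ⟨j', hz⟩ := owner z
          rcases ha4 j' with rfl | rfl | rfl | rfl
          · rw [hXA, Finset.mem_singleton] at hz; exact absurd hz (by decide)
          · rw [hXB, Finset.mem_singleton, ← hj] at hz; exact absurd hz (by decide)
          · rw [hXC, Finset.mem_singleton] at hz; exact absurd hz (by decide)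
          · rw [hXD, Finset.mem_singleton] at hz
            have hk2 := keyB {z} (by rw [hXB, ← hj]; exact hB2)
            rw [Finset.sum_singleton] at hk2
            rw [← hz] at pD
            linarith
        · rw [hXC, Finset.mem_singleton] at hj; exact absurd hj (by decide)
        · rw [hXD, Finset.mem_singleton] at hj
          rw [← hj] at pD
          linarith
      · -- Carl holds z (price c); Carl prefers y
        have hk := keyC {y} (by rw [hXC]; exact pcyz)
        rw [Finset.sum_singleton] at hk
        obtain ⟨j, hj⟩ := owner y
        rcases ha4 j with rfl | rfl | rfl | rfl
        · rw [hXA, Finset.mem_singleton] at hj; exact absurd hj (by decide)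
        · -- Bob holds y, so x must be Dana's; Carl prefers x
          rw [hXB, Finset.mem_singleton] at hj
          obtain ⟨j', hx⟩ := owner x
          rcases ha4 j' with rfl | rfl | rfl | rfl
          · rw [hXA, Finset.mem_singleton] at hx; exact absurd hx (by decide)
          · rw [hXB, Finset.mem_singleton, ← hj] at hx; exact absurd hx (by decide)
          · rw [hXC, Finset.mem_singleton] at hx; exact absurd hx (by decide)
          · rw [hXD, Finset.mem_singleton] at hx
            have hk2 := keyC {x} (by rw [hXC]; exact pcxz)
            rw [Finset.sum_singleton] at hk2
            rw [← hx] at pD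
            linarith
        · rw [hXC, Finset.mem_singleton] at hj; exact absurd hj (by decide)
        · rw [hXD, Finset.mem_singleton] at hj
          rw [← hj] at pD
          linarith
    · -- Alice holds x : she prefers w, which is too cheap
      have hk := keyA {w} (by rw [hXA]; exact pwx)
      rw [Finset.sum_singleton] at hk
      obtain ⟨j, hj⟩ := owner w
      rcases ha4 j with rfl | rfl | rfl | rfl
      · rw [hXA, Finset.mem_singleton] at hj; exact absurd hj (by decide)
      · rw [hXB, Finset.mem_singleton] at hj; rw [← hj] at pB; linarith
      · rw [hXC, Finset.mem_singleton] at hj; rw [← hj] at pC; linarith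
      · rw [hXD, Finset.mem_singleton] at hj; rw [← hj] at pD; linarith
    · -- Alice holds y
      have hk := keyA {w} (by rw [hXA]; exact pwy)
      rw [Finset.sum_singleton] at hk
      obtain ⟨j, hj⟩ := owner w
      rcases ha4 j with rfl | rfl | rfl | rfl
      · rw [hXA, Finset.mem_singleton] at hj; exact absurd hj (by decide)
      · rw [hXB, Finset.mem_singleton] at hj; rw [← hj] at pB; linarith
      · rw [hXC, Finset.mem_singleton] at hj; rw [← hj] at pC; linarith
      · rw [hXD, Finset.mem_singleton] at hj; rw [← hj] at pD; linarith
    · -- Alice holds z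
      have hk := keyA {w} (by rw [hXA]; exact pwz)
      rw [Finset.sum_singleton] at hk
      obtain ⟨j, hj⟩ := owner w
      rcases ha4 j with rfl | rfl | rfl | rfl
      · rw [hXA, Finset.mem_singleton] at hj; exact absurd hj (by decide)
      · rw [hXB, Finset.mem_singleton] at hj; rw [← hj] at pB; linarith
      · rw [hXC, Finset.mem_singleton] at hj; rw [← hj] at pC; linarith
      · rw [hXD, Finset.mem_singleton] at hj; rw [← hj] at pD; linarith

end FourItemsFourAgents
end

section
/- Non-existence of CE with 5 items and 2 agents: for incomes a > b > 3a/4 and the specified strict monotone preferences of Alice and Bob over bundles of {v,w,x,y,z}, no competitive equilibrium exists. -/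
open Finset

namespace FiveItemsTwoAgents

def v : Fin 5 := 0
def w : Fin 5 := 1
def x : Fin 5 := 2
def y : Fin 5 := 3
def z : Fin 5 := 4


private lemma core (a b : ℝ) (ha : 0 < a) (hab : a > b) (hb34 : b > 3 * a / 4)
    (pref : Fin 2 → Finset (Fin 5) → Finset (Fin 5) → Prop)
    (hpref : ∀ i, StrictMonoPref (pref i))
    (hA1 : ∀ S T : Finset (Fin 5), S.card = 4 →
      (T = {v, w, x} ∨ T = {v, w, y} ∨ T = {v, w, z}) → pref 0 S T)
    (hA2 : ∀ T : Finset (Fin 5),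
      (T = {v, w, x} ∨ T = {v, w, y} ∨ T = {v, w, z}) → pref 0 T {v, w})
    (hA3 : pref 0 {v, w} {x, y, z})
    (hA4 : ∀ T : Finset (Fin 5), T.card = 3 →
      T ≠ {v, w, x} → T ≠ {v, w, y} → T ≠ {v, w, z} → T ≠ {x, y, z} →
      pref 0 {x, y, z} T)
    (hA5 : ∀ S T : Finset (Fin 5), S.card = 3 →
      S ≠ {v, w, x} → S ≠ {v, w, y} → S ≠ {v, w, z} → S ≠ {x, y, z} →
      T.card = 2 → T ≠ {v, w} → pref 0 S T)
    (hA6 : ∀ T S : Finset (Fin 5), T.card = 2 → T ≠ {v, w} → S.card = 1 →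
      pref 0 T S)
    (hB3 : ∀ T : Finset (Fin 5),
      (T = {v, x} ∨ T = {v, y} ∨ T = {v, z} ∨
       T = {w, x} ∨ T = {w, y} ∨ T = {w, z}) → pref 1 T {x, y, z})
    (hB4 : pref 1 {x, y, z} {v, w})
    (hB5 : pref 1 {v, w} {v})
    (hB6 : pref 1 {v} {w})
    (hB7 : ∀ T : Finset (Fin 5), (T = {x, y} ∨ T = {x, z} ∨ T = {y, z}) →
      pref 1 {w} T)
    (hB8 : ∀ T S : Finset (Fin 5), (T = {x, y} ∨ T = {x, z} ∨ T = {y, z}) →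
      (S = {x} ∨ S = {y} ∨ S = {z}) → pref 1 T S)
    (p : Fin 5 → ℝ) (hp : ∀ k, 0 < p k)
    (A : Finset (Fin 5))
    (hbA : A ≠ ∅ → ∑ k ∈ A, p k = a)
    (hbB : Aᶜ ≠ ∅ → ∑ k ∈ Aᶜ, p k = b)
    (hoA : ∀ Y, Y ≠ A → pref 0 A Y ∨ a < ∑ k ∈ Y, p k)
    (hoB : ∀ Y, Y ≠ Aᶜ → pref 1 Aᶜ Y ∨ b < ∑ k ∈ Y, p k) : False := by
  obtain ⟨tr0, as0, to0, mo0⟩ := hpref 0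
  obtain ⟨tr1, as1, to1, mo1⟩ := hpref 1
  -- Alice prefers any quartet to any singleton
  have H1 : ∀ S T : Finset (Fin 5), S.card = 4 → T.card = 1 → pref 0 S T := by
    intro S T h4 h1
    have p1 : pref 0 S {v, w, x} := hA1 S {v, w, x} h4 (Or.inl rfl)
    have p2 : pref 0 ({v, w, x} : Finset (Fin 5)) {v, w} := hA2 _ (Or.inl rfl)
    have p4 : pref 0 ({x, y, z} : Finset (Fin 5)) {v, x, y} :=
      hA4 {v, x, y} (by decide) (by decide) (by decide) (by decide) (by decide)
    have p5 : pref 0 ({v, x, y} : Finset (Fin 5)) {v, x} :=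
      hA5 {v, x, y} {v, x} (by decide) (by decide) (by decide) (by decide) (by decide) (by decide) (by decide)
    have p6 : pref 0 ({v, x} : Finset (Fin 5)) T := hA6 {v, x} T (by decide) (by decide) h1
    exact tr0 _ _ _ p1 (tr0 _ _ _ p2 (tr0 _ _ _ hA3 (tr0 _ _ _ p4 (tr0 _ _ _ p5 p6))))
  -- Alice prefers any triplet to any pair other than {v,w}
  have H2 : ∀ T P : Finset (Fin 5), T.card = 3 → P.card = 2 → P ≠ {v, w} → pref 0 T P := by
    intro T P h3 h2 hP
    have p4 : pref 0 ({x, y, z} : Finset (Fin 5)) {v, x, y} :=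
      hA4 {v, x, y} (by decide) (by decide) (by decide) (by decide) (by decide)
    have base : pref 0 ({x, y, z} : Finset (Fin 5)) P :=
      tr0 _ _ _ p4 (hA5 {v, x, y} P (by decide) (by decide) (by decide) (by decide) (by decide) h2 hP)
    by_cases hs : T = {v, w, x} ∨ T = {v, w, y} ∨ T = {v, w, z}
    · exact tr0 _ _ _ (hA2 T hs) (tr0 _ _ _ hA3 base)
    · push_neg at hs
      by_cases hx : T = {x, y, z}
      · rw [hx]; exact base
      · exact hA5 T P h3 hs.1 hs.2.1 hs.2.2 hx h2 hP
  have gc0 : A = ∅ → False := by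
    intro h0
    rw [h0] at hoA hbB
    rw [show ((∅ : Finset (Fin 5))ᶜ) = Finset.univ from by simp] at hbB
    have h := (hoA Finset.univ (by decide)).resolve_left (as0 _ _ (mo0 _ _ (by decide)))
    rw [hbB (by decide)] at h
    linarith
  have gc1 : A.card = 1 → False := by
    intro h1
    have hcne : Aᶜ.card = 4 := by simp [Finset.card_compl, h1]
    have hne : Aᶜ ≠ A := fun h => by rw [h, h1] at hcne; exact absurd hcne (by decide)
    have hBne : Aᶜ ≠ ∅ := fun h => by rw [h] at hcne; simp at hcne
    have h := (hoA Aᶜ hne).resolve_left (as0 _ _ (H1 Aᶜ A hcne h1))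
    rw [hbB hBne] at h
    linarith
  have gc2 : A.card = 2 → A ≠ {v, w} → False := by
    intro h2 hvw
    have hcne : Aᶜ.card = 3 := by simp [Finset.card_compl, h2]
    have hne : Aᶜ ≠ A := fun h => by rw [h, h2] at hcne; exact absurd hcne (by decide)
    have hBne : Aᶜ ≠ ∅ := fun h => by rw [h] at hcne; simp at hcne
    have h := (hoA Aᶜ hne).resolve_left (as0 _ _ (H2 Aᶜ A hcne h2 hvw))
    rw [hbB hBne] at h
    linarith
  rcases (show A.card = 0 ∨ A.card = 1 ∨ A.card = 2 ∨ A.card = 3 ∨ A.card = 4 ∨ A.card = 5 by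
      have := Finset.card_le_univ A
      simp only [Finset.card_univ, Fintype.card_fin] at this
      omega) with h | h | h | h | h | h
  · exact gc0 (Finset.card_eq_zero.mp h)
  · exact gc1 h
  · by_cases hvw : A = {v, w}
    · subst hvw
      rw [show (({v, w} : Finset (Fin 5))ᶜ) = {x, y, z} from by decide] at hbB hoB
      have hbA' := hbA (by decide)
      rw [Finset.sum_pair (by decide)] at hbA'
      have hbB' := hbB (by decide)
      rw [Finset.sum_insert (by decide), Finset.sum_pair (by decide)] at hbB'
      have c1 : b < p v + p x := by
        have h := (hoB {v, x} (by decide)).resolve_left (as1 _ _ (hB3 {v, x} (Or.inl rfl)))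
        rwa [Finset.sum_pair (by decide)] at h
      have c2 : b < p v + p y := by
        have h := (hoB {v, y} (by decide)).resolve_left (as1 _ _ (hB3 {v, y} (Or.inr (Or.inl rfl))))
        rwa [Finset.sum_pair (by decide)] at h
      have c3 : b < p v + p z := by
        have h := (hoB {v, z} (by decide)).resolve_left (as1 _ _ (hB3 {v, z} (Or.inr (Or.inr (Or.inl rfl)))))
        rwa [Finset.sum_pair (by decide)] at h
      have c4 : b < p w + p x := by
        have h := (hoB {w, x} (by decide)).resolve_left (as1 _ _ (hB3 {w, x} (Or.inr (Or.inr (Or.inr (Or.inl rfl))))))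
        rwa [Finset.sum_pair (by decide)] at h
      have c5 : b < p w + p y := by
        have h := (hoB {w, y} (by decide)).resolve_left (as1 _ _ (hB3 {w, y} (Or.inr (Or.inr (Or.inr (Or.inr (Or.inl rfl)))))))
        rwa [Finset.sum_pair (by decide)] at h
      have c6 : b < p w + p z := by
        have h := (hoB {w, z} (by decide)).resolve_left (as1 _ _ (hB3 {w, z} (Or.inr (Or.inr (Or.inr (Or.inr (Or.inr rfl)))))))
        rwa [Finset.sum_pair (by decide)] at h
      linarith
    · exact gc2 h hvw
  · rcases (by decide : ∀ B : Finset (Fin 5), B.card = 3 → (B = {v, w, x} ∨ B = {v, w, y} ∨ B = {v, w, z} ∨ B = {v, x, y} ∨ B = {v, x, z} ∨ B = {v, y, z} ∨ B = {w, x, y} ∨ B = {w, x, z} ∨ B = {w, y, z} ∨ B = {x, y, z})) A h with rfl | rfl | rfl | rfl | rfl | rfl | rfl | rfl | rfl | rfl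
    · -- A = {v, w, x}
      rw [show (({v, w, x} : Finset (Fin 5))ᶜ) = {y, z} from by decide] at hbB hoB
      have hv : b < p v := by
        have h := (hoB {v} (by decide)).resolve_left
          (as1 _ _ (tr1 _ _ _ hB6 (hB7 {y, z} (Or.inr (Or.inr rfl)))))
        rwa [Finset.sum_singleton] at h
      have hw : b < p w := by
        have h := (hoB {w} (by decide)).resolve_left (as1 _ _ (hB7 {y, z} (Or.inr (Or.inr rfl))))
        rwa [Finset.sum_singleton] at h
      have hbA' := hbA (by decide)
      rw [Finset.sum_insert (by decide), Finset.sum_pair (by decide)] at hbA'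
      linarith [hp x]
    · -- A = {v, w, y}
      rw [show (({v, w, y} : Finset (Fin 5))ᶜ) = {x, z} from by decide] at hbB hoB
      have hv : b < p v := by
        have h := (hoB {v} (by decide)).resolve_left
          (as1 _ _ (tr1 _ _ _ hB6 (hB7 {x, z} (Or.inr (Or.inl rfl)))))
        rwa [Finset.sum_singleton] at h
      have hw : b < p w := by
        have h := (hoB {w} (by decide)).resolve_left (as1 _ _ (hB7 {x, z} (Or.inr (Or.inl rfl))))
        rwa [Finset.sum_singleton] at h
      have hbA' := hbA (by decide)
      rw [Finset.sum_insert (by decide), Finset.sum_pair (by decide)] at hbA'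
      linarith [hp y]
    · -- A = {v, w, z}
      rw [show (({v, w, z} : Finset (Fin 5))ᶜ) = {x, y} from by decide] at hbB hoB
      have hv : b < p v := by
        have h := (hoB {v} (by decide)).resolve_left
          (as1 _ _ (tr1 _ _ _ hB6 (hB7 {x, y} (Or.inl rfl))))
        rwa [Finset.sum_singleton] at h
      have hw : b < p w := by
        have h := (hoB {w} (by decide)).resolve_left (as1 _ _ (hB7 {x, y} (Or.inl rfl)))
        rwa [Finset.sum_singleton] at h
      have hbA' := hbA (by decide)
      rw [Finset.sum_insert (by decide), Finset.sum_pair (by decide)] at hbA'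
      linarith [hp z]
    · -- A = {v, x, y}
      rw [show (({v, x, y} : Finset (Fin 5))ᶜ) = {w, z} from by decide] at hbB hoB
      have hnsp : pref 0 ({x, y, z} : Finset (Fin 5)) {v, x, y} :=
        hA4 {v, x, y} (by decide) (by decide) (by decide) (by decide) (by decide)
      have h1 : a < p v + p w := by
        have h := (hoA {v, w} (by decide)).resolve_left (as0 _ _ (tr0 _ _ _ hA3 hnsp))
        rwa [Finset.sum_pair (by decide)] at h
      have h2 : a < p x + (p y + p z) := by
        have h := (hoA {x, y, z} (by decide)).resolve_left (as0 _ _ hnsp)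
        rwa [Finset.sum_insert (by decide), Finset.sum_pair (by decide)] at h
      have hbA' := hbA (by decide)
      rw [Finset.sum_insert (by decide), Finset.sum_pair (by decide)] at hbA'
      have hbB' := hbB (by decide)
      rw [Finset.sum_pair (by decide)] at hbB'
      linarith
    · -- A = {v, x, z}
      rw [show (({v, x, z} : Finset (Fin 5))ᶜ) = {w, y} from by decide] at hbB hoB
      have hnsp : pref 0 ({x, y, z} : Finset (Fin 5)) {v, x, z} :=
        hA4 {v, x, z} (by decide) (by decide) (by decide) (by decide) (by decide)
      have h1 : a < p v + p w := by
        have h := (hoA {v, w} (by decide)).resolve_left (as0 _ _ (tr0 _ _ _ hA3 hnsp))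
        rwa [Finset.sum_pair (by decide)] at h
      have h2 : a < p x + (p y + p z) := by
        have h := (hoA {x, y, z} (by decide)).resolve_left (as0 _ _ hnsp)
        rwa [Finset.sum_insert (by decide), Finset.sum_pair (by decide)] at h
      have hbA' := hbA (by decide)
      rw [Finset.sum_insert (by decide), Finset.sum_pair (by decide)] at hbA'
      have hbB' := hbB (by decide)
      rw [Finset.sum_pair (by decide)] at hbB'
      linarith
    · -- A = {v, y, z}
      rw [show (({v, y, z} : Finset (Fin 5))ᶜ) = {w, x} from by decide] at hbB hoB
      have hnsp : pref 0 ({x, y, z} : Finset (Fin 5)) {v, y, z} :=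
        hA4 {v, y, z} (by decide) (by decide) (by decide) (by decide) (by decide)
      have h1 : a < p v + p w := by
        have h := (hoA {v, w} (by decide)).resolve_left (as0 _ _ (tr0 _ _ _ hA3 hnsp))
        rwa [Finset.sum_pair (by decide)] at h
      have h2 : a < p x + (p y + p z) := by
        have h := (hoA {x, y, z} (by decide)).resolve_left (as0 _ _ hnsp)
        rwa [Finset.sum_insert (by decide), Finset.sum_pair (by decide)] at h
      have hbA' := hbA (by decide)
      rw [Finset.sum_insert (by decide), Finset.sum_pair (by decide)] at hbA'
      have hbB' := hbB (by decide)
      rw [Finset.sum_pair (by decide)] at hbB'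
      linarith
    · -- A = {w, x, y}
      rw [show (({w, x, y} : Finset (Fin 5))ᶜ) = {v, z} from by decide] at hbB hoB
      have hnsp : pref 0 ({x, y, z} : Finset (Fin 5)) {w, x, y} :=
        hA4 {w, x, y} (by decide) (by decide) (by decide) (by decide) (by decide)
      have h1 : a < p v + p w := by
        have h := (hoA {v, w} (by decide)).resolve_left (as0 _ _ (tr0 _ _ _ hA3 hnsp))
        rwa [Finset.sum_pair (by decide)] at h
      have h2 : a < p x + (p y + p z) := by
        have h := (hoA {x, y, z} (by decide)).resolve_left (as0 _ _ hnsp)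
        rwa [Finset.sum_insert (by decide), Finset.sum_pair (by decide)] at h
      have hbA' := hbA (by decide)
      rw [Finset.sum_insert (by decide), Finset.sum_pair (by decide)] at hbA'
      have hbB' := hbB (by decide)
      rw [Finset.sum_pair (by decide)] at hbB'
      linarith
    · -- A = {w, x, z}
      rw [show (({w, x, z} : Finset (Fin 5))ᶜ) = {v, y} from by decide] at hbB hoB
      have hnsp : pref 0 ({x, y, z} : Finset (Fin 5)) {w, x, z} :=
        hA4 {w, x, z} (by decide) (by decide) (by decide) (by decide) (by decide)
      have h1 : a < p v + p w := by
        have h := (hoA {v, w} (by decide)).resolve_left (as0 _ _ (tr0 _ _ _ hA3 hnsp))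
        rwa [Finset.sum_pair (by decide)] at h
      have h2 : a < p x + (p y + p z) := by
        have h := (hoA {x, y, z} (by decide)).resolve_left (as0 _ _ hnsp)
        rwa [Finset.sum_insert (by decide), Finset.sum_pair (by decide)] at h
      have hbA' := hbA (by decide)
      rw [Finset.sum_insert (by decide), Finset.sum_pair (by decide)] at hbA'
      have hbB' := hbB (by decide)
      rw [Finset.sum_pair (by decide)] at hbB'
      linarith
    · -- A = {w, y, z}
      rw [show (({w, y, z} : Finset (Fin 5))ᶜ) = {v, x} from by decide] at hbB hoB
      have hnsp : pref 0 ({x, y, z} : Finset (Fin 5)) {w, y, z} :=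
        hA4 {w, y, z} (by decide) (by decide) (by decide) (by decide) (by decide)
      have h1 : a < p v + p w := by
        have h := (hoA {v, w} (by decide)).resolve_left (as0 _ _ (tr0 _ _ _ hA3 hnsp))
        rwa [Finset.sum_pair (by decide)] at h
      have h2 : a < p x + (p y + p z) := by
        have h := (hoA {x, y, z} (by decide)).resolve_left (as0 _ _ hnsp)
        rwa [Finset.sum_insert (by decide), Finset.sum_pair (by decide)] at h
      have hbA' := hbA (by decide)
      rw [Finset.sum_insert (by decide), Finset.sum_pair (by decide)] at hbA'
      have hbB' := hbB (by decide)
      rw [Finset.sum_pair (by decide)] at hbB'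
      linarith
    · -- A = {x, y, z}
      rw [show (({x, y, z} : Finset (Fin 5))ᶜ) = {v, w} from by decide] at hbB hoB
      have h := (hoA {v, w} (by decide)).resolve_left (as0 _ _ hA3)
      rw [hbB (by decide)] at h
      linarith
  · rcases (by decide : ∀ B : Finset (Fin 5), B.card = 4 → (B = {v, w, x, y} ∨ B = {v, w, x, z} ∨ B = {v, w, y, z} ∨ B = {v, x, y, z} ∨ B = {w, x, y, z})) A h with rfl | rfl | rfl | rfl | rfl
    · -- A = {v, w, x, y}
      rw [show (({v, w, x, y} : Finset (Fin 5))ᶜ) = {z} from by decide] at hbB hoB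
      have hps := hbB (by decide)
      rw [Finset.sum_singleton] at hps
      have pw : pref 1 ({w} : Finset (Fin 5)) {z} :=
        tr1 _ _ _ (hB7 {x, y} (Or.inl rfl)) (hB8 {x, y} {z} (Or.inl rfl) (Or.inr (Or.inr rfl)))
      have cw : b < p w := by
        have h := (hoB {w} (by decide)).resolve_left (as1 _ _ pw)
        rwa [Finset.sum_singleton] at h
      have cv : b < p v := by
        have h := (hoB {v} (by decide)).resolve_left (as1 _ _ (tr1 _ _ _ hB6 pw))
        rwa [Finset.sum_singleton] at h
      have hbA' := hbA (by decide)
      rw [Finset.sum_insert (by decide), Finset.sum_insert (by decide), Finset.sum_pair (by decide)] at hbA'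
      linarith [hp x, hp y]
    · -- A = {v, w, x, z}
      rw [show (({v, w, x, z} : Finset (Fin 5))ᶜ) = {y} from by decide] at hbB hoB
      have hps := hbB (by decide)
      rw [Finset.sum_singleton] at hps
      have pw : pref 1 ({w} : Finset (Fin 5)) {y} :=
        tr1 _ _ _ (hB7 {x, y} (Or.inl rfl)) (hB8 {x, y} {y} (Or.inl rfl) (Or.inr (Or.inl rfl)))
      have cw : b < p w := by
        have h := (hoB {w} (by decide)).resolve_left (as1 _ _ pw)
        rwa [Finset.sum_singleton] at h
      have cv : b < p v := by
        have h := (hoB {v} (by decide)).resolve_left (as1 _ _ (tr1 _ _ _ hB6 pw))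
        rwa [Finset.sum_singleton] at h
      have hbA' := hbA (by decide)
      rw [Finset.sum_insert (by decide), Finset.sum_insert (by decide), Finset.sum_pair (by decide)] at hbA'
      linarith [hp x, hp z]
    · -- A = {v, w, y, z}
      rw [show (({v, w, y, z} : Finset (Fin 5))ᶜ) = {x} from by decide] at hbB hoB
      have hps := hbB (by decide)
      rw [Finset.sum_singleton] at hps
      have pw : pref 1 ({w} : Finset (Fin 5)) {x} :=
        tr1 _ _ _ (hB7 {x, y} (Or.inl rfl)) (hB8 {x, y} {x} (Or.inl rfl) (Or.inl rfl))
      have cw : b < p w := by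
        have h := (hoB {w} (by decide)).resolve_left (as1 _ _ pw)
        rwa [Finset.sum_singleton] at h
      have cv : b < p v := by
        have h := (hoB {v} (by decide)).resolve_left (as1 _ _ (tr1 _ _ _ hB6 pw))
        rwa [Finset.sum_singleton] at h
      have hbA' := hbA (by decide)
      rw [Finset.sum_insert (by decide), Finset.sum_insert (by decide), Finset.sum_pair (by decide)] at hbA'
      linarith [hp y, hp z]
    · -- A = {v, x, y, z}
      rw [show (({v, x, y, z} : Finset (Fin 5))ᶜ) = {w} from by decide] at hbB hoB
      have hpw := hbB (by decide)
      rw [Finset.sum_singleton] at hpw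
      have cv : b < p v := by
        have h := (hoB {v} (by decide)).resolve_left (as1 _ _ hB6)
        rwa [Finset.sum_singleton] at h
      have cxyz : b < p x + (p y + p z) := by
        have h := (hoB {x, y, z} (by decide)).resolve_left
          (as1 _ _ (tr1 _ _ _ (tr1 _ _ _ hB4 hB5) hB6))
        rwa [Finset.sum_insert (by decide), Finset.sum_pair (by decide)] at h
      have hbA' := hbA (by decide)
      rw [Finset.sum_insert (by decide), Finset.sum_insert (by decide), Finset.sum_pair (by decide)] at hbA'
      linarith
    · -- A = {w, x, y, z}
      rw [show (({w, x, y, z} : Finset (Fin 5))ᶜ) = {v} from by decide] at hbB hoB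
      have hpv := hbB (by decide)
      rw [Finset.sum_singleton] at hpv
      have hxyzv : pref 1 ({x, y, z} : Finset (Fin 5)) {v} := tr1 _ _ _ hB4 hB5
      have c1 : b < p w + p x := by
        have h := (hoB {w, x} (by decide)).resolve_left
          (as1 _ _ (tr1 _ _ _ (hB3 {w, x} (Or.inr (Or.inr (Or.inr (Or.inl rfl))))) hxyzv))
        rwa [Finset.sum_pair (by decide)] at h
      have c2 : b < p w + p y := by
        have h := (hoB {w, y} (by decide)).resolve_left
          (as1 _ _ (tr1 _ _ _ (hB3 {w, y} (Or.inr (Or.inr (Or.inr (Or.inr (Or.inl rfl)))))) hxyzv))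
        rwa [Finset.sum_pair (by decide)] at h
      have c3 : b < p w + p z := by
        have h := (hoB {w, z} (by decide)).resolve_left
          (as1 _ _ (tr1 _ _ _ (hB3 {w, z} (Or.inr (Or.inr (Or.inr (Or.inr (Or.inr rfl)))))) hxyzv))
        rwa [Finset.sum_pair (by decide)] at h
      have c4 : b < p x + (p y + p z) := by
        have h := (hoB {x, y, z} (by decide)).resolve_left (as1 _ _ hxyzv)
        rwa [Finset.sum_insert (by decide), Finset.sum_pair (by decide)] at h
      have hbA' := hbA (by decide)
      rw [Finset.sum_insert (by decide), Finset.sum_insert (by decide), Finset.sum_pair (by decide)] at hbA'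
      linarith
  · have hA5' : A = {v, w, x, y, z} :=
      (by decide : ∀ B : Finset (Fin 5), B.card = 5 → B = {v, w, x, y, z}) A h
    subst hA5'
    rw [show (({v, w, x, y, z} : Finset (Fin 5))ᶜ) = ∅ from by decide] at hoB
    have key : ∀ k : Fin 5, b < p k := by
      intro k
      have h := (hoB {k} (by simp)).resolve_left
        (as1 _ _ (mo1 _ _ (Finset.empty_ssubset.mpr (Finset.singleton_nonempty k))))
      rwa [Finset.sum_singleton] at h
    have hbA' := hbA (by decide)
    rw [Finset.sum_insert (by decide), Finset.sum_insert (by decide), Finset.sum_insert (by decide),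
      Finset.sum_pair (by decide)] at hbA'
    linarith [key v, key w, key x, key y, key z]


/-- **Non-existence of CE with 5 items and 2 agents.**
Agents Alice (0) and Bob (1) with incomes `a > b > 3a/4 > 0`, and strict
monotone preferences containing:
Alice: quartets ≻ vwx, vwy, vwz ≻ vw ≻ xyz ≻ (other triplets) ≻
       (pairs other than vw) ≻ singletons;
Bob:   quartets ≻ (triplets except xyz) ≻ vx, vy, vz, wx, wy, wz ≻ xyz ≻
       vw ≻ v ≻ w ≻ xy, xz, yz ≻ x, y, z.
Then no competitive equilibrium exists. -/
theorem no_CE_five_items_two_agents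
    (a b : ℝ) (ha : 0 < a) (hab : a > b) (hb34 : b > 3 * a / 4)
    (pref : Fin 2 → Finset (Fin 5) → Finset (Fin 5) → Prop)
    (hpref : ∀ i, StrictMonoPref (pref i))
    -- Alice
    (hA1 : ∀ S T : Finset (Fin 5), S.card = 4 →
      (T = {v, w, x} ∨ T = {v, w, y} ∨ T = {v, w, z}) → pref 0 S T)
    (hA2 : ∀ T : Finset (Fin 5),
      (T = {v, w, x} ∨ T = {v, w, y} ∨ T = {v, w, z}) → pref 0 T {v, w})
    (hA3 : pref 0 {v, w} {x, y, z})
    (hA4 : ∀ T : Finset (Fin 5), T.card = 3 →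
      T ≠ {v, w, x} → T ≠ {v, w, y} → T ≠ {v, w, z} → T ≠ {x, y, z} →
      pref 0 {x, y, z} T)
    (hA5 : ∀ S T : Finset (Fin 5), S.card = 3 →
      S ≠ {v, w, x} → S ≠ {v, w, y} → S ≠ {v, w, z} → S ≠ {x, y, z} →
      T.card = 2 → T ≠ {v, w} → pref 0 S T)
    (hA6 : ∀ T S : Finset (Fin 5), T.card = 2 → T ≠ {v, w} → S.card = 1 →
      pref 0 T S)
    -- Bob
    (hB1 : ∀ S T : Finset (Fin 5), S.card = 4 → T.card = 3 → T ≠ {x, y, z} →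
      pref 1 S T)
    (hB2 : ∀ S T : Finset (Fin 5), S.card = 3 → S ≠ {x, y, z} →
      (T = {v, x} ∨ T = {v, y} ∨ T = {v, z} ∨
       T = {w, x} ∨ T = {w, y} ∨ T = {w, z}) → pref 1 S T)
    (hB3 : ∀ T : Finset (Fin 5),
      (T = {v, x} ∨ T = {v, y} ∨ T = {v, z} ∨
       T = {w, x} ∨ T = {w, y} ∨ T = {w, z}) → pref 1 T {x, y, z})
    (hB4 : pref 1 {x, y, z} {v, w})
    (hB5 : pref 1 {v, w} {v})
    (hB6 : pref 1 {v} {w})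
    (hB7 : ∀ T : Finset (Fin 5), (T = {x, y} ∨ T = {x, z} ∨ T = {y, z}) →
      pref 1 {w} T)
    (hB8 : ∀ T S : Finset (Fin 5), (T = {x, y} ∨ T = {x, z} ∨ T = {y, z}) →
      (S = {x} ∨ S = {y} ∨ S = {z}) → pref 1 T S) :
    ¬ ∃ (p : Fin 5 → ℝ) (X : Fin 2 → Finset (Fin 5)),
        IsCE ![a, b] pref p X := by
  rintro ⟨p, X, hp, hdisj, hcover, hbudget, hopt⟩
  have hd : Disjoint (X 0) (X 1) := hdisj 0 1 (by decide)
  have hu : X 0 ∪ X 1 = Finset.univ := by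
    have h2 : (Finset.univ : Finset (Fin 2)) = {0, 1} := by decide
    rw [h2, Finset.biUnion_insert, Finset.singleton_biUnion] at hcover
    exact hcover
  have hX1 : X 1 = (X 0)ᶜ := by
    ext k
    simp only [Finset.mem_compl]
    constructor
    · intro h1 h0
      exact Finset.disjoint_left.mp hd h0 h1
    · intro h0
      have hk : k ∈ X 0 ∪ X 1 := by rw [hu]; exact Finset.mem_univ k
      exact (Finset.mem_union.mp hk).resolve_left h0
  exact core a b ha hab hb34 pref hpref hA1 hA2 hA3 hA4 hA5 hA6 hB3 hB4 hB5 hB6 hB7 hB8 p hp (X 0)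
    (fun h => by have := hbudget 0 h; simpa using this)
    (fun h => by rw [← hX1] at h ⊢; have := hbudget 1 h; simpa using this)
    (fun Y hY => by have := hopt 0 Y hY; simpa using this)
    (fun Y hY => by
      rw [← hX1] at hY
      have := hopt 1 Y hY
      rw [hX1] at this
      simpa using this)


end FiveItemsTwoAgents
end

section
/- Generalized fairness of CE (Proposition 7.1): if (X_1,...,X_n) is a competitive equilibrium allocation with prices p and incomes t_1,...,t_n, then for any agent (Alice, income a, bundle A), any subset K of agents, and integers 1 ≤ l ≤ d, if a ≥ (l/d)·Σ_{i∈K} t_i then A is weakly preferred by Alice to her l-out-of-d maximin bundle of ∪_{i∈K} X_i. -/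
/-!
Order the `d` parts by price: the `l` cheapest ones cost at most `l / d` of the whole union,
which costs at most the incomes of `K`, hence at most Alice's income. So Alice can afford
those `l` parts, and the equilibrium condition says she weakly prefers her own bundle to them.
-/

open Finset

theorem Finset.exists_card_eq_forall_le_of_notMem {ι α : Type*} [Fintype ι] [DecidableEq ι]
    [LinearOrder α] (f : ι → α) {l : ℕ} (hl : l ≤ Fintype.card ι) :
    ∃ S : Finset ι, #S = l ∧ ∀ i ∈ S, ∀ j ∉ S, f i ≤ f j := by
  induction l with
  | zero => exact ⟨∅, card_empty, by simp⟩
  | succ l ih =>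
    obtain ⟨S, hS, hlow⟩ := ih (Nat.le_of_succ_le hl)
    have hne : Sᶜ.Nonempty := by
      rw [← card_pos, card_compl]
      omega
    obtain ⟨a, haS, hmin⟩ := Sᶜ.exists_min_image f hne
    have ha : a ∉ S := mem_compl.mp haS
    refine ⟨insert a S, by rw [card_insert_of_notMem ha, hS], ?_⟩
    intro i hi j hj
    rw [mem_insert, not_or] at hj
    rcases mem_insert.mp hi with rfl | hi
    · exact hmin j (mem_compl.mpr hj.2)
    · exact hlow i hi j hj.2

theorem Finset.card_mul_sum_le_card_mul_sum_of_forall_le {ι R : Type*} [Fintype ι]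
    [DecidableEq ι] [CommRing R] [LinearOrder R] [IsStrictOrderedRing R] {f : ι → R}
    {S : Finset ι} (hlow : ∀ i ∈ S, ∀ j ∉ S, f i ≤ f j) :
    (Fintype.card ι : R) * ∑ i ∈ S, f i ≤ (#S : R) * ∑ i, f i := by
  have hcross : (#Sᶜ : R) * ∑ i ∈ S, f i ≤ (#S : R) * ∑ j ∈ Sᶜ, f j := by
    calc (#Sᶜ : R) * ∑ i ∈ S, f i = ∑ i ∈ S, ∑ _j ∈ Sᶜ, f i := by
          simp only [sum_const, nsmul_eq_mul, mul_sum]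
      _ ≤ ∑ _i ∈ S, ∑ j ∈ Sᶜ, f j :=
          sum_le_sum fun i hi => sum_le_sum fun j hj => hlow i hi j (mem_compl.mp hj)
      _ = (#S : R) * ∑ j ∈ Sᶜ, f j := by rw [sum_const, nsmul_eq_mul]
  rw [← card_add_card_compl S, ← sum_add_sum_compl S f]
  push_cast
  linarith

theorem Finset.exists_card_eq_sum_le_div_mul {ι : Type*} [Fintype ι] (f : ι → ℝ) {l : ℕ}
    (hl : l ≤ Fintype.card ι) :
    ∃ S : Finset ι, #S = l ∧ ∑ i ∈ S, f i ≤ l / Fintype.card ι * ∑ i, f i := by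
  classical
  obtain ⟨S, hS, hlow⟩ := exists_card_eq_forall_le_of_notMem f hl
  refine ⟨S, hS, ?_⟩
  rcases (Fintype.card ι).eq_zero_or_pos with hd | hd
  · have : IsEmpty ι := Fintype.card_eq_zero_iff.mp hd
    simp [Subsingleton.elim S ∅]
  · rw [div_mul_eq_mul_div, le_div_iff₀ (by exact_mod_cast hd), mul_comm, ← hS]
    exact card_mul_sum_le_card_mul_sum_of_forall_le hlow

namespace IsCE

variable {m n : ℕ} {t : Fin n → ℝ} {pref : Fin n → Finset (Fin m) → Finset (Fin m) → Prop}
  {p : Fin m → ℝ} {X : Fin n → Finset (Fin m)}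

theorem sum_price_biUnion_le (hce : IsCE t pref p X) (ht : ∀ i, 0 ≤ t i)
    (K : Finset (Fin n)) : ∑ k ∈ K.biUnion X, p k ≤ ∑ i ∈ K, t i := by
  rw [sum_biUnion fun i _ j _ hij => hce.2.1 i j hij]
  refine sum_le_sum fun i _ => ?_
  by_cases hXi : X i = ∅
  · simpa [hXi] using ht i
  · exact (hce.2.2.2.1 i hXi).le

theorem eq_or_pref_of_sum_price_le (hce : IsCE t pref p X) {i : Fin n}
    {B : Finset (Fin m)} (hB : ∑ k ∈ B, p k ≤ t i) : B = X i ∨ pref i (X i) B := by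
  by_cases hBX : B = X i
  · exact Or.inl hBX
  · exact Or.inr ((hce.2.2.2.2 i B hBX).resolve_right hB.not_gt)

end IsCE

theorem CE_generalized_fairness_general
    (m n : ℕ) (t : Fin (n + 1) → ℝ) (htpos : ∀ i, 0 < t i)
    (pref : Fin (n + 1) → Finset (Fin m) → Finset (Fin m) → Prop)
    (p : Fin m → ℝ) (X : Fin (n + 1) → Finset (Fin m))
    (hce : IsCE t pref p X)
    (K : Finset (Fin (n + 1))) (l d : ℕ) (hld : l ≤ d)
    (hinc : (l : ℝ) / d * ∑ i ∈ K, t i ≤ t 0)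
    (Y : Fin d → Finset (Fin m))
    (hdisj : ∀ j j', j ≠ j' → Disjoint (Y j) (Y j'))
    (hunion : Finset.univ.biUnion Y = K.biUnion X) :
    ∃ S : Finset (Fin d), S.card = l ∧
      (S.biUnion Y = X 0 ∨ pref 0 (X 0) (S.biUnion Y)) := by
  have hprice : ∀ S : Finset (Fin d), ∑ k ∈ S.biUnion Y, p k = ∑ j ∈ S, ∑ k ∈ Y j, p k :=
    fun S => sum_biUnion fun j _ j' _ h => hdisj j j' h
  obtain ⟨S, hS, hcheap⟩ :=
    exists_card_eq_sum_le_div_mul (fun j => ∑ k ∈ Y j, p k) (hld.trans_eq (Fintype.card_fin d).symm)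
  rw [Fintype.card_fin, ← hprice, ← hprice, hunion] at hcheap
  refine ⟨S, hS, hce.eq_or_pref_of_sum_price_le ?_⟩
  calc ∑ k ∈ S.biUnion Y, p k ≤ l / d * ∑ k ∈ K.biUnion X, p k := hcheap
    _ ≤ l / d * ∑ i ∈ K, t i := by
        gcongr
        exact hce.sum_price_biUnion_le (fun i => (htpos i).le) K
    _ ≤ t 0 := hinc

/-- **Generalized fairness of competitive equilibria (Proposition 7.1).**
Let `(p, X)` be a competitive equilibrium for incomes `t` and preferences
`pref`.  Then for Alice (agent 0), every subset `K` of agents and integers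
`1 ≤ l ≤ d` with `(l/d) · Σ_{i ∈ K} t i ≤ t 0`, Alice weakly prefers her bundle
`X 0` to her `l`-out-of-`d` maximin bundle of `⋃_{i ∈ K} X i`: for every
partition of `⋃_{i ∈ K} X i` into `d` parts there is a union of `l` parts that
is weakly worse for Alice than `X 0`. -/
theorem CE_generalized_fairness
    (m n : ℕ) (t : Fin (n + 1) → ℝ) (htpos : ∀ i, 0 < t i)
    (pref : Fin (n + 1) → Finset (Fin m) → Finset (Fin m) → Prop)
    (hpref : ∀ i, StrictMonoPref (pref i))
    (p : Fin m → ℝ) (X : Fin (n + 1) → Finset (Fin m))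
    (hce : IsCE t pref p X)
    (K : Finset (Fin (n + 1))) (l d : ℕ) (hl : 1 ≤ l) (hld : l ≤ d)
    (hinc : (l : ℝ) / d * ∑ i ∈ K, t i ≤ t 0)
    (Y : Fin d → Finset (Fin m))
    (hdisj : ∀ j j', j ≠ j' → Disjoint (Y j) (Y j'))
    (hunion : Finset.univ.biUnion Y = K.biUnion X) :
    ∃ S : Finset (Fin d), S.card = l ∧
      (S.biUnion Y = X 0 ∨ pref 0 (X 0) (S.biUnion Y)) :=
  CE_generalized_fairness_general m n t htpos pref p X hce K l d hld hinc Y hdisj hunion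
end

section
/- Maximin-share guarantee of CEEI: if all n agents have equal incomes, then in every competitive equilibrium allocation each agent receives a bundle weakly preferred to their 1-out-of-n maximin share of all items. -/
open Finset

/-- **Maximin-share guarantee of CEEI.** If all `n` agents have the same
positive income, then in every competitive equilibrium each agent `i` receives
a bundle weakly preferred to their 1-out-of-`n` maximin share of all items:
for every partition of all items into `n` parts, some part is weakly worse for
`i` than `X i`. -/
theorem CEEI_maximin_share
    (m n : ℕ) (t : ℝ) (ht : 0 < t)
    (pref : Fin n → Finset (Fin m) → Finset (Fin m) → Prop)
    (hpref : ∀ i, StrictMonoPref (pref i))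
    (p : Fin m → ℝ) (X : Fin n → Finset (Fin m))
    (hce : IsCE (fun _ => t) pref p X) :
    ∀ i : Fin n, ∀ Y : Fin n → Finset (Fin m),
      (∀ j j', j ≠ j' → Disjoint (Y j) (Y j')) →
      Finset.univ.biUnion Y = Finset.univ →
      ∃ j, Y j = X i ∨ pref i (X i) (Y j) := by
  intro i Y hYdisj hYcov
  haveI : Nonempty (Fin n) := ⟨i⟩
  obtain ⟨hp, hXdisj, hXcov, hpay, hopt⟩ := hce
  -- total price
  have hsumY : ∑ j : Fin n, ∑ k ∈ Y j, p k = ∑ k : Fin m, p k := by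
    rw [← Finset.sum_biUnion, hYcov]
    intro a _ b _ hab
    exact hYdisj a b hab
  have hsumX : ∑ j : Fin n, ∑ k ∈ X j, p k = ∑ k : Fin m, p k := by
    rw [← Finset.sum_biUnion, hXcov]
    intro a _ b _ hab
    exact hXdisj a b hab
  have hbound : ∀ j, ∑ k ∈ X j, p k ≤ t := by
    intro j
    by_cases h : X j = ∅
    · simp [h, ht.le]
    · exact (hpay j h).le
  have htot : ∑ k : Fin m, p k ≤ n * t := by
    rw [← hsumX]
    calc ∑ j : Fin n, ∑ k ∈ X j, p k ≤ ∑ _j : Fin n, t := Finset.sum_le_sum fun j _ => hbound j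
      _ = n * t := by simp [mul_comm]
  -- some part of Y is affordable
  have hex : ∃ j, ∑ k ∈ Y j, p k ≤ t := by
    by_contra h
    push_neg at h
    have : (n : ℝ) * t < ∑ j : Fin n, ∑ k ∈ Y j, p k := by
      have := Finset.sum_lt_sum_of_nonempty (Finset.univ_nonempty (α := Fin n))
        (fun j _ => h j)
      simpa [mul_comm] using this
    rw [hsumY] at this
    exact absurd (lt_of_lt_of_le this htot) (lt_irrefl _)
  obtain ⟨j, hj⟩ := hex
  by_cases hYX : Y j = X i
  · exact ⟨j, Or.inl hYX⟩
  · rcases hopt i (Y j) hYX with h | h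
    · exact ⟨j, Or.inr h⟩
    · exact absurd hj (not_le.mpr h)
end

section
/- Approximate maximin-share guarantee: if each agent's income is at least 1/(n+1) of the total income, then in every competitive equilibrium allocation each agent's bundle is weakly preferred by them to their 1-out-of-(n+1) maximin share of all items. -/
open Finset

/-- **Approximate maximin-share guarantee.** If each of the `n` agents' incomes
is at least `1/(n+1)` of the total income, then in every competitive
equilibrium each agent `i` receives a bundle weakly preferred to their
1-out-of-`(n+1)` maximin share of all items: for every partition of all items
into `n + 1` parts, some part is weakly worse for `i` than `X i`. -/
theorem CE_approximate_maximin_share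
    (m n : ℕ) (t : Fin n → ℝ) (htpos : ∀ i, 0 < t i)
    (hinc : ∀ i, (∑ j, t j) / (n + 1) ≤ t i)
    (pref : Fin n → Finset (Fin m) → Finset (Fin m) → Prop)
    (hpref : ∀ i, StrictMonoPref (pref i))
    (p : Fin m → ℝ) (X : Fin n → Finset (Fin m))
    (hce : IsCE t pref p X) :
    ∀ i : Fin n, ∀ Y : Fin (n + 1) → Finset (Fin m),
      (∀ j j', j ≠ j' → Disjoint (Y j) (Y j')) →
      Finset.univ.biUnion Y = Finset.univ →
      ∃ j, Y j = X i ∨ pref i (X i) (Y j) := by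
  intro i Y hdisj hcov
  obtain ⟨hp, hXdisj, hXcov, hpay, hopt⟩ := hce
  -- total price equals sum over X parts and over Y parts
  have hsum : ∀ (N : ℕ) (Z : Fin N → Finset (Fin m)),
      (∀ a b : Fin N, a ≠ b → Disjoint (Z a) (Z b)) →
      Finset.univ.biUnion Z = Finset.univ →
      ∑ j, ∑ k ∈ Z j, p k = ∑ k, p k := by
    intro N Z hd hc
    rw [← Finset.sum_biUnion, hc]
    intro a _ b _ hab
    exact hd a b hab
  have hX : ∑ j, ∑ k ∈ X j, p k = ∑ k, p k := hsum n X hXdisj hXcov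
  have hY : ∑ j, ∑ k ∈ Y j, p k = ∑ k, p k := hsum (n+1) Y hdisj hcov
  have hle : ∑ k, p k ≤ ∑ j, t j := by
    rw [← hX]
    apply Finset.sum_le_sum
    intro j _
    by_cases h : X j = ∅
    · simp [h, (htpos j).le]
    · exact (hpay j h).le
  -- some Y part is cheap
  have hcheap : ∃ j : Fin (n+1), ∑ k ∈ Y j, p k ≤ (∑ k, p k) / (n + 1) := by
    by_contra h
    push_neg at h
    have : ∑ j : Fin (n+1), (∑ k, p k) / (n + 1) < ∑ j, ∑ k ∈ Y j, p k :=
      Finset.sum_lt_sum_of_nonempty Finset.univ_nonempty (fun j _ => h j)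
    rw [hY, Finset.sum_const, Finset.card_univ, Fintype.card_fin, nsmul_eq_mul] at this
    have hne : ((n : ℝ) + 1) ≠ 0 := by positivity
    push_cast at this
    rw [mul_comm, div_mul_cancel₀ _ hne] at this
    exact lt_irrefl _ this
  obtain ⟨j, hj⟩ := hcheap
  have haff : ∑ k ∈ Y j, p k ≤ t i := by
    calc ∑ k ∈ Y j, p k ≤ (∑ k, p k) / (n + 1) := hj
      _ ≤ (∑ j, t j) / (n + 1) := by
          apply div_le_div_of_nonneg_right hle (by positivity)
      _ ≤ t i := hinc i
  refine ⟨j, ?_⟩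
  by_cases h : Y j = X i
  · exact Or.inl h
  · rcases hopt i (Y j) h with h' | h'
    · exact Or.inr h'
    · exact absurd haff (not_le.mpr h')
end

section
/- α-envy-freeness for divisible goods: if goods are divisible and Alice's preferences are given by a linear (additive) value function v_A, then in any competitive equilibrium allocation, v_A(A) ≥ (a/t_i)·v_A(X_i) for every agent i, where a is Alice's income, A her bundle, t_i agent i's income and X_i agent i's bundle. -/
open Finset

/-- **α-envy-freeness of CE for divisible goods.**
`m` divisible goods with supplies `e`, `n + 1` agents with positive incomes
`t`; Alice is agent 0 and her preferences are given by the linear value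
function `x ↦ ∑ g, v g * x g`.  In a competitive equilibrium — positive prices
`p`, nonnegative allocation `X` exhausting the supply, each agent spending at
most their income (exactly when their bundle is non-zero), and Alice's bundle
maximizing her value among all affordable nonnegative bundles — Alice's value
for her own bundle is at least `(t 0 / t i)` times her value for agent `i`'s
bundle, for every agent `i`. -/
theorem CE_alpha_envy_free_divisible
    (m n : ℕ) (t : Fin (n + 1) → ℝ) (htpos : ∀ i, 0 < t i)
    (e : Fin m → ℝ) (he : ∀ g, 0 < e g)
    (v : Fin m → ℝ)
    (p : Fin m → ℝ) (hp : ∀ g, 0 < p g)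
    (X : Fin (n + 1) → Fin m → ℝ)
    (hXnn : ∀ i g, 0 ≤ X i g)
    (hsupply : ∀ g, ∑ i, X i g = e g)
    (hbudget : ∀ i, ∑ g, p g * X i g ≤ t i)
    (hexact : ∀ i, X i ≠ 0 → ∑ g, p g * X i g = t i)
    (hopt : ∀ y : Fin m → ℝ, (∀ g, 0 ≤ y g) → ∑ g, p g * y g ≤ t 0 →
      ∑ g, v g * y g ≤ ∑ g, v g * X 0 g) :
    ∀ i, t 0 / t i * ∑ g, v g * X i g ≤ ∑ g, v g * X 0 g := by
  intro i
  set c := t 0 / t i with hc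
  have hc0 : 0 ≤ c := div_nonneg (htpos 0).le (htpos i).le
  have key := hopt (fun g => c * X i g)
    (fun g => mul_nonneg hc0 (hXnn i g)) ?_
  · calc c * ∑ g, v g * X i g = ∑ g, v g * (c * X i g) := by
          rw [Finset.mul_sum]; apply Finset.sum_congr rfl; intros; ring
      _ ≤ _ := key
  · have : ∑ g, p g * (c * X i g) = c * ∑ g, p g * X i g := by
      rw [Finset.mul_sum]; apply Finset.sum_congr rfl; intros; ring
    rw [this]
    calc c * ∑ g, p g * X i g ≤ c * t i := by
          exact mul_le_mul_of_nonneg_left (hbudget i) hc0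
      _ = t 0 := div_mul_cancel₀ _ (htpos i).ne'
end

section
/- Existence of CEFAI for 4 items and 2 agents: for all income pairs (a, b) with a > b and a ≠ 2b, a competitive equilibrium exists; in particular when a < 2b, a subgame-perfect equilibrium of the three-stage game (Alice may choose pixep ABAB; else Bob may choose BAAA; else AABB is played) yields a competitive equilibrium for every pair of strict monotone preferences. -/
open Finset

/-- The extra conclusion about prices in the case `a < 2b`. -/
def PixepConcl (a b : ℝ) (p : Fin 4 → ℝ) (X : Fin 2 → Finset (Fin 4)) : Prop :=
  ∃ ε > 0,
    (Finset.univ.val.map p = ({a - 2*ε, b - ε, 2*ε, ε} : Multiset ℝ) ∧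
      (X 0).card = 2) ∨
    (Finset.univ.val.map p =
        ({b, b - 2*ε, (a-b)/2 + ε, (a-b)/2 + ε} : Multiset ℝ) ∧
      (X 0).card = 3) ∨
    (Finset.univ.val.map p = ({a/2, a/2, b/2, b/2} : Multiset ℝ) ∧
      (X 0).card = 2)

lemma ne_of_elt {α : Type*} {A B : Finset α} {x : α} (h1 : x ∈ A) (h2 : x ∉ B) :
    A ≠ B := fun h => h2 (h ▸ h1)

lemma exists_best {α : Type*} [DecidableEq α] (r : α → α → Prop)
    (htr : ∀ A B C, r A B → r B C → r A C)
    (hto : ∀ A B, A ≠ B → r A B ∨ r B A) :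
    ∀ S : Finset α, S.Nonempty → ∃ M ∈ S, ∀ Y ∈ S, Y ≠ M → r M Y := by
  intro S
  induction S using Finset.induction_on with
  | empty => intro h; simp at h
  | @insert a S ha ih =>
    intro _
    rcases S.eq_empty_or_nonempty with rfl | hne
    · exact ⟨a, by simp, by intro Y hY hYa; simp at hY; exact absurd hY hYa⟩
    · obtain ⟨M, hM, hbest⟩ := ih hne
      by_cases hra : r a M
      · refine ⟨a, by simp, ?_⟩
        intro Y hY hYa
        rcases Finset.mem_insert.mp hY with rfl | hYS
        · exact absurd rfl hYa
        · by_cases hYM : Y = M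
          · exact hYM ▸ hra
          · exact htr _ _ _ hra (hbest Y hYS hYM)
      · have haM : a ≠ M := fun hc => ha (hc ▸ hM)
        have hMa : r M a := (hto a M haM).resolve_left hra
        refine ⟨M, Finset.mem_insert_of_mem hM, ?_⟩
        intro Y hY hYM
        rcases Finset.mem_insert.mp hY with rfl | hYS
        · exact hMa
        · exact hbest Y hYS hYM

lemma perm_CE {m n : ℕ} (e : Fin m ≃ Fin m) (t : Fin n → ℝ)
    (pref : Fin n → Finset (Fin m) → Finset (Fin m) → Prop)
    (p : Fin m → ℝ) (X : Fin n → Finset (Fin m))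
    (h : IsCE t (fun i A B => pref i (A.image e) (B.image e)) p X) :
    IsCE t pref (fun k => p (e.symm k)) (fun i => (X i).image e) := by
  obtain ⟨h1, h2, h3, h4, h5⟩ := h
  refine ⟨fun k => h1 _, ?_, ?_, ?_, ?_⟩
  · intro i j hij
    exact Finset.disjoint_image e.injective |>.mpr (h2 i j hij)
  · rw [← Finset.biUnion_image, h3, Finset.image_univ_equiv]
  · intro i hi
    rw [Finset.sum_image (fun x _ y _ hxy => e.injective hxy)]
    simp only [Equiv.symm_apply_apply]
    exact h4 i (fun hc => hi (by show (X i).image e = ∅; rw [hc]; simp))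
  · intro i Y hY
    have hY' : Y.image ⇑e.symm ≠ X i := by
      intro hc
      apply hY
      show Y = (X i).image e
      rw [← hc, Finset.image_image]
      simp
    rcases h5 i (Y.image ⇑e.symm) hY' with hp | hp
    · left
      have : (Y.image ⇑e.symm).image ⇑e = Y := by rw [Finset.image_image]; simp
      rwa [this] at hp
    · right
      rwa [Finset.sum_image (fun x _ y _ hxy => e.symm.injective hxy)] at hp

lemma mapPermCE {m : ℕ} (e : Fin m ≃ Fin m) (p : Fin m → ℝ) :
    Finset.univ.val.map (fun k => p (e.symm k)) = Finset.univ.val.map p := by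
  have h : Finset.univ.val.map (⇑e.symm) = Finset.univ.val := by
    calc Finset.univ.val.map ⇑e.symm = (Finset.univ.map e.symm.toEmbedding).val := rfl
      _ = Finset.univ.val := by rw [Finset.map_univ_equiv]
  calc Finset.univ.val.map (fun k => p (e.symm k))
      = (Finset.univ.val.map ⇑e.symm).map p := by rw [Multiset.map_map]; rfl
    _ = _ := by rw [h]

/-- Pixep ABAB with concrete items: 0 = u, 1 = v (Alice), 2 = s, 3 = t (Bob). -/
lemma ce_ABAB (a b ε : ℝ) (hab : b < a)
    (hε : 0 < ε) (hε1 : 3*ε < b) (hε2 : 2*ε < a - b)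
    (pref : Fin 2 → Finset (Fin 4) → Finset (Fin 4) → Prop)
    (hpref : ∀ i, StrictMonoPref (pref i))
    (hA1 : pref 0 {0,1} {1,2,3}) (hA2 : pref 0 {0,1} {0,3})
    (hB1 : pref 1 {2,3} {1,3}) :
    IsCE ![a,b] pref ![a-2*ε, 2*ε, b-ε, ε] ![{0,1},{2,3}] := by
  obtain ⟨tr0, as0, to0, mo0⟩ := hpref 0
  obtain ⟨tr1, as1, to1, mo1⟩ := hpref 1
  have m123 : ∀ Y : Finset (Fin 4), Y ⊂ {1,2,3} → pref 0 {0,1} Y :=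
    fun Y hY => tr0 _ _ _ hA1 (mo0 _ _ hY)
  have a0 : pref 0 {0,1} (∅ : Finset (Fin 4)) := m123 _ (by decide)
  have a1 : pref 0 {0,1} {1} := m123 _ (by decide)
  have a2 : pref 0 {0,1} {2} := m123 _ (by decide)
  have a3 : pref 0 {0,1} {3} := m123 _ (by decide)
  have a12 : pref 0 {0,1} {1,2} := m123 _ (by decide)
  have a13 : pref 0 {0,1} {1,3} := m123 _ (by decide)
  have a23 : pref 0 {0,1} {2,3} := m123 _ (by decide)
  have aself0 : pref 0 {0,1} {0} := mo0 _ _ (by decide)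
  have b1 : pref 1 {2,3} {1} := tr1 _ _ _ hB1 (mo1 _ _ (by decide))
  have b2 : pref 1 {2,3} {2} := mo1 _ _ (by decide)
  have b3 : pref 1 {2,3} {3} := mo1 _ _ (by decide)
  have b0' : pref 1 {2,3} (∅ : Finset (Fin 4)) := mo1 _ _ (by decide)
  refine ⟨?_, ?_, ?_, ?_, ?_⟩
  · intro k; fin_cases k <;> simp <;> linarith
  · intro i j hij; fin_cases i <;> fin_cases j <;> simp_all <;> decide
  · decide
  · intro i _; fin_cases i <;>
      simp [Finset.sum_insert, Finset.sum_singleton] <;> ring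
  · intro i Y hY
    fin_cases i <;> fin_cases Y <;>
      simp only [Matrix.cons_val_zero, Matrix.cons_val_one, Matrix.head_cons] at hY ⊢ <;>
      first
        | exact absurd rfl hY
        | exact Or.inl ‹_›
        | (right
           simp [Finset.sum_insert, Finset.sum_singleton]
           linarith)

/-- Pixep BAAA with concrete items: 0 = g (Bob), 1 = h, 2 = c1, 3 = c2 (Alice). -/
lemma ce_BAAA (a b ε : ℝ) (hab : b < a)
    (hε : 0 < ε) (hε1 : 2*ε < b) (hε2 : 2*ε < a - b) (hε3 : 2*ε < 2*b - a)
    (pref : Fin 2 → Finset (Fin 4) → Finset (Fin 4) → Prop)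
    (hpref : ∀ i, StrictMonoPref (pref i))
    (hB1 : pref 1 {0} {1}) (hB2 : pref 1 {0} {2,3})
    (hA1 : pref 0 {1,2,3} {0,2}) (hA2 : pref 0 {1,2,3} {0,3}) :
    IsCE ![a,b] pref ![b, b-2*ε, (a-b)/2+ε, (a-b)/2+ε] ![{1,2,3},{0}] := by
  obtain ⟨tr0, as0, to0, mo0⟩ := hpref 0
  obtain ⟨tr1, as1, to1, mo1⟩ := hpref 1
  have msub : ∀ Y : Finset (Fin 4), Y ⊂ {1,2,3} → pref 0 {1,2,3} Y :=
    fun Y hY => mo0 _ _ hY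
  have a0' : pref 0 {1,2,3} (∅ : Finset (Fin 4)) := msub _ (by decide)
  have a1 : pref 0 {1,2,3} {1} := msub _ (by decide)
  have a2 : pref 0 {1,2,3} {2} := msub _ (by decide)
  have a3 : pref 0 {1,2,3} {3} := msub _ (by decide)
  have a12 : pref 0 {1,2,3} {1,2} := msub _ (by decide)
  have a13 : pref 0 {1,2,3} {1,3} := msub _ (by decide)
  have a23 : pref 0 {1,2,3} {2,3} := msub _ (by decide)
  have a0 : pref 0 {1,2,3} {0} := tr0 _ _ _ hA1 (mo0 _ _ (by decide))
  have bb0 : pref 1 {0} (∅ : Finset (Fin 4)) := mo1 _ _ (by decide)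
  have bb2 : pref 1 {0} {2} := tr1 _ _ _ hB2 (mo1 _ _ (by decide))
  have bb3 : pref 1 {0} {3} := tr1 _ _ _ hB2 (mo1 _ _ (by decide))
  refine ⟨?_, ?_, ?_, ?_, ?_⟩
  · intro k; fin_cases k <;> simp <;> linarith
  · intro i j hij; fin_cases i <;> fin_cases j <;> simp_all <;> decide
  · decide
  · intro i _; fin_cases i <;>
      simp [Finset.sum_insert, Finset.sum_singleton] <;> ring
  · intro i Y hY
    fin_cases i <;> fin_cases Y <;>
      simp only [Matrix.cons_val_zero, Matrix.cons_val_one, Matrix.head_cons] at hY ⊢ <;>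
      first
        | exact absurd rfl hY
        | exact Or.inl ‹_›
        | (right
           simp [Finset.sum_insert, Finset.sum_singleton]
           linarith)

set_option maxHeartbeats 1000000 in
/-- Pixep AABB with concrete items: 0,1 Alice; 2,3 Bob. -/
lemma ce_AABB (a b : ℝ) (hb : 0 < b) (hab : b < a) (h2 : a < 2*b)
    (pref : Fin 2 → Finset (Fin 4) → Finset (Fin 4) → Prop)
    (hpref : ∀ i, StrictMonoPref (pref i))
    (hA : ∀ Y : Finset (Fin 4), Y.card ≤ 2 → Y ≠ {0,1} → pref 0 {0,1} Y)
    (hB1 : pref 1 {2,3} {0}) (hB2 : pref 1 {2,3} {1}) :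
    IsCE ![a,b] pref ![a/2, a/2, b/2, b/2] ![{0,1},{2,3}] := by
  obtain ⟨tr0, as0, to0, mo0⟩ := hpref 0
  obtain ⟨tr1, as1, to1, mo1⟩ := hpref 1
  have a0 : pref 0 {0,1} (∅ : Finset (Fin 4)) := hA _ (by decide) (by decide)
  have s0 : pref 0 {0,1} {0} := hA _ (by decide) (by decide)
  have s1 : pref 0 {0,1} {1} := hA _ (by decide) (by decide)
  have s2 : pref 0 {0,1} {2} := hA _ (by decide) (by decide)
  have s3 : pref 0 {0,1} {3} := hA _ (by decide) (by decide)
  have p02 : pref 0 {0,1} {0,2} := hA _ (by decide) (by decide)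
  have p03 : pref 0 {0,1} {0,3} := hA _ (by decide) (by decide)
  have p12 : pref 0 {0,1} {1,2} := hA _ (by decide) (by decide)
  have p13 : pref 0 {0,1} {1,3} := hA _ (by decide) (by decide)
  have p23 : pref 0 {0,1} {2,3} := hA _ (by decide) (by decide)
  have b0 : pref 1 {2,3} (∅ : Finset (Fin 4)) := mo1 _ _ (by decide)
  have b2 : pref 1 {2,3} {2} := mo1 _ _ (by decide)
  have b3 : pref 1 {2,3} {3} := mo1 _ _ (by decide)
  refine ⟨?_, ?_, ?_, ?_, ?_⟩
  · intro k; fin_cases k <;> simp <;> linarith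
  · intro i j hij; fin_cases i <;> fin_cases j <;> simp_all <;> decide
  · decide
  · intro i _; fin_cases i <;>
      simp [Finset.sum_insert, Finset.sum_singleton] <;> ring
  · intro i Y hY
    fin_cases i <;> fin_cases Y <;>
      simp only [Matrix.cons_val_zero, Matrix.cons_val_one, Matrix.head_cons] at hY ⊢ <;>
      first
        | exact absurd rfl hY
        | exact Or.inl ‹_›
        | (right
           simp [Finset.sum_insert, Finset.sum_singleton]
           linarith)

set_option maxHeartbeats 1000000 in
/-- CE in the case `a > 2b`: 0 = d (Bob), 1 = c1, 2 = c2, 3 = c3 (Alice). -/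
lemma ce_BIG (a b δ : ℝ) (hb : 0 < b) (h2 : 2*b < a)
    (hδ : 0 < δ) (hδ1 : 2*δ < b) (hδ2 : δ < a/2 - b)
    (pref : Fin 2 → Finset (Fin 4) → Finset (Fin 4) → Prop)
    (hpref : ∀ i, StrictMonoPref (pref i))
    (hB : pref 1 {0} {3})
    (hA1 : pref 0 {1,2,3} {0,1,3}) (hA2 : pref 0 {1,2,3} {0,2,3}) :
    IsCE ![a,b] pref ![b, a/2-δ, a/2-δ, 2*δ] ![{1,2,3},{0}] := by
  obtain ⟨tr0, as0, to0, mo0⟩ := hpref 0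
  obtain ⟨tr1, as1, to1, mo1⟩ := hpref 1
  have msub : ∀ Y : Finset (Fin 4), Y ⊂ {1,2,3} → pref 0 {1,2,3} Y :=
    fun Y hY => mo0 _ _ hY
  have a0' : pref 0 {1,2,3} (∅ : Finset (Fin 4)) := msub _ (by decide)
  have a1 : pref 0 {1,2,3} {1} := msub _ (by decide)
  have a2 : pref 0 {1,2,3} {2} := msub _ (by decide)
  have a3 : pref 0 {1,2,3} {3} := msub _ (by decide)
  have a12 : pref 0 {1,2,3} {1,2} := msub _ (by decide)
  have a13 : pref 0 {1,2,3} {1,3} := msub _ (by decide)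
  have a23 : pref 0 {1,2,3} {2,3} := msub _ (by decide)
  have m013 : ∀ Y : Finset (Fin 4), Y ⊂ {0,1,3} → pref 0 {1,2,3} Y :=
    fun Y hY => tr0 _ _ _ hA1 (mo0 _ _ hY)
  have a0 : pref 0 {1,2,3} {0} := m013 _ (by decide)
  have a01 : pref 0 {1,2,3} {0,1} := m013 _ (by decide)
  have a03 : pref 0 {1,2,3} {0,3} := m013 _ (by decide)
  have a02 : pref 0 {1,2,3} {0,2} := tr0 _ _ _ hA2 (mo0 _ _ (by decide))
  have b0 : pref 1 {0} (∅ : Finset (Fin 4)) := mo1 _ _ (by decide)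
  refine ⟨?_, ?_, ?_, ?_, ?_⟩
  · intro k; fin_cases k <;> simp <;> linarith
  · intro i j hij; fin_cases i <;> fin_cases j <;> simp_all <;> decide
  · decide
  · intro i _; fin_cases i <;>
      simp [Finset.sum_insert, Finset.sum_singleton] <;> ring
  · intro i Y hY
    fin_cases i <;> fin_cases Y <;>
      simp only [Matrix.cons_val_zero, Matrix.cons_val_one, Matrix.head_cons] at hY ⊢ <;>
      first
        | exact absurd rfl hY
        | exact Or.inl ‹_›
        | (right
           simp [Finset.sum_insert, Finset.sum_singleton]
           linarith)

-- works lemmas (appended to part1 content for testing)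

section Works

variable (a b : ℝ) (pref : Fin 2 → Finset (Fin 4) → Finset (Fin 4) → Prop)

lemma pref_perm (hpref : ∀ i, StrictMonoPref (pref i)) (e : Fin 4 ≃ Fin 4) :
    ∀ i, StrictMonoPref (fun A B : Finset (Fin 4) => pref i (A.image ⇑e) (B.image ⇑e)) := by
  intro i
  obtain ⟨htr, has, hto, hmo⟩ := hpref i
  refine ⟨fun A B C hab hbc => htr _ _ _ hab hbc, fun A B hab => has _ _ hab, ?_, ?_⟩
  · intro A B hAB
    exact hto _ _ (fun hc => hAB (Finset.image_injective e.injective hc))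
  · intro A B hAB
    exact hmo _ _ ((Finset.image_ssubset_image e.injective).mpr hAB)

lemma mk_equiv (u v s t : Fin 4)
    (h1 : u ≠ v) (h2 : u ≠ s) (h3 : u ≠ t) (h4 : v ≠ s) (h5 : v ≠ t) (h6 : s ≠ t) :
    ∃ e : Fin 4 ≃ Fin 4, ⇑e = ![u,v,s,t] := by
  have hinj : Function.Injective ![u,v,s,t] := by
    intro i j hij
    fin_cases i <;> fin_cases j <;> simp_all
  exact ⟨Equiv.ofBijective _ (Finite.injective_iff_bijective.mp hinj), rfl⟩

lemma ABAB_works (hb : 0 < b) (h1 : b < a) (h2 : a < 2*b)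
    (hpref : ∀ i, StrictMonoPref (pref i))
    (u v s t : Fin 4)
    (d1 : u ≠ v) (d2 : u ≠ s) (d3 : u ≠ t) (d4 : v ≠ s) (d5 : v ≠ t) (d6 : s ≠ t)
    (hA1 : pref 0 {u,v} {v,s,t}) (hA2 : pref 0 {u,v} {u,t}) (hB : pref 1 {s,t} {v,t}) :
    ∃ p X, IsCE ![a,b] pref p X ∧ PixepConcl a b p X := by
  obtain ⟨e, hce⟩ := mk_equiv u v s t d1 d2 d3 d4 d5 d6
  set ε : ℝ := min (min b (a-b)) (2*b-a) / 8 with hεdef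
  have k1 : min (min b (a-b)) (2*b-a) ≤ b := le_trans (min_le_left _ _) (min_le_left _ _)
  have k2 : min (min b (a-b)) (2*b-a) ≤ a - b := le_trans (min_le_left _ _) (min_le_right _ _)
  have k3 : min (min b (a-b)) (2*b-a) ≤ 2*b-a := min_le_right _ _
  have hmin : 0 < min (min b (a-b)) (2*b-a) := lt_min (lt_min hb (by linarith)) (by linarith)
  have hεpos : 0 < ε := by rw [hεdef]; linarith
  have hε1 : 3*ε < b := by rw [hεdef]; linarith
  have hε2 : 2*ε < a - b := by rw [hεdef]; linarith
  have im01 : ({0,1} : Finset (Fin 4)).image ⇑e = {u,v} := by simp [hce]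
  have im123 : ({1,2,3} : Finset (Fin 4)).image ⇑e = {v,s,t} := by simp [hce]
  have im03 : ({0,3} : Finset (Fin 4)).image ⇑e = {u,t} := by simp [hce]
  have im23 : ({2,3} : Finset (Fin 4)).image ⇑e = {s,t} := by simp [hce]
  have im13 : ({1,3} : Finset (Fin 4)).image ⇑e = {v,t} := by simp [hce]
  have hce' := ce_ABAB a b ε h1 hεpos hε1 hε2
    (fun i A B => pref i (A.image ⇑e) (B.image ⇑e)) (pref_perm pref hpref e)
    (by show pref 0 _ _; rw [im01, im123]; exact hA1)
    (by show pref 0 _ _; rw [im01, im03]; exact hA2)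
    (by show pref 1 _ _; rw [im23, im13]; exact hB)
  refine ⟨_, _, perm_CE e ![a,b] pref _ _ hce', ⟨ε, hεpos, Or.inl ⟨?_, ?_⟩⟩⟩
  · rw [mapPermCE]
    have : Finset.univ.val.map ![a-2*ε, 2*ε, b-ε, ε]
        = ({a-2*ε, 2*ε, b-ε, ε} : Multiset ℝ) := by simp; rfl
    rw [this]
    simp [Multiset.cons_swap]
  · show (({0,1} : Finset (Fin 4)).image ⇑e).card = 2
    rw [Finset.card_image_of_injective _ e.injective]
    decide

lemma BAAA_works (hb : 0 < b) (h1 : b < a) (h2 : a < 2*b)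
    (hpref : ∀ i, StrictMonoPref (pref i))
    (g h c1 c2 : Fin 4)
    (d1 : g ≠ h) (d2 : g ≠ c1) (d3 : g ≠ c2) (d4 : h ≠ c1) (d5 : h ≠ c2) (d6 : c1 ≠ c2)
    (hB1 : pref 1 {g} {h}) (hB2 : pref 1 {g} {c1,c2})
    (hA1 : pref 0 {h,c1,c2} {g,c1}) (hA2 : pref 0 {h,c1,c2} {g,c2}) :
    ∃ p X, IsCE ![a,b] pref p X ∧ PixepConcl a b p X := by
  obtain ⟨e, hce⟩ := mk_equiv g h c1 c2 d1 d2 d3 d4 d5 d6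
  set ε : ℝ := min (min b (a-b)) (2*b-a) / 8 with hεdef
  have k1 : min (min b (a-b)) (2*b-a) ≤ b := le_trans (min_le_left _ _) (min_le_left _ _)
  have k2 : min (min b (a-b)) (2*b-a) ≤ a - b := le_trans (min_le_left _ _) (min_le_right _ _)
  have k3 : min (min b (a-b)) (2*b-a) ≤ 2*b-a := min_le_right _ _
  have hmin : 0 < min (min b (a-b)) (2*b-a) := lt_min (lt_min hb (by linarith)) (by linarith)
  have hεpos : 0 < ε := by rw [hεdef]; linarith
  have hε1 : 2*ε < b := by rw [hεdef]; linarith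
  have hε2 : 2*ε < a - b := by rw [hεdef]; linarith
  have hε3 : 2*ε < 2*b - a := by rw [hεdef]; linarith
  have im0 : ({0} : Finset (Fin 4)).image ⇑e = {g} := by simp [hce]
  have im1 : ({1} : Finset (Fin 4)).image ⇑e = {h} := by simp [hce]
  have im23 : ({2,3} : Finset (Fin 4)).image ⇑e = {c1,c2} := by simp [hce]
  have im123 : ({1,2,3} : Finset (Fin 4)).image ⇑e = {h,c1,c2} := by simp [hce]
  have im02 : ({0,2} : Finset (Fin 4)).image ⇑e = {g,c1} := by simp [hce]
  have im03 : ({0,3} : Finset (Fin 4)).image ⇑e = {g,c2} := by simp [hce]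
  have hce' := ce_BAAA a b ε h1 hεpos hε1 hε2 hε3
    (fun i A B => pref i (A.image ⇑e) (B.image ⇑e)) (pref_perm pref hpref e)
    (by show pref 1 _ _; rw [im0, im1]; exact hB1)
    (by show pref 1 _ _; rw [im0, im23]; exact hB2)
    (by show pref 0 _ _; rw [im123, im02]; exact hA1)
    (by show pref 0 _ _; rw [im123, im03]; exact hA2)
  refine ⟨_, _, perm_CE e ![a,b] pref _ _ hce', ⟨ε, hεpos, Or.inr (Or.inl ⟨?_, ?_⟩)⟩⟩
  · rw [mapPermCE]
    simp; rfl
  · show (({1,2,3} : Finset (Fin 4)).image ⇑e).card = 3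
    rw [Finset.card_image_of_injective _ e.injective]
    decide

lemma AABB_works (hb : 0 < b) (h1 : b < a) (h2 : a < 2*b)
    (hpref : ∀ i, StrictMonoPref (pref i))
    (w x y z : Fin 4)
    (d1 : w ≠ x) (d2 : w ≠ y) (d3 : w ≠ z) (d4 : x ≠ y) (d5 : x ≠ z) (d6 : y ≠ z)
    (hA : ∀ Z : Finset (Fin 4), Z.card ≤ 2 → Z ≠ {w,x} → pref 0 {w,x} Z)
    (hB1 : pref 1 {y,z} {w}) (hB2 : pref 1 {y,z} {x}) :
    ∃ p X, IsCE ![a,b] pref p X ∧ PixepConcl a b p X := by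
  obtain ⟨e, hce⟩ := mk_equiv w x y z d1 d2 d3 d4 d5 d6
  have im01 : ({0,1} : Finset (Fin 4)).image ⇑e = {w,x} := by simp [hce]
  have im23 : ({2,3} : Finset (Fin 4)).image ⇑e = {y,z} := by simp [hce]
  have im0 : ({0} : Finset (Fin 4)).image ⇑e = {w} := by simp [hce]
  have im1 : ({1} : Finset (Fin 4)).image ⇑e = {x} := by simp [hce]
  have hA' : ∀ Y : Finset (Fin 4), Y.card ≤ 2 → Y ≠ {0,1} →
      pref 0 (({0,1} : Finset (Fin 4)).image ⇑e) (Y.image ⇑e) := by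
    intro Y hYc hYne
    rw [im01]
    apply hA
    · rw [Finset.card_image_of_injective _ e.injective]; exact hYc
    · rw [← im01]
      exact fun hc => hYne (Finset.image_injective e.injective hc)
  have hce' := ce_AABB a b hb h1 h2
    (fun i A B => pref i (A.image ⇑e) (B.image ⇑e)) (pref_perm pref hpref e)
    hA'
    (by show pref 1 _ _; rw [im23, im0]; exact hB1)
    (by show pref 1 _ _; rw [im23, im1]; exact hB2)
  refine ⟨_, _, perm_CE e ![a,b] pref _ _ hce', ⟨1, one_pos, Or.inr (Or.inr ⟨?_, ?_⟩)⟩⟩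
  · rw [mapPermCE]
    simp; rfl
  · show (({0,1} : Finset (Fin 4)).image ⇑e).card = 2
    rw [Finset.card_image_of_injective _ e.injective]
    decide

lemma BIG_works (hb : 0 < b) (h2 : 2*b < a)
    (hpref : ∀ i, StrictMonoPref (pref i))
    (d c1 c2 c3 : Fin 4)
    (dd1 : d ≠ c1) (dd2 : d ≠ c2) (dd3 : d ≠ c3) (dd4 : c1 ≠ c2) (dd5 : c1 ≠ c3) (dd6 : c2 ≠ c3)
    (hB : pref 1 {d} {c3})
    (hA1 : pref 0 {c1,c2,c3} {d,c1,c3}) (hA2 : pref 0 {c1,c2,c3} {d,c2,c3}) :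
    ∃ p X, IsCE ![a,b] pref p X := by
  obtain ⟨e, hce⟩ := mk_equiv d c1 c2 c3 dd1 dd2 dd3 dd4 dd5 dd6
  set δ : ℝ := min b (a - 2*b) / 4 with hδdef
  have k1 : min b (a - 2*b) ≤ b := min_le_left _ _
  have k2 : min b (a - 2*b) ≤ a - 2*b := min_le_right _ _
  have hmin : 0 < min b (a - 2*b) := lt_min hb (by linarith)
  have hδpos : 0 < δ := by rw [hδdef]; linarith
  have hδ1 : 2*δ < b := by rw [hδdef]; linarith
  have hδ2 : δ < a/2 - b := by rw [hδdef]; linarith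
  have im0 : ({0} : Finset (Fin 4)).image ⇑e = {d} := by simp [hce]
  have im3 : ({3} : Finset (Fin 4)).image ⇑e = {c3} := by simp [hce]
  have im123 : ({1,2,3} : Finset (Fin 4)).image ⇑e = {c1,c2,c3} := by simp [hce]
  have im013 : ({0,1,3} : Finset (Fin 4)).image ⇑e = {d,c1,c3} := by simp [hce]
  have im023 : ({0,2,3} : Finset (Fin 4)).image ⇑e = {d,c2,c3} := by simp [hce]
  have hce' := ce_BIG a b δ hb h2 hδpos hδ1 hδ2
    (fun i A B => pref i (A.image ⇑e) (B.image ⇑e)) (pref_perm pref hpref e)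
    (by show pref 1 _ _; rw [im0, im3]; exact hB)
    (by show pref 0 _ _; rw [im123, im013]; exact hA1)
    (by show pref 0 _ _; rw [im123, im023]; exact hA2)
  exact ⟨_, _, perm_CE e ![a,b] pref _ _ hce'⟩

end Works

-- combinatorial helpers

lemma card2' {α : Type*} [DecidableEq α] {p q : α} (h : p ≠ q) :
    ({p,q} : Finset α).card = 2 := by
  rw [Finset.card_insert_of_notMem (by simp [h]), Finset.card_singleton]

lemma card3' {α : Type*} [DecidableEq α] {p q r : α} (h1 : p ≠ q) (h2 : p ≠ r) (h3 : q ≠ r) :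
    ({p,q,r} : Finset α).card = 3 := by
  rw [Finset.card_insert_of_notMem (by simp [h1, h2]),
    Finset.card_insert_of_notMem (by simp [h3]), Finset.card_singleton]

lemma ssub_sing {α : Type*} [DecidableEq α] {y z : α} (h : y ≠ z) :
    ({y} : Finset α) ⊂ {y,z} := by
  rw [Finset.ssubset_iff_subset_ne]
  refine ⟨by simp, (ne_of_elt (show z ∈ ({y,z} : Finset α) by simp) (by simp [Ne.symm h])).symm⟩

lemma F1core (a b : ℝ) (hb : 0 < b) (h1 : b < a) (h2 : a < 2*b)
    (pref : Fin 2 → Finset (Fin 4) → Finset (Fin 4) → Prop)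
    (hpref : ∀ i, StrictMonoPref (pref i))
    (g x1 x2 x3 : Fin 4)
    (d1 : g ≠ x1) (d2 : g ≠ x2) (d3 : g ≠ x3)
    (d12 : x1 ≠ x2) (d13 : x1 ≠ x3) (d23 : x2 ≠ x3)
    (hb1 : pref 0 {g,x1} {x1,x2,x3}) (hb2 : pref 0 {g,x2} {x1,x2,x3})
    (c12 : pref 0 {g,x1} {g,x2}) :
    ∃ p X, IsCE ![a,b] pref p X ∧ PixepConcl a b p X := by
  obtain ⟨tr0, as0, to0, mo0⟩ := hpref 0
  obtain ⟨tr1, as1, to1, mo1⟩ := hpref 1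
  have ne23 : ({g,x2} : Finset (Fin 4)) ≠ {g,x3} :=
    ne_of_elt (show x2 ∈ ({g,x2} : Finset (Fin 4)) by simp) (by simp [Ne.symm d2, d23])
  have ne13 : ({g,x1} : Finset (Fin 4)) ≠ {g,x3} :=
    ne_of_elt (show x1 ∈ ({g,x1} : Finset (Fin 4)) by simp) (by simp [Ne.symm d1, d13])
  by_cases c2f : pref 0 {g,x2} {g,x3}
  · -- order x1, x2, x3
    have c1f : pref 0 {g,x1} {g,x3} := tr0 _ _ _ c12 c2f
    by_cases cB : pref 1 {x2,x3} {x1,x3}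
    · exact ABAB_works a b pref hb h1 h2 hpref g x1 x2 x3 d1 d2 d3 d12 d13 d23 hb1 c1f cB
    · have neB : ({x2,x3} : Finset (Fin 4)) ≠ {x1,x3} :=
        ne_of_elt (show x2 ∈ ({x2,x3} : Finset (Fin 4)) by simp) (by simp [Ne.symm d12, d23])
      have cB' : pref 1 {x1,x3} {x2,x3} := (to1 _ _ neB).resolve_left cB
      refine ABAB_works a b pref hb h1 h2 hpref g x2 x1 x3 d2 d1 d3 (Ne.symm d12) d23 d13
        ?_ c2f cB'
      rw [Finset.insert_comm x2 x1]
      exact hb2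
  · have cf2 : pref 0 {g,x3} {g,x2} := (to0 _ _ ne23).resolve_left c2f
    have hbf : pref 0 {g,x3} {x1,x2,x3} := tr0 _ _ _ cf2 hb2
    by_cases c1f : pref 0 {g,x1} {g,x3}
    · -- order x1, x3, x2
      by_cases cB : pref 1 {x3,x2} {x1,x2}
      · refine ABAB_works a b pref hb h1 h2 hpref g x1 x3 x2 d1 d3 d2 d13 d12 (Ne.symm d23)
          ?_ c12 cB
        rw [Finset.pair_comm x3 x2]
        exact hb1
      · have neB : ({x3,x2} : Finset (Fin 4)) ≠ {x1,x2} :=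
          ne_of_elt (show x3 ∈ ({x3,x2} : Finset (Fin 4)) by simp) (by simp [Ne.symm d13, Ne.symm d23])
        have cB' : pref 1 {x1,x2} {x3,x2} := (to1 _ _ neB).resolve_left cB
        refine ABAB_works a b pref hb h1 h2 hpref g x3 x1 x2 d3 d1 d2 (Ne.symm d13) (Ne.symm d23) d12
          ?_ cf2 cB'
        rw [Finset.insert_comm x3 x1, Finset.pair_comm x3 x2]
        exact hbf
    · have cf1 : pref 0 {g,x3} {g,x1} := (to0 _ _ ne13).resolve_left c1f
      -- order x3, x1, x2
      by_cases cB : pref 1 {x1,x2} {x3,x2}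
      · refine ABAB_works a b pref hb h1 h2 hpref g x3 x1 x2 d3 d1 d2 (Ne.symm d13) (Ne.symm d23) d12
          ?_ cf2 cB
        rw [Finset.insert_comm x3 x1, Finset.pair_comm x3 x2]
        exact hbf
      · have neB : ({x1,x2} : Finset (Fin 4)) ≠ {x3,x2} :=
          ne_of_elt (show x1 ∈ ({x1,x2} : Finset (Fin 4)) by simp) (by simp [d13, d12])
        have cB' : pref 1 {x3,x2} {x1,x2} := (to1 _ _ neB).resolve_left cB
        refine ABAB_works a b pref hb h1 h2 hpref g x1 x3 x2 d1 d3 d2 d13 d12 (Ne.symm d23)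
          ?_ c12 cB'
        rw [Finset.pair_comm x3 x2]
        exact hb1

lemma F1 (a b : ℝ) (hb : 0 < b) (h1 : b < a) (h2 : a < 2*b)
    (pref : Fin 2 → Finset (Fin 4) → Finset (Fin 4) → Prop)
    (hpref : ∀ i, StrictMonoPref (pref i))
    (g x1 x2 x3 : Fin 4)
    (d1 : g ≠ x1) (d2 : g ≠ x2) (d3 : g ≠ x3)
    (d12 : x1 ≠ x2) (d13 : x1 ≠ x3) (d23 : x2 ≠ x3)
    (hb1 : pref 0 {g,x1} {x1,x2,x3}) (hb2 : pref 0 {g,x2} {x1,x2,x3}) :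
    ∃ p X, IsCE ![a,b] pref p X ∧ PixepConcl a b p X := by
  obtain ⟨tr0, as0, to0, mo0⟩ := hpref 0
  by_cases c12 : pref 0 {g,x1} {g,x2}
  · exact F1core a b hb h1 h2 pref hpref g x1 x2 x3 d1 d2 d3 d12 d13 d23 hb1 hb2 c12
  · have ne12 : ({g,x1} : Finset (Fin 4)) ≠ {g,x2} :=
      ne_of_elt (show x1 ∈ ({g,x1} : Finset (Fin 4)) by simp) (by simp [Ne.symm d1, d12])
    have c21 : pref 0 {g,x2} {g,x1} := (to0 _ _ ne12).resolve_left c12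
    have cv : ({x2,x1,x3} : Finset (Fin 4)) = {x1,x2,x3} := Finset.insert_comm x2 x1 {x3}
    refine F1core a b hb h1 h2 pref hpref g x2 x1 x3 d2 d1 d3 (Ne.symm d12) d23 d13
      ?_ ?_ c21
    · rw [cv]; exact hb2
    · rw [cv]; exact hb1

lemma case2 (a b : ℝ) (hb : 0 < b) (h1 : b < a) (h2 : a < 2*b)
    (pref : Fin 2 → Finset (Fin 4) → Finset (Fin 4) → Prop)
    (hpref : ∀ i, StrictMonoPref (pref i))
    (g o y z : Fin 4)
    (dgo : g ≠ o) (dgy : g ≠ y) (dgz : g ≠ z)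
    (doy : o ≠ y) (doz : o ≠ z) (dyz : y ≠ z)
    (hgsing : ∀ i : Fin 4, i ≠ g → pref 1 {g} {i})
    (hgQ : pref 1 {g} {y,z})
    (hbp : ∀ Z : Finset (Fin 4), Z.card = 2 → Z ≠ {g,o} → pref 0 {g,o} Z) :
    ∃ p X, IsCE ![a,b] pref p X ∧ PixepConcl a b p X := by
  obtain ⟨tr0, as0, to0, mo0⟩ := hpref 0
  have negyT : ({g,y} : Finset (Fin 4)) ≠ {o,y,z} :=
    ne_of_elt (show g ∈ ({g,y} : Finset (Fin 4)) by simp) (by simp [dgo, dgy, dgz])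
  have negzT : ({g,z} : Finset (Fin 4)) ≠ {o,y,z} :=
    ne_of_elt (show g ∈ ({g,z} : Finset (Fin 4)) by simp) (by simp [dgo, dgy, dgz])
  have negoT : ({g,o} : Finset (Fin 4)) ≠ {o,y,z} :=
    ne_of_elt (show g ∈ ({g,o} : Finset (Fin 4)) by simp) (by simp [dgo, dgy, dgz])
  by_cases hy' : pref 0 {g,y} {o,y,z}
  · by_cases hz' : pref 0 {g,z} {o,y,z}
    · have cv : ({y,z,o} : Finset (Fin 4)) = {o,y,z} := by ext i; simp; tauto
      refine F1 a b hb h1 h2 pref hpref g y z o dgy dgz dgo dyz (Ne.symm doy) (Ne.symm doz)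
        ?_ ?_
      · rw [cv]; exact hy'
      · rw [cv]; exact hz'
    · by_cases ho' : pref 0 {g,o} {o,y,z}
      · exact F1 a b hb h1 h2 pref hpref g o y z dgo dgy dgz doy doz dyz ho' hy'
      · exfalso
        have hTP : pref 0 {o,y,z} {g,o} := (to0 _ _ negoT).resolve_left ho'
        have hPgy : pref 0 {g,o} {g,y} :=
          hbp {g,y} (card2' dgy)
            (ne_of_elt (show y ∈ ({g,y} : Finset (Fin 4)) by simp) (by simp [Ne.symm dgy, Ne.symm doy]))
        exact as0 _ _ (tr0 _ _ _ hTP hPgy) hy'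
  · by_cases hz' : pref 0 {g,z} {o,y,z}
    · by_cases ho' : pref 0 {g,o} {o,y,z}
      · have cv : ({o,z,y} : Finset (Fin 4)) = {o,y,z} := by ext i; simp; tauto
        refine F1 a b hb h1 h2 pref hpref g o z y dgo dgz dgy doz doy (Ne.symm dyz) ?_ ?_
        · rw [cv]; exact ho'
        · rw [cv]; exact hz'
      · exfalso
        have hTP : pref 0 {o,y,z} {g,o} := (to0 _ _ negoT).resolve_left ho'
        have hPgz : pref 0 {g,o} {g,z} :=
          hbp {g,z} (card2' dgz)
            (ne_of_elt (show z ∈ ({g,z} : Finset (Fin 4)) by simp) (by simp [Ne.symm dgz, Ne.symm doz]))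
        exact as0 _ _ (tr0 _ _ _ hTP hPgz) hz'
    · have hA1 : pref 0 {o,y,z} {g,y} := (to0 _ _ negyT).resolve_left hy'
      have hA2 : pref 0 {o,y,z} {g,z} := (to0 _ _ negzT).resolve_left hz'
      exact BAAA_works a b pref hb h1 h2 hpref g o y z dgo dgy dgz doy doz dyz
        (hgsing o (Ne.symm dgo)) hgQ hA1 hA2


set_option maxHeartbeats 1600000 in
/-- **CEFAI for four items and two agents.**
For all incomes `a > b > 0` with `a ≠ 2b` and every pair of strict monotone
preferences, a competitive equilibrium exists.  Moreover, if `a < 2b` the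
equilibrium arises from a subgame-perfect equilibrium of the three-stage game
(Alice may choose pixep ABAB; else Bob may choose BAAA; else AABB is played):
for some `ε > 0` the equilibrium prices and allocation are those of one of
the three pixeps — ABAB with prices `a - 2ε, b - ε, 2ε, ε` (Alice gets 2
items), BAAA with prices `b, b - 2ε, (a-b)/2 + ε, (a-b)/2 + ε` (Alice gets 3
items), or AABB with prices `a/2, a/2, b/2, b/2` (Alice gets 2 items). -/
theorem CEFAI_four_items_two_agents
    (a b : ℝ) (hb : 0 < b) (hab : a > b) (hne : a ≠ 2 * b)
    (pref : Fin 2 → Finset (Fin 4) → Finset (Fin 4) → Prop)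
    (hpref : ∀ i, StrictMonoPref (pref i)) :
    ∃ (p : Fin 4 → ℝ) (X : Fin 2 → Finset (Fin 4)),
      IsCE ![a, b] pref p X ∧
      (a < 2 * b → ∃ ε > 0,
        (Finset.univ.val.map p = ({a - 2*ε, b - ε, 2*ε, ε} : Multiset ℝ) ∧
          (X 0).card = 2) ∨
        (Finset.univ.val.map p =
            ({b, b - 2*ε, (a-b)/2 + ε, (a-b)/2 + ε} : Multiset ℝ) ∧
          (X 0).card = 3) ∨
        (Finset.univ.val.map p = ({a/2, a/2, b/2, b/2} : Multiset ℝ) ∧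
          (X 0).card = 2)) := by
  classical
  obtain ⟨tr0, as0, to0, mo0⟩ := hpref 0
  obtain ⟨tr1, as1, to1, mo1⟩ := hpref 1
  rcases lt_or_gt_of_ne hne with hlt | hgt
  · -- CASE a < 2b
    obtain ⟨P, hPmem, hPbest⟩ := exists_best (pref 0) tr0 to0
      ((Finset.univ : Finset (Finset (Fin 4))).filter fun s => s.card = 2)
      ⟨{0,1}, by decide⟩
    have hPcard : P.card = 2 := (Finset.mem_filter.mp hPmem).2
    obtain ⟨w, x, hwx, rfl⟩ := Finset.card_eq_two.mp hPcard
    have hbp : ∀ Z : Finset (Fin 4), Z.card = 2 → Z ≠ {w,x} → pref 0 {w,x} Z :=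
      fun Z hZ hne' => hPbest Z (Finset.mem_filter.mpr ⟨Finset.mem_univ _, hZ⟩) hne'
    have hQcard : ({w,x}ᶜ : Finset (Fin 4)).card = 2 := by
      rw [Finset.card_compl, hPcard]
      decide
    obtain ⟨y, z, hyz, hQeq⟩ := Finset.card_eq_two.mp hQcard
    have hyQ : y ∉ ({w,x} : Finset (Fin 4)) := by
      have : y ∈ ({w,x}ᶜ : Finset (Fin 4)) := by rw [hQeq]; simp
      simpa using this
    have hzQ : z ∉ ({w,x} : Finset (Fin 4)) := by
      have : z ∈ ({w,x}ᶜ : Finset (Fin 4)) := by rw [hQeq]; simp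
      simpa using this
    simp only [Finset.mem_insert, Finset.mem_singleton, not_or] at hyQ hzQ
    obtain ⟨hyw, hyx⟩ := hyQ
    obtain ⟨hzw, hzx⟩ := hzQ
    have henum : ∀ i : Fin 4, i = w ∨ i = x ∨ i = y ∨ i = z := by
      intro i
      by_cases hiP : i ∈ ({w,x} : Finset (Fin 4))
      · simp at hiP; tauto
      · have : i ∈ ({w,x}ᶜ : Finset (Fin 4)) := by simpa using hiP
        rw [hQeq] at this; simp at this; tauto
    have hAfull : ∀ Z : Finset (Fin 4), Z.card ≤ 2 → Z ≠ {w,x} → pref 0 {w,x} Z := by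
      intro Z hZc hZne
      rcases eq_or_lt_of_le hZc with h2' | h2'
      · exact hbp Z h2' hZne
      · obtain ⟨Z', hZZ', _, hZ'c⟩ := Finset.exists_subsuperset_card_eq
          (Finset.subset_univ Z) hZc (by decide)
        have hssne : Z ≠ Z' := fun h => by rw [h, hZ'c] at h2'; omega
        have hss : Z ⊂ Z' := Finset.ssubset_iff_subset_ne.mpr ⟨hZZ', hssne⟩
        by_cases hZ'P : Z' = {w,x}
        · subst hZ'P; exact mo0 _ _ hss
        · exact tr0 _ _ _ (hbp Z' hZ'c hZ'P) (mo0 _ _ hss)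
    by_cases hc1 : pref 1 {y,z} {w} ∧ pref 1 {y,z} {x}
    · obtain ⟨p, X, hce, hcn⟩ := AABB_works a b pref hb hab hlt hpref w x y z
        hwx (Ne.symm hyw) (Ne.symm hzw) (Ne.symm hyx) (Ne.symm hzx) hyz
        hAfull hc1.1 hc1.2
      exact ⟨p, X, hce, fun _ => hcn⟩
    · obtain ⟨G, hGmem, hGbest⟩ := exists_best (pref 1) tr1 to1
        ((Finset.univ : Finset (Finset (Fin 4))).filter fun s => s.card = 1)
        ⟨{0}, by decide⟩
      have hGcard : G.card = 1 := (Finset.mem_filter.mp hGmem).2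
      obtain ⟨g, rfl⟩ := Finset.card_eq_one.mp hGcard
      have hgsing : ∀ i : Fin 4, i ≠ g → pref 1 {g} {i} := fun i hi =>
        hGbest {i} (Finset.mem_filter.mpr ⟨Finset.mem_univ _, Finset.card_singleton i⟩)
          (by simpa using hi)
      have hw_or : pref 1 {w} {y,z} ∨ pref 1 {x} {y,z} := by
        rcases not_and_or.mp hc1 with h | h
        · left
          refine (to1 _ _ ?_).resolve_left h
          exact ne_of_elt (show z ∈ ({y,z} : Finset (Fin 4)) by simp) (by simp [hzw])
        · right
          refine (to1 _ _ ?_).resolve_left h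
          exact ne_of_elt (show z ∈ ({y,z} : Finset (Fin 4)) by simp) (by simp [hzx])
      have hgQ : pref 1 {g} {y,z} := by
        rcases hw_or with h | h
        · by_cases hgw : g = w
          · exact hgw ▸ h
          · exact tr1 _ _ _ (hgsing w (fun hc => hgw hc.symm)) h
        · by_cases hgx : g = x
          · exact hgx ▸ h
          · exact tr1 _ _ _ (hgsing x (fun hc => hgx hc.symm)) h
      have hgy : g ≠ y := by
        intro hge
        rw [hge] at hgQ
        exact as1 _ _ hgQ (mo1 _ _ (ssub_sing hyz))
      have hgz : g ≠ z := by
        intro hge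
        rw [hge] at hgQ
        have hss : ({z} : Finset (Fin 4)) ⊂ {y,z} := by
          rw [Finset.pair_comm y z]
          exact ssub_sing (Ne.symm hyz)
        exact as1 _ _ hgQ (mo1 _ _ hss)
      have hgwx : g = w ∨ g = x := by
        rcases henum g with h | h | h | h
        · exact Or.inl h
        · exact Or.inr h
        · exact absurd h hgy
        · exact absurd h hgz
      rcases hgwx with rfl | rfl
      · -- g = w, o = x
        obtain ⟨p, X, hce, hcn⟩ := case2 a b hb hab hlt pref hpref g x y z
          hwx hgy hgz (Ne.symm hyx) (Ne.symm hzx) hyz hgsing hgQ hbp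
        exact ⟨p, X, hce, fun _ => hcn⟩
      · -- g = x, o = w
        have hbp' : ∀ Z : Finset (Fin 4), Z.card = 2 → Z ≠ {g,w} → pref 0 {g,w} Z := by
          intro Z hZ hn
          have cv : ({w,g} : Finset (Fin 4)) = {g,w} := Finset.pair_comm w g
          rw [← cv]
          exact hbp Z hZ (fun hc => hn (by rw [hc, cv]))
        obtain ⟨p, X, hce, hcn⟩ := case2 a b hb hab hlt pref hpref g w y z
          (Ne.symm hwx) hgy hgz (Ne.symm hyw) (Ne.symm hzw) hyz hgsing hgQ hbp'
        exact ⟨p, X, hce, fun _ => hcn⟩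
  · -- CASE a > 2b
    obtain ⟨T, hTmem, hTbest⟩ := exists_best (pref 0) tr0 to0
      ((Finset.univ : Finset (Finset (Fin 4))).filter fun s => s.card = 3)
      ⟨{0,1,2}, by decide⟩
    have hTcard : T.card = 3 := (Finset.mem_filter.mp hTmem).2
    obtain ⟨t1, t2, t3, h12, h13, h23, rfl⟩ := Finset.card_eq_three.mp hTcard
    have hTbest' : ∀ Z : Finset (Fin 4), Z.card = 3 → Z ≠ {t1,t2,t3} →
        pref 0 {t1,t2,t3} Z :=
      fun Z hZ hn => hTbest Z (Finset.mem_filter.mpr ⟨Finset.mem_univ _, hZ⟩) hn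
    have hDcard : (({t1,t2,t3} : Finset (Fin 4))ᶜ).card = 1 := by
      rw [Finset.card_compl, hTcard]
      decide
    obtain ⟨d0, hd0⟩ := Finset.card_eq_one.mp hDcard
    have hd0T : d0 ∉ ({t1,t2,t3} : Finset (Fin 4)) := by
      have : d0 ∈ (({t1,t2,t3} : Finset (Fin 4))ᶜ) := by rw [hd0]; simp
      simpa using this
    simp only [Finset.mem_insert, Finset.mem_singleton, not_or] at hd0T
    obtain ⟨hd1, hd2, hd3⟩ := hd0T
    have hd0T' : d0 ∉ ({t1,t2,t3} : Finset (Fin 4)) := by simp [hd1, hd2, hd3]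
    have henum : ∀ i : Fin 4, i = d0 ∨ i = t1 ∨ i = t2 ∨ i = t3 := by
      intro i
      by_cases hiT : i ∈ ({t1,t2,t3} : Finset (Fin 4))
      · simp at hiT; tauto
      · have : i ∈ (({t1,t2,t3} : Finset (Fin 4))ᶜ) := by simpa using hiT
        rw [hd0] at this; simp at this; tauto
    have final : ∀ (p : Fin 4 → ℝ) (X : Fin 2 → Finset (Fin 4)),
        IsCE ![a,b] pref p X →
        ∃ (p : Fin 4 → ℝ) (X : Fin 2 → Finset (Fin 4)),
          IsCE ![a, b] pref p X ∧
          (a < 2 * b → ∃ ε > 0,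
            (Finset.univ.val.map p = ({a - 2*ε, b - ε, 2*ε, ε} : Multiset ℝ) ∧
              (X 0).card = 2) ∨
            (Finset.univ.val.map p =
                ({b, b - 2*ε, (a-b)/2 + ε, (a-b)/2 + ε} : Multiset ℝ) ∧
              (X 0).card = 3) ∨
            (Finset.univ.val.map p = ({a/2, a/2, b/2, b/2} : Multiset ℝ) ∧
              (X 0).card = 2)) :=
      fun p X h => ⟨p, X, h, fun hc => absurd hc (by linarith)⟩
    by_cases hc1 : pref 1 {d0} {t1}
    · have cv : ({t2,t3,t1} : Finset (Fin 4)) = {t1,t2,t3} := by ext i; simp; tauto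
      obtain ⟨p, X, hce⟩ := BIG_works a b pref hb hgt hpref d0 t2 t3 t1
        hd2 hd3 hd1 h23 (Ne.symm h12) (Ne.symm h13) hc1
        (by rw [cv]
            exact hTbest' {d0,t2,t1} (card3' hd2 hd1 (Ne.symm h12))
              (ne_of_elt (show d0 ∈ ({d0,t2,t1} : Finset (Fin 4)) by simp) hd0T'))
        (by rw [cv]
            exact hTbest' {d0,t3,t1} (card3' hd3 hd1 (Ne.symm h13))
              (ne_of_elt (show d0 ∈ ({d0,t3,t1} : Finset (Fin 4)) by simp) hd0T'))
      exact final p X hce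
    · by_cases hc2 : pref 1 {d0} {t2}
      · have cv : ({t1,t3,t2} : Finset (Fin 4)) = {t1,t2,t3} := by ext i; simp; tauto
        obtain ⟨p, X, hce⟩ := BIG_works a b pref hb hgt hpref d0 t1 t3 t2
          hd1 hd3 hd2 h13 h12 (Ne.symm h23) hc2
          (by rw [cv]
              exact hTbest' {d0,t1,t2} (card3' hd1 hd2 h12)
                (ne_of_elt (show d0 ∈ ({d0,t1,t2} : Finset (Fin 4)) by simp) hd0T'))
          (by rw [cv]
              exact hTbest' {d0,t3,t2} (card3' hd3 hd2 (Ne.symm h23))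
                (ne_of_elt (show d0 ∈ ({d0,t3,t2} : Finset (Fin 4)) by simp) hd0T'))
        exact final p X hce
      · by_cases hc3 : pref 1 {d0} {t3}
        · obtain ⟨p, X, hce⟩ := BIG_works a b pref hb hgt hpref d0 t1 t2 t3
            hd1 hd2 hd3 h12 h13 h23 hc3
            (hTbest' {d0,t1,t3} (card3' hd1 hd3 h13)
              (ne_of_elt (show d0 ∈ ({d0,t1,t3} : Finset (Fin 4)) by simp) hd0T'))
            (hTbest' {d0,t2,t3} (card3' hd2 hd3 h23)
              (ne_of_elt (show d0 ∈ ({d0,t2,t3} : Finset (Fin 4)) by simp) hd0T'))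
          exact final p X hce
        · have k1 : pref 1 {t1} {d0} := (to1 _ _ (by simpa using hd1)).resolve_left hc1
          have k2 : pref 1 {t2} {d0} := (to1 _ _ (by simpa using hd2)).resolve_left hc2
          have k3 : pref 1 {t3} {d0} := (to1 _ _ (by simpa using hd3)).resolve_left hc3
          obtain ⟨T2, hT2mem, hT2best⟩ := exists_best (pref 0) tr0 to0
            (((Finset.univ : Finset (Finset (Fin 4))).filter fun s => s.card = 3).erase
              {t1,t2,t3})
            ⟨{d0,t1,t2}, Finset.mem_erase.mpr
              ⟨ne_of_elt (show d0 ∈ ({d0,t1,t2} : Finset (Fin 4)) by simp) hd0T',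
               Finset.mem_filter.mpr ⟨Finset.mem_univ _, card3' hd1 hd2 h12⟩⟩⟩
          have hT2ne : T2 ≠ {t1,t2,t3} := (Finset.mem_erase.mp hT2mem).1
          have hT2card : T2.card = 3 :=
            (Finset.mem_filter.mp (Finset.mem_erase.mp hT2mem).2).2
          have hT2best' : ∀ Z : Finset (Fin 4), Z.card = 3 → Z ≠ {t1,t2,t3} → Z ≠ T2 →
              pref 0 T2 Z := fun Z hZ hn1 hn2 =>
            hT2best Z (Finset.mem_erase.mpr
              ⟨hn1, Finset.mem_filter.mpr ⟨Finset.mem_univ _, hZ⟩⟩) hn2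
          have hd0T2 : d0 ∈ T2 := by
            by_contra hd
            apply hT2ne
            apply Finset.eq_of_subset_of_card_le
            · intro i hi
              rcases henum i with rfl | rfl | rfl | rfl
              · exact absurd hi hd
              · simp
              · simp
              · simp
            · rw [hT2card, hTcard]
          obtain ⟨u1, u2, u3, e12, e13, e23, rfl⟩ := Finset.card_eq_three.mp hT2card
          have hUcard : (({u1,u2,u3} : Finset (Fin 4))ᶜ).card = 1 := by
            rw [Finset.card_compl, hT2card]; decide
          obtain ⟨e0, he0⟩ := Finset.card_eq_one.mp hUcard
          have he0T2 : e0 ∉ ({u1,u2,u3} : Finset (Fin 4)) := by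
            have : e0 ∈ (({u1,u2,u3} : Finset (Fin 4))ᶜ) := by rw [he0]; simp
            simpa using this
          have he0d0 : e0 ≠ d0 := fun h => he0T2 (h ▸ hd0T2)
          have hBob : pref 1 {e0} {d0} := by
            rcases henum e0 with h | rfl | rfl | rfl
            · exact absurd h he0d0
            · exact k1
            · exact k2
            · exact k3
          simp only [Finset.mem_insert, Finset.mem_singleton, not_or] at he0T2
          obtain ⟨hf1, hf2, hf3⟩ := he0T2
          have hd0u : d0 = u1 ∨ d0 = u2 ∨ d0 = u3 := by simpa using hd0T2
          rcases hd0u with rfl | rfl | rfl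
          · -- T2 = {d0, u2, u3}
            have he0T2' : e0 ∉ ({d0,u2,u3} : Finset (Fin 4)) := by simp [hf1, hf2, hf3]
            have cv : ({u2,u3,d0} : Finset (Fin 4)) = {d0,u2,u3} := by ext i; simp; tauto
            obtain ⟨p, X, hce⟩ := BIG_works a b pref hb hgt hpref e0 u2 u3 d0
              hf2 hf3 hf1 e23 (Ne.symm e12) (Ne.symm e13) hBob
              (by rw [cv]
                  exact hT2best' {e0,u2,d0} (card3' hf2 hf1 (Ne.symm e12))
                    (ne_of_elt (show d0 ∈ ({e0,u2,d0} : Finset (Fin 4)) by simp) hd0T')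
                    (ne_of_elt (show e0 ∈ ({e0,u2,d0} : Finset (Fin 4)) by simp) he0T2'))
              (by rw [cv]
                  exact hT2best' {e0,u3,d0} (card3' hf3 hf1 (Ne.symm e13))
                    (ne_of_elt (show d0 ∈ ({e0,u3,d0} : Finset (Fin 4)) by simp) hd0T')
                    (ne_of_elt (show e0 ∈ ({e0,u3,d0} : Finset (Fin 4)) by simp) he0T2'))
            exact final p X hce
          · -- T2 = {u1, d0, u3}
            have he0T2' : e0 ∉ ({u1,d0,u3} : Finset (Fin 4)) := by simp [hf1, hf2, hf3]
            have cv : ({u1,u3,d0} : Finset (Fin 4)) = {u1,d0,u3} := by ext i; simp; tauto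
            obtain ⟨p, X, hce⟩ := BIG_works a b pref hb hgt hpref e0 u1 u3 d0
              hf1 hf3 hf2 e13 e12 (Ne.symm e23) hBob
              (by rw [cv]
                  exact hT2best' {e0,u1,d0} (card3' hf1 hf2 e12)
                    (ne_of_elt (show d0 ∈ ({e0,u1,d0} : Finset (Fin 4)) by simp) hd0T')
                    (ne_of_elt (show e0 ∈ ({e0,u1,d0} : Finset (Fin 4)) by simp) he0T2'))
              (by rw [cv]
                  exact hT2best' {e0,u3,d0} (card3' hf3 hf2 (Ne.symm e23))
                    (ne_of_elt (show d0 ∈ ({e0,u3,d0} : Finset (Fin 4)) by simp) hd0T')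
                    (ne_of_elt (show e0 ∈ ({e0,u3,d0} : Finset (Fin 4)) by simp) he0T2'))
            exact final p X hce
          · -- T2 = {u1, u2, d0}
            have he0T2' : e0 ∉ ({u1,u2,d0} : Finset (Fin 4)) := by simp [hf1, hf2, hf3]
            obtain ⟨p, X, hce⟩ := BIG_works a b pref hb hgt hpref e0 u1 u2 d0
              hf1 hf2 hf3 e12 e13 e23 hBob
              (hT2best' {e0,u1,d0} (card3' hf1 hf3 e13)
                (ne_of_elt (show d0 ∈ ({e0,u1,d0} : Finset (Fin 4)) by simp) hd0T')
                (ne_of_elt (show e0 ∈ ({e0,u1,d0} : Finset (Fin 4)) by simp) he0T2'))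
              (hT2best' {e0,u2,d0} (card3' hf2 hf3 e23)
                (ne_of_elt (show d0 ∈ ({e0,u2,d0} : Finset (Fin 4)) by simp) hd0T')
                (ne_of_elt (show e0 ∈ ({e0,u2,d0} : Finset (Fin 4)) by simp) he0T2'))
            exact final p X hce
end
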